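/- arXiv:1304.0871 — 8 statements merged into one kernel-verified Lean document; each statement's English description precedes it below -/
import Mathlib

section
/- For every t ≥ 2 and k ≥ 1, there exists a t-coloring of the edges of the complete graph on N = 2k - 1 + ⌊(k-1)/(2^{t-1}-1)⌋ vertices containing no matching of size k that misses at least one color. Specifically, with p = ⌊(k-1)/(2^{t-1}-1)⌋, partition the vertex set into parts A_1,…,A_t with |A_i| = 2^{i-1}p for i < t and |A_t| = N - (2^{t-1}-1)p, and color each edge by the minimum index j such that the edge meets A_j. -/
def PairMatching {α : Type*} (M : Finset (α × α)) : Prop :=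
  (∀ e ∈ M, e.1 ≠ e.2) ∧
  ∀ e ∈ M, ∀ f ∈ M, e ≠ f → e.1 ≠ f.1 ∧ e.1 ≠ f.2 ∧ e.2 ≠ f.1 ∧ e.2 ≠ f.2

lemma card_filter_val_Ico (N a b : ℕ) (hb : b ≤ N) :
    (Finset.univ.filter fun v : Fin N => a ≤ v.val ∧ v.val < b).card = b - a := by
  have h2 : ((Finset.univ : Finset (Fin N)).map Fin.valEmbedding).filter (fun n => a ≤ n ∧ n < b)
      = (Finset.univ.filter fun v : Fin N => a ≤ v.val ∧ v.val < b).map Fin.valEmbedding :=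
    Finset.filter_map
  rw [Fin.map_valEmbedding_univ] at h2
  have h1 : (Finset.Iio N).filter (fun n => a ≤ n ∧ n < b) = Finset.Ico a b := by
    ext n
    simp only [Finset.mem_filter, Finset.mem_Iio, Finset.mem_Ico]
    omega
  rw [h1] at h2
  rw [← Nat.card_Ico a b, h2, Finset.card_map]

/-- Sharpness of the `(t-1)`-colored matching theorem: with `p = ⌊(k-1)/(2^(t-1)-1)⌋`
and `N = 2k - 1 + p`, the partition-vector coloring `[p, 2p, …, 2^(t-2)p, N-(2^(t-1)-1)p]`
(given by a part-assignment `π`, where the color of an edge `{x,y}` is `min (π x) (π y)`)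
contains no matching of size `k` missing a color. -/
theorem stmt_2 (t k p N : ℕ) (ht : 2 ≤ t) (hk : 1 ≤ k)
    (hp : p = (k - 1) / (2 ^ (t - 1) - 1)) (hN : N = 2 * k - 1 + p) :
    ∃ π : Fin N → Fin t,
      (∀ i : Fin t, i.val < t - 1 →
        (Finset.univ.filter fun v => π v = i).card = 2 ^ i.val * p) ∧
      (∀ i : Fin t, i.val = t - 1 →
        (Finset.univ.filter fun v => π v = i).card = N - (2 ^ (t - 1) - 1) * p) ∧
      ¬ ∃ M : Finset (Fin N × Fin N), PairMatching M ∧ M.card = k ∧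
          ∃ i : Fin t, ∀ e ∈ M, min (π e.1) (π e.2) ≠ i := by
  have h2t : 1 ≤ 2 ^ (t - 1) := Nat.one_le_two_pow
  have hLp : (2 ^ (t - 1) - 1) * p ≤ k - 1 := by
    subst hp; rw [mul_comm]; exact Nat.div_mul_le_self _ _
  have hkN : k - 1 ≤ N := by omega
  set f : ℕ → ℕ := fun n => if n < (2 ^ (t - 1) - 1) * p then Nat.log 2 (n / p + 1) else t - 1
    with hfdef
  have hfle : ∀ n, f n ≤ t - 1 := by
    intro n
    simp only [hfdef]
    split_ifs with h
    · have hp0 : 0 < p := by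
        rcases Nat.eq_zero_or_pos p with h0 | h0
        · simp [h0] at h
        · exact h0
      have h1 : n / p < 2 ^ (t - 1) - 1 := (Nat.div_lt_iff_lt_mul hp0).mpr h
      have h2 : n / p + 1 < 2 ^ (t - 1) := by omega
      exact le_of_lt (Nat.log_lt_of_lt_pow (Nat.succ_ne_zero (n / p)) h2)
    · exact le_refl _
  have hflt : ∀ n j, j ≤ t - 1 → (f n < j ↔ n < (2 ^ j - 1) * p) := by
    intro n j hj
    have h2j : 1 ≤ 2 ^ j := Nat.one_le_two_pow
    have hjle : (2 ^ j - 1) * p ≤ (2 ^ (t - 1) - 1) * p :=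
      Nat.mul_le_mul_right p
        (by have := Nat.pow_le_pow_right (by norm_num : 1 ≤ 2) hj; omega)
    simp only [hfdef]
    split_ifs with h
    · have hp0 : 0 < p := by
        rcases Nat.eq_zero_or_pos p with h0 | h0
        · simp [h0] at h
        · exact h0
      rw [Nat.log_lt_iff_lt_pow one_lt_two (Nat.succ_ne_zero (n / p)),
        show (n / p + 1 < 2 ^ j) ↔ (n / p < 2 ^ j - 1) from by omega,
        Nat.div_lt_iff_lt_mul hp0]
    · constructor
      · intro h'; omega
      · intro h'; exfalso; omega
  have heq : ∀ n j, j < t - 1 → (f n = j ↔ (2 ^ j - 1) * p ≤ n ∧ n < (2 ^ (j + 1) - 1) * p) := by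
    intro n j hj
    have h1 := hflt n j (by omega)
    have h2 := hflt n (j + 1) (by omega)
    omega
  have heqlast : ∀ n, (f n = t - 1 ↔ (2 ^ (t - 1) - 1) * p ≤ n) := by
    intro n
    have h1 := hflt n (t - 1) (le_refl _)
    have h2 := hfle n
    omega
  refine ⟨fun v => ⟨f v.val, lt_of_le_of_lt (hfle v.val) (by omega)⟩, ?_, ?_, ?_⟩
  · -- small parts
    intro i hi
    have h2i : 1 ≤ 2 ^ i.val := Nat.one_le_two_pow
    have hbN : (2 ^ (i.val + 1) - 1) * p ≤ N := by
      have : (2 ^ (i.val + 1) - 1) * p ≤ (2 ^ (t - 1) - 1) * p :=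
        Nat.mul_le_mul_right p
          (by have := Nat.pow_le_pow_right (by norm_num : 1 ≤ 2) (show i.val + 1 ≤ t - 1 by omega)
              omega)
      omega
    have hset : (Finset.univ.filter fun v : Fin N =>
          (⟨f v.val, lt_of_le_of_lt (hfle v.val) (by omega)⟩ : Fin t) = i)
        = Finset.univ.filter fun v : Fin N =>
          (2 ^ i.val - 1) * p ≤ v.val ∧ v.val < (2 ^ (i.val + 1) - 1) * p := by
      apply Finset.filter_congr
      intro v _
      rw [Fin.ext_iff]
      exact (by simpa using heq v.val i.val hi)
    rw [hset, card_filter_val_Ico _ _ _ hbN]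
    have hmul : 2 ^ (i.val + 1) - 1 = 2 * (2 ^ i.val - 1) + 1 := by
      rw [pow_succ]; omega
    rw [hmul]
    have : (2 * (2 ^ i.val - 1) + 1) * p = (2 ^ i.val - 1) * p + 2 ^ i.val * p := by
      have : 2 * (2 ^ i.val - 1) + 1 = (2 ^ i.val - 1) + 2 ^ i.val := by omega
      rw [this, add_mul]
    omega
  · -- last part
    intro i hi
    have hset : (Finset.univ.filter fun v : Fin N =>
          (⟨f v.val, lt_of_le_of_lt (hfle v.val) (by omega)⟩ : Fin t) = i)
        = Finset.univ.filter fun v : Fin N =>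
          (2 ^ (t - 1) - 1) * p ≤ v.val ∧ v.val < N := by
      apply Finset.filter_congr
      intro v _
      rw [Fin.ext_iff]
      have := heqlast v.val
      have hvN := v.isLt
      simp only [hi] at *
      constructor
      · intro h; exact ⟨this.mp h, hvN⟩
      · intro h; exact this.mpr h.1
    rw [hset, card_filter_val_Ico _ _ _ (le_refl _)]
  · -- no matching of size k missing a color
    rintro ⟨M, ⟨hne, hdisj⟩, hcardM, i, hmiss⟩
    set π : Fin N → Fin t := fun v => ⟨f v.val, lt_of_le_of_lt (hfle v.val) (by omega)⟩ with hπ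
    have hπval : ∀ v, (π v).val = f v.val := fun v => rfl
    set j := i.val with hj
    have hjle : j ≤ t - 1 := by have := i.isLt; omega
    -- classify edges
    have hmiss' : ∀ e ∈ M, ((π e.1).val < j ∨ (π e.2).val < j) ∨
        (j < (π e.1).val ∧ j < (π e.2).val) := by
      intro e he
      by_contra hcon
      push_neg at hcon
      obtain ⟨⟨h1, h2⟩, h3⟩ := hcon
      apply hmiss e he
      rcases le_or_gt (π e.1) (π e.2) with hle | hlt
      · rw [min_eq_left hle]
        have hv : (π e.1).val = j := by
          rw [Fin.le_def] at hle
          by_contra hne'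
          have h4 := h3 (by omega)
          omega
        exact Fin.ext hv
      · rw [min_eq_right (le_of_lt hlt)]
        rw [Fin.lt_def] at hlt
        have h4 := h3 (by omega)
        have hv : (π e.2).val = j := by omega
        exact Fin.ext hv
    set Mlo := M.filter (fun e => (π e.1).val < j ∨ (π e.2).val < j) with hMlo
    set Mhi := M.filter (fun e => j < (π e.1).val ∧ j < (π e.2).val) with hMhi
    have hsplit : Mlo.card + Mhi.card = k := by
      have h1 := Finset.card_filter_add_card_filter_not
        (s := M) (p := fun e => (π e.1).val < j ∨ (π e.2).val < j)
      have h2 : M.filter (fun e => ¬((π e.1).val < j ∨ (π e.2).val < j))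
          = M.filter (fun e => j < (π e.1).val ∧ j < (π e.2).val) := by
        apply Finset.filter_congr
        intro e he
        have := hmiss' e he
        omega
      rw [h2] at h1
      rw [hMlo, hMhi, ← hcardM]
      exact h1
    -- bound Mlo
    have hMloB : Mlo.card ≤ (Finset.univ.filter fun v : Fin N => (π v).val < j).card := by
      apply Finset.card_le_card_of_injOn (fun e => if (π e.1).val < j then e.1 else e.2)
      · intro e he
        rw [Finset.mem_coe, hMlo, Finset.mem_filter] at he
        simp only [Finset.mem_coe, Finset.mem_filter, Finset.mem_univ, true_and]
        split_ifs with h <;> simp only [hπval] at he h ⊢ <;> omega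
      · intro e he' f' hf' hef
        rw [Finset.mem_coe, hMlo, Finset.mem_filter] at he' hf'
        by_contra hnef
        obtain ⟨d1, d2, d3, d4⟩ := hdisj e he'.1 f' hf'.1 hnef
        simp only at hef
        split_ifs at hef
        · exact d1 hef
        · exact d2 hef
        · exact d3 hef
        · exact d4 hef
    -- bound Mhi
    have hMhiB : 2 * Mhi.card ≤ (Finset.univ.filter fun v : Fin N => j < (π v).val).card := by
      have hMhiM : Mhi ⊆ M := Finset.filter_subset _ _
      have hA1 : (Mhi.image Prod.fst).card = Mhi.card := by
        apply Finset.card_image_of_injOn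
        intro e he f' hf' hef
        by_contra hnef
        exact (hdisj e (hMhiM he) f' (hMhiM hf') hnef).1 hef
      have hA2 : (Mhi.image Prod.snd).card = Mhi.card := by
        apply Finset.card_image_of_injOn
        intro e he f' hf' hef
        by_contra hnef
        exact (hdisj e (hMhiM he) f' (hMhiM hf') hnef).2.2.2 hef
      have hdisjA : Disjoint (Mhi.image Prod.fst) (Mhi.image Prod.snd) := by
        rw [Finset.disjoint_left]
        intro a ha1 ha2
        obtain ⟨e, he, hea⟩ := Finset.mem_image.mp ha1
        obtain ⟨f', hf', hfa⟩ := Finset.mem_image.mp ha2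
        rcases eq_or_ne e f' with h | h
        · exact hne e (hMhiM he) (by rw [h, hfa, ← hea, h])
        · exact (hdisj e (hMhiM he) f' (hMhiM hf') h).2.1 (by rw [hea, hfa])
      have hsub : Mhi.image Prod.fst ∪ Mhi.image Prod.snd ⊆
          Finset.univ.filter fun v : Fin N => j < (π v).val := by
        intro a ha
        simp only [Finset.mem_filter, Finset.mem_univ, true_and]
        rcases Finset.mem_union.mp ha with h | h
        · obtain ⟨e, he, hea⟩ := Finset.mem_image.mp h
          rw [hMhi, Finset.mem_filter] at he
          rw [← hea]; exact he.2.1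
        · obtain ⟨e, he, hea⟩ := Finset.mem_image.mp h
          rw [hMhi, Finset.mem_filter] at he
          rw [← hea]; exact he.2.2
      calc 2 * Mhi.card = (Mhi.image Prod.fst).card + (Mhi.image Prod.snd).card := by omega
        _ = (Mhi.image Prod.fst ∪ Mhi.image Prod.snd).card :=
            (Finset.card_union_of_disjoint hdisjA).symm
        _ ≤ _ := Finset.card_le_card hsub
    -- compute the two cardinalities
    have h2j : 1 ≤ 2 ^ j := Nat.one_le_two_pow
    have hjN : (2 ^ j - 1) * p ≤ N := by
      have : (2 ^ j - 1) * p ≤ (2 ^ (t - 1) - 1) * p :=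
        Nat.mul_le_mul_right p
          (by have := Nat.pow_le_pow_right (by norm_num : 1 ≤ 2) hjle; omega)
      omega
    have hcardLt : (Finset.univ.filter fun v : Fin N => (π v).val < j).card = (2 ^ j - 1) * p := by
      have hset : (Finset.univ.filter fun v : Fin N => (π v).val < j)
          = Finset.univ.filter fun v : Fin N => 0 ≤ v.val ∧ v.val < (2 ^ j - 1) * p := by
        apply Finset.filter_congr
        intro v _
        rw [hπval]
        have := hflt v.val j hjle
        omega
      rw [hset, card_filter_val_Ico _ _ _ hjN]
      omega
    rcases lt_or_eq_of_le hjle with hjlt | hjeq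
    · -- j < t - 1
      have h2j1 : 1 ≤ 2 ^ (j + 1) := Nat.one_le_two_pow
      have hj1N : (2 ^ (j + 1) - 1) * p ≤ N := by
        have : (2 ^ (j + 1) - 1) * p ≤ (2 ^ (t - 1) - 1) * p :=
          Nat.mul_le_mul_right p
            (by have := Nat.pow_le_pow_right (by norm_num : 1 ≤ 2) (show j + 1 ≤ t - 1 by omega)
                omega)
        omega
      have hcardGt : (Finset.univ.filter fun v : Fin N => j < (π v).val).card
          = N - (2 ^ (j + 1) - 1) * p := by
        have hset : (Finset.univ.filter fun v : Fin N => j < (π v).val)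
            = Finset.univ.filter fun v : Fin N =>
              (2 ^ (j + 1) - 1) * p ≤ v.val ∧ v.val < N := by
          apply Finset.filter_congr
          intro v _
          rw [hπval]
          have := hflt v.val (j + 1) (by omega)
          have hvN := v.isLt
          omega
        rw [hset, card_filter_val_Ico _ _ _ (le_refl _)]
      have hAB : (2 ^ (j + 1) - 1) * p = 2 * ((2 ^ j - 1) * p) + p := by
        have h1 : 2 ^ (j + 1) - 1 = (2 ^ j - 1) + (2 ^ j - 1) + 1 := by
          rw [pow_succ]; omega
        rw [h1, add_mul, add_mul, one_mul]
        ring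
      rw [hcardLt] at hMloB
      rw [hcardGt] at hMhiB
      omega
    · -- j = t - 1 : no vertices above, and low part ≤ k - 1
      have hcardGt : (Finset.univ.filter fun v : Fin N => j < (π v).val).card = 0 := by
        rw [Finset.card_eq_zero]
        rw [Finset.filter_eq_empty_iff]
        intro v _
        rw [hπval]
        have := hfle v.val
        omega
      have hjL : (2 ^ j - 1) * p ≤ k - 1 := by rw [hjeq]; exact hLp
      rw [hcardLt] at hMloB
      rw [hcardGt] at hMhiB
      omega
end

section
/- In the partition-vector coloring [p, 2p, 4p, …, 2^{t-2}p, q] of K_N (where N = (2^{t-1}-1)p + q), any matching that misses some color j with j < t covers at most N - p vertices. -/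
lemma geo_aux (p : ℕ) : ∀ m, ∑ k ∈ Finset.range m, 2 ^ k * p = (2 ^ m - 1) * p := by
  intro m
  induction m with
  | zero => simp
  | succ m ih =>
      rw [Finset.sum_range_succ, ih, ← Nat.add_mul]
      congr 1
      have : 1 ≤ 2 ^ m := Nat.one_le_two_pow
      rw [pow_succ]
      omega

/-- In the partition-vector coloring `[p, 2p, 4p, …, 2^(t-2)p, q]` of `K_N`
(with `N = (2^(t-1)-1)p + q`, parts given by `π`, edge `{x,y}` colored `min (π x) (π y)`),
any matching missing some color `j` with `j < t` covers at most `N - p` vertices. -/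
theorem stmt_3 (t p q N : ℕ) (ht : 2 ≤ t) (hN : N = (2 ^ (t - 1) - 1) * p + q)
    (π : Fin N → Fin t)
    (hsize : ∀ i : Fin t, i.val < t - 1 →
      (Finset.univ.filter fun v => π v = i).card = 2 ^ i.val * p)
    (hlast : ∀ i : Fin t, i.val = t - 1 →
      (Finset.univ.filter fun v => π v = i).card = q)
    (M : Finset (Fin N × Fin N)) (hM : PairMatching M)
    (j : Fin t) (hj : j.val < t - 1)
    (hmiss : ∀ e ∈ M, min (π e.1) (π e.2) ≠ j) :
    2 * M.card ≤ N - p := by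
  classical
  obtain ⟨hne, hdisj⟩ := hM
  set Aj : Finset (Fin N) := Finset.univ.filter (fun v => π v = j) with hAj
  set B : Finset (Fin N) := Finset.univ.filter (fun v => π v < j) with hB
  -- an edge with an endpoint of color j has the other endpoint of smaller color
  have hother1 : ∀ e ∈ M, π e.1 = j → π e.2 < j := by
    intro e he h1
    by_contra h
    push_neg at h
    exact hmiss e he (by rw [h1, min_eq_left h])
  have hother2 : ∀ e ∈ M, π e.2 = j → π e.1 < j := by
    intro e he h2
    by_contra h
    push_neg at h
    exact hmiss e he (by rw [h2, min_eq_right h])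
  -- covered vertex set
  set C : Finset (Fin N) := M.biUnion (fun e => {e.1, e.2}) with hC
  have hCcard : C.card = 2 * M.card := by
    rw [hC, Finset.card_biUnion]
    · rw [Finset.sum_congr rfl (fun e he => by
        rw [Finset.card_insert_of_notMem (by simp [hne e he]), Finset.card_singleton])]
      simp [mul_comm]
    · intro e he f hf hef
      have h4 := hdisj e he f hf hef
      simp only [Finset.disjoint_left, Finset.mem_insert, Finset.mem_singleton]
      rintro a (rfl | rfl) (h | h) <;> tauto
  -- the edges touching Aj
  set M1 : Finset (Fin N × Fin N) := M.filter (fun e => π e.1 = j ∨ π e.2 = j) with hM1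
  -- covered vertices of color j are images of M1 edges
  have hsub : C ∩ Aj ⊆ M1.image (fun e => if π e.1 = j then e.1 else e.2) := by
    intro v hv
    simp only [Finset.mem_inter, hC, Finset.mem_biUnion, Finset.mem_insert,
      Finset.mem_singleton, hAj, Finset.mem_filter, Finset.mem_univ, true_and] at hv
    obtain ⟨⟨e, he, hv12⟩, hvj⟩ := hv
    simp only [Finset.mem_image, hM1, Finset.mem_filter]
    refine ⟨e, ⟨he, ?_⟩, ?_⟩
    · rcases hv12 with rfl | rfl
      · exact Or.inl hvj
      · exact Or.inr hvj
    · rcases hv12 with rfl | rfl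
      · simp [hvj]
      · have : ¬ (π e.1 = j) := by
          intro h1
          exact absurd hvj (ne_of_lt (hother1 e he h1))
        simp [this]
  -- each M1 edge has a distinct endpoint in B
  have hM1B : M1.card ≤ B.card := by
    apply Finset.card_le_card_of_injOn (fun e => if π e.1 = j then e.2 else e.1)
    · intro e he
      replace he : e ∈ M1 := he
      show (if π e.1 = j then e.2 else e.1) ∈ B
      simp only [hM1, Finset.mem_filter] at he
      obtain ⟨he, h1 | h2⟩ := he
      · simp only [h1, if_pos rfl, hB, Finset.mem_filter, Finset.mem_univ, true_and]
        exact hother1 e he h1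
      · by_cases h1 : π e.1 = j
        · simp only [h1, if_pos rfl, hB, Finset.mem_filter, Finset.mem_univ, true_and]
          exact hother1 e he h1
        · simp only [h1, if_neg h1, hB, Finset.mem_filter, Finset.mem_univ, true_and]
          exact hother2 e he h2
    · intro e he f hf hef
      by_contra hne'
      simp only [hM1, Finset.coe_filter, Set.mem_setOf_eq] at he hf
      have h4 := hdisj e he.1 f hf.1 hne'
      dsimp only at hef
      split_ifs at hef <;> tauto
  -- cardinality of B
  have hBcard : B.card = (2 ^ j.val - 1) * p := by
    have hfib : B.card = ∑ b ∈ Finset.Iio j, (B.filter fun v => π v = b).card :=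
      Finset.card_eq_sum_card_fiberwise (fun v hv => by
        replace hv : v ∈ B := hv
        simp only [hB, Finset.mem_filter] at hv
        simpa using hv.2)
    rw [hfib]
    have hstep : ∀ b ∈ Finset.Iio j, (B.filter fun v => π v = b).card = 2 ^ b.val * p := by
      intro b hb
      simp only [Finset.mem_Iio] at hb
      have : B.filter (fun v => π v = b) = Finset.univ.filter (fun v => π v = b) := by
        ext v
        simp only [hB, Finset.filter_filter, Finset.mem_filter, Finset.mem_univ, true_and]
        constructor
        · tauto
        · intro h; exact ⟨h ▸ hb, h⟩
      rw [this]
      exact hsize b (lt_trans (show b.val < j.val from hb) hj)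
    rw [Finset.sum_congr rfl hstep, ← geo_aux p j.val]
    apply Finset.sum_bij (fun (b : Fin t) (_ : b ∈ Finset.Iio j) => b.val)
    · intro b hb
      simp only [Finset.mem_Iio, Fin.lt_def] at hb
      simpa using hb
    · intro a _ b _ h
      exact Fin.val_injective h
    · intro k hk
      simp only [Finset.mem_range] at hk
      exact ⟨⟨k, lt_trans hk j.isLt⟩, by simp [Finset.mem_Iio, Fin.lt_def, hk], rfl⟩
    · intro b _; rfl
  have hAjcard : Aj.card = 2 ^ j.val * p := hsize j hj
  have hAjN : Aj.card ≤ N := by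
    simpa using Finset.card_le_card (Finset.filter_subset _ (Finset.univ : Finset (Fin N)))
  -- put it together
  have hsplit : C.card = (C \ Aj).card + (C ∩ Aj).card := by
    rw [Finset.card_sdiff_add_card_inter]
  have h1 : (C \ Aj).card ≤ N - Aj.card := by
    have : C \ Aj ⊆ Finset.univ \ Aj := Finset.sdiff_subset_sdiff (Finset.subset_univ _) le_rfl
    calc (C \ Aj).card ≤ (Finset.univ \ Aj).card := Finset.card_le_card this
      _ = N - Aj.card := by rw [Finset.card_sdiff_of_subset (Finset.subset_univ _)]; simp
  have h2 : (C ∩ Aj).card ≤ (2 ^ j.val - 1) * p := by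
    calc (C ∩ Aj).card ≤ (M1.image (fun e => if π e.1 = j then e.1 else e.2)).card :=
          Finset.card_le_card hsub
      _ ≤ M1.card := Finset.card_image_le
      _ ≤ B.card := hM1B
      _ = (2 ^ j.val - 1) * p := hBcard
  have hp : p ≤ 2 ^ j.val * p := Nat.le_mul_of_pos_left p (pow_pos (by norm_num) _)
  have key : (2 ^ j.val - 1) * p = 2 ^ j.val * p - p := by rw [Nat.sub_mul, one_mul]
  omega
end

section
/- Let n ≥ (t+1)p + 2. Then every t-coloring of the edges of K_n contains a monochromatic matching of size p + 1. -/
open Finset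
attribute [local instance 10] Classical.propDecidable
namespace CL
variable {n : ℕ}

def adjA (adj : Fin n → Fin n → Prop) (A : Finset (Fin n)) (x y : Fin n) : Prop :=
  x ∈ A ∧ y ∈ A ∧ x ≠ y ∧ adj x y

def IsMat (adj : Fin n → Fin n → Prop) (A : Finset (Fin n))
    (P : Fin n → Option (Fin n)) : Prop :=
  ∀ ⦃x y⦄, P x = some y → P y = some x ∧ adjA adj A x y

def msupp (P : Fin n → Option (Fin n)) : Finset (Fin n) :=
  Finset.univ.filter (fun x => P x ≠ none)

lemma mem_msupp {P : Fin n → Option (Fin n)} {x : Fin n} :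
    x ∈ msupp P ↔ P x ≠ none := by simp [msupp]

section Core2
variable (adj : Fin n → Fin n → Prop)

noncomputable def nustar (A : Finset (Fin n)) : ℕ :=
  ((Finset.univ : Finset (Fin n → Option (Fin n))).filter (fun P => IsMat adj A P)).sup
    (fun P => (msupp P).card)

variable {adj}

lemma isMat_none (A : Finset (Fin n)) : IsMat adj A (fun _ => none) := by
  intro x y h; simp at h

lemma le_nustar {A : Finset (Fin n)} {P : Fin n → Option (Fin n)} (h : IsMat adj A P) :
    (msupp P).card ≤ nustar adj A :=
  Finset.le_sup (f := fun P => (msupp P).card)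
    (Finset.mem_filter.mpr ⟨Finset.mem_univ _, h⟩)

lemma exists_max_mat (A : Finset (Fin n)) :
    ∃ P, IsMat adj A P ∧ (msupp P).card = nustar adj A := by
  obtain ⟨P, hP, hPe⟩ := Finset.exists_mem_eq_sup
    ((Finset.univ : Finset (Fin n → Option (Fin n))).filter (fun P => IsMat adj A P))
    ⟨(fun _ => none), by simp [isMat_none]⟩ (fun P => (msupp P).card)
  exact ⟨P, by simpa using hP, hPe.symm⟩

lemma adjA_symm (hs : ∀ x y, adj x y → adj y x) {A : Finset (Fin n)} {x y : Fin n}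
    (h : adjA adj A x y) : adjA adj A y x :=
  ⟨h.2.1, h.1, h.2.2.1.symm, hs _ _ h.2.2.2⟩

/-- removing one edge from a matching -/
lemma isMat_remove {A : Finset (Fin n)} {P : Fin n → Option (Fin n)} (hP : IsMat adj A P)
    {x y : Fin n} (hxy : P x = some y) :
    IsMat adj A (fun z => if z = x ∨ z = y then none else P z) ∧
      msupp (fun z => if z = x ∨ z = y then none else P z) = msupp P \ {x, y} := by
  have hyx : P y = some x := (hP hxy).1
  have hne : x ≠ y := (hP hxy).2.2.2.1
  constructor
  · intro z w h
    by_cases hz : z = x ∨ z = y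
    · simp [hz] at h
    · simp only [if_neg hz] at h
      obtain ⟨h1, h2⟩ := hP h
      have hwx : w ≠ x := by
        rintro rfl
        exact (not_or.mp hz).2 (by rw [hxy] at h1; exact (Option.some_inj.mp h1).symm)
      have hwy : w ≠ y := by
        rintro rfl
        exact (not_or.mp hz).1 (by rw [hyx] at h1; exact (Option.some_inj.mp h1).symm)
      refine ⟨?_, h2⟩
      simp [hwx, hwy, h1]
  · ext z
    by_cases hz : z = x ∨ z = y
    · simp [mem_msupp, hz]
    · simp [mem_msupp, hz, not_or.mp hz]

lemma even_msupp_card {A : Finset (Fin n)} {P : Fin n → Option (Fin n)} (hP : IsMat adj A P) :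
    Even (msupp P).card := by
  suffices h : ∀ m : ℕ, ∀ P : Fin n → Option (Fin n), IsMat adj A P → (msupp P).card = m →
      Even m from h _ P hP rfl
  intro m
  induction m using Nat.strong_induction_on with
  | _ m ih =>
    intro P hP hm
    rcases Nat.eq_zero_or_pos m with h0 | hpos
    · simp [h0]
    · have : (msupp P).Nonempty := by
        rw [← Finset.card_pos, hm]; exact hpos
      obtain ⟨x, hx⟩ := this
      rw [mem_msupp, Option.ne_none_iff_exists'] at hx
      obtain ⟨y, hxy⟩ := hx
      obtain ⟨hmat, hsupp⟩ := isMat_remove hP hxy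
      have hxy' : ({x, y} : Finset (Fin n)) ⊆ msupp P := by
        intro z hz
        simp only [Finset.mem_insert, Finset.mem_singleton] at hz
        rcases hz with rfl | rfl
        · exact mem_msupp.mpr (by simp [hxy])
        · exact mem_msupp.mpr (by simp [(hP hxy).1])
      have hne : x ≠ y := (hP hxy).2.2.2.1
      have hcard : (msupp P \ {x, y}).card = m - 2 := by
        rw [Finset.card_sdiff_of_subset hxy', hm, Finset.card_pair hne]
      have h2 : 2 ≤ m := by
        calc 2 = ({x, y} : Finset (Fin n)).card := (Finset.card_pair hne).symm
        _ ≤ (msupp P).card := Finset.card_le_card hxy'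
        _ = m := hm
      obtain ⟨k, hk⟩ := ih (m - 2) (by omega) _ hmat (by rw [hsupp, hcard])
      exact ⟨k + 1, by omega⟩

lemma nustar_even (A : Finset (Fin n)) : Even (nustar adj A) := by
  obtain ⟨P, hP, he⟩ := exists_max_mat (adj := adj) A
  rw [← he]; exact even_msupp_card hP

lemma isMat_mono {A B : Finset (Fin n)} (hAB : A ⊆ B) {P : Fin n → Option (Fin n)}
    (hP : IsMat adj A P) : IsMat adj B P := by
  intro x y h
  obtain ⟨h1, h2, h3, h4, h5⟩ := hP h
  exact ⟨h1, hAB h2, hAB h3, h4, h5⟩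

lemma nustar_mono {A B : Finset (Fin n)} (hAB : A ⊆ B) : nustar adj A ≤ nustar adj B := by
  apply Finset.sup_le
  intro P hP
  exact le_nustar (isMat_mono hAB (by simpa using hP))

lemma isMat_erase_of_none {A : Finset (Fin n)} {P : Fin n → Option (Fin n)}
    (hP : IsMat adj A P) {v : Fin n} (hv : P v = none) : IsMat adj (A.erase v) P := by
  intro x y h
  obtain ⟨h1, h2, h3, h4, h5⟩ := hP h
  have hxv : x ≠ v := by rintro rfl; rw [hv] at h; exact absurd h.symm (Option.some_ne_none _)
  have hyv : y ≠ v := by rintro rfl; rw [hv] at h1; exact absurd h1.symm (Option.some_ne_none _)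
  exact ⟨h1, Finset.mem_erase.mpr ⟨hxv, h2⟩, Finset.mem_erase.mpr ⟨hyv, h3⟩, h4, h5⟩

lemma nustar_le_erase_add_two {A : Finset (Fin n)} (v : Fin n) :
    nustar adj A ≤ nustar adj (A.erase v) + 2 := by
  obtain ⟨P, hP, he⟩ := exists_max_mat (adj := adj) A
  by_cases hv : P v = none
  · have := le_nustar (isMat_erase_of_none hP hv)
    omega
  · obtain ⟨y, hvy⟩ := Option.ne_none_iff_exists'.mp hv
    obtain ⟨hmat, hsupp⟩ := isMat_remove hP hvy
    have hvnone : (fun z => if z = v ∨ z = y then none else P z) v = none := by simp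
    have := le_nustar (isMat_erase_of_none hmat hvnone)
    have hsub : ({v, y} : Finset (Fin n)) ⊆ msupp P := by
      intro z hz
      simp only [Finset.mem_insert, Finset.mem_singleton] at hz
      rcases hz with rfl | rfl
      · exact mem_msupp.mpr (by simp [hvy])
      · exact mem_msupp.mpr (by simp [(hP hvy).1])
    have hne : v ≠ y := (hP hvy).2.2.2.1
    have hcard : (msupp P \ {v, y}).card = (msupp P).card - 2 := by
      rw [Finset.card_sdiff_of_subset hsub, Finset.card_pair hne]
    have h2 : 2 ≤ (msupp P).card := by
      calc 2 = ({v, y} : Finset (Fin n)).card := (Finset.card_pair hne).symm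
      _ ≤ (msupp P).card := Finset.card_le_card hsub
    rw [hsupp, hcard] at this
    omega

lemma add_edge_le (hs : ∀ x y, adj x y → adj y x) {A : Finset (Fin n)}
    {P : Fin n → Option (Fin n)} (hP : IsMat adj A P) {a b : Fin n}
    (ha : P a = none) (hb : P b = none) (hadj : adjA adj A a b) :
    (msupp P).card + 2 ≤ nustar adj A := by
  have hne : a ≠ b := hadj.2.2.1
  set P' := fun z => if z = a then some b else if z = b then some a else P z with hP'
  have hmat : IsMat adj A P' := by
    intro z w h
    simp only [hP'] at h ⊢
    by_cases hz : z = a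
    · subst hz
      rw [if_pos rfl] at h
      obtain rfl := Option.some_inj.mp h
      rw [if_neg hne.symm, if_pos rfl]
      exact ⟨rfl, hadj⟩
    · by_cases hz' : z = b
      · subst hz'
        rw [if_neg hne.symm, if_pos rfl] at h
        obtain rfl := Option.some_inj.mp h
        rw [if_pos rfl]
        exact ⟨rfl, adjA_symm hs hadj⟩
      · rw [if_neg hz, if_neg hz'] at h
        obtain ⟨h1, h2⟩ := hP h
        have hwa : w ≠ a := by rintro rfl; rw [ha] at h1; exact absurd h1.symm (Option.some_ne_none _)
        have hwb : w ≠ b := by rintro rfl; rw [hb] at h1; exact absurd h1.symm (Option.some_ne_none _)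
        rw [if_neg hwa, if_neg hwb]
        exact ⟨h1, h2⟩
  have hsupp : msupp P' = msupp P ∪ {a, b} := by
    ext z
    simp only [mem_msupp, Finset.mem_union, Finset.mem_insert, Finset.mem_singleton, hP']
    by_cases hz : z = a
    · simp [hz]
    · by_cases hz' : z = b
      · simp [hz, hz', Ne.symm hne]
      · simp [hz, hz']
  have hdisj : Disjoint (msupp P) ({a, b} : Finset (Fin n)) := by
    rw [Finset.disjoint_insert_right, Finset.disjoint_singleton_right]
    simp [mem_msupp, ha, hb]
  have := le_nustar hmat
  rw [hsupp, Finset.card_union_of_disjoint hdisj, Finset.card_pair hne] at this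
  exact this

lemma exists_pairs {A : Finset (Fin n)} {P : Fin n → Option (Fin n)} (hP : IsMat adj A P) :
    ∃ M : Finset (Fin n × Fin n), (∀ e ∈ M, P e.1 = some e.2) ∧ PairMatching M ∧
      2 * M.card = (msupp P).card := by
  set M := (Finset.univ ×ˢ Finset.univ : Finset (Fin n × Fin n)).filter
    (fun e => P e.1 = some e.2 ∧ e.1 < e.2) with hM
  have hmem : ∀ e ∈ M, P e.1 = some e.2 ∧ e.1 < e.2 := by
    intro e he; simpa [hM] using he
  refine ⟨M, fun e he => (hmem e he).1, ⟨?_, ?_⟩, ?_⟩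
  · intro e he; exact ne_of_lt (hmem e he).2
  · intro e he f hf hef
    obtain ⟨he1, he2⟩ := hmem e he
    obtain ⟨hf1, hf2⟩ := hmem f hf
    have inv_e : P e.2 = some e.1 := (hP he1).1
    have inv_f : P f.2 = some f.1 := (hP hf1).1
    refine ⟨?_, ?_, ?_, ?_⟩
    · intro h
      rw [h, hf1] at he1
      exact hef (Prod.ext h (Option.some_inj.mp he1).symm)
    · intro h
      rw [h, inv_f] at he1
      have : e.2 = f.1 := (Option.some_inj.mp he1).symm
      rw [← h] at hf2
      rw [this] at he2
      exact absurd (he2.trans hf2) (lt_irrefl _)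
    · intro h
      rw [← h] at hf1
      rw [inv_e] at hf1
      have : e.1 = f.2 := Option.some_inj.mp hf1
      rw [h] at he2
      rw [← this] at hf2
      exact absurd (he2.trans hf2) (lt_irrefl _)
    · intro h
      rw [h, inv_f] at inv_e
      have h1 : e.1 = f.1 := (Option.some_inj.mp inv_e).symm
      exact hef (Prod.ext h1 h)
  · have hunion : msupp P = M.image Prod.fst ∪ M.image Prod.snd := by
      ext x
      simp only [mem_msupp, Finset.mem_union, Finset.mem_image]
      constructor
      · intro hx
        rw [Option.ne_none_iff_exists'] at hx
        obtain ⟨y, hy⟩ := hx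
        have hne : x ≠ y := (hP hy).2.2.2.1
        rcases lt_or_gt_of_ne hne with hlt | hgt
        · exact Or.inl ⟨(x, y), by simp [hM, hy, hlt], rfl⟩
        · exact Or.inr ⟨(y, x), by simp [hM, (hP hy).1, hgt], rfl⟩
      · rintro (⟨e, he, rfl⟩ | ⟨e, he, rfl⟩)
        · simp [(hmem e he).1]
        · simp [(hP (hmem e he).1).1]
    have hdisj : Disjoint (M.image Prod.fst) (M.image Prod.snd) := by
      rw [Finset.disjoint_left]
      intro x hxm hx
      rw [Finset.mem_image] at hxm hx
      obtain ⟨e, he, rfl⟩ := hxm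
      obtain ⟨f, hf, hfx⟩ := hx
      obtain ⟨he1, he2⟩ := hmem e he
      obtain ⟨hf1, hf2⟩ := hmem f hf
      have : P f.2 = some f.1 := (hP hf1).1
      rw [hfx] at this
      rw [this] at he1
      have : e.2 = f.1 := (Option.some_inj.mp he1).symm
      rw [hfx] at hf2
      rw [this] at he2
      exact absurd (he2.trans hf2) (lt_irrefl _)
    have hinj1 : Set.InjOn Prod.fst (M : Set (Fin n × Fin n)) := by
      intro e he f hf h
      simp only [Finset.mem_coe] at he hf
      obtain ⟨he1, _⟩ := hmem e he
      obtain ⟨hf1, _⟩ := hmem f hf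
      rw [h, hf1] at he1
      exact Prod.ext h (Option.some_inj.mp he1).symm
    have hinj2 : Set.InjOn Prod.snd (M : Set (Fin n × Fin n)) := by
      intro e he f hf h
      simp only [Finset.mem_coe] at he hf
      have he1 : P e.2 = some e.1 := (hP (hmem e he).1).1
      have hf1 : P f.2 = some f.1 := (hP (hmem f hf).1).1
      rw [h, hf1] at he1
      exact Prod.ext (Option.some_inj.mp he1).symm h
    rw [hunion, Finset.card_union_of_disjoint hdisj,
      Finset.card_image_of_injOn hinj1, Finset.card_image_of_injOn hinj2]
    ring

end Core2

section Walk

variable (adj : Fin n → Fin n → Prop) (A : Finset (Fin n))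

def WalkN : ℕ → Fin n → Fin n → Prop
  | 0, u, v => u = v
  | (k+1), u, v => ∃ w, adjA adj A u w ∧ WalkN k w v

def Reach (u v : Fin n) : Prop := ∃ k, WalkN adj A k u v

variable {adj A}

lemma walkN_trans : ∀ {k l : ℕ} {u v w : Fin n},
    WalkN adj A k u v → WalkN adj A l v w → WalkN adj A (k + l) u w := by
  intro k
  induction k with
  | zero => intro l u v w h1 h2; rw [show u = v from h1]; simpa using h2
  | succ k ih =>
    intro l u v w h1 h2
    obtain ⟨x, hx, h1'⟩ := h1
    have he : k + 1 + l = (k + l) + 1 := by omega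
    rw [he]
    exact ⟨x, hx, ih h1' h2⟩

lemma walkN_single {u v : Fin n} (h : adjA adj A u v) : WalkN adj A 1 u v :=
  ⟨v, h, rfl⟩

lemma walkN_symm (hs : ∀ x y, adj x y → adj y x) :
    ∀ {k : ℕ} {u v : Fin n}, WalkN adj A k u v → WalkN adj A k v u := by
  intro k
  induction k with
  | zero => intro u v h; exact (show u = v from h).symm
  | succ k ih =>
    intro u v h
    obtain ⟨x, hx, h'⟩ := h
    have h1 : WalkN adj A k v x := ih h'
    have h2 : WalkN adj A 1 x u := walkN_single ⟨hx.2.1, hx.1, hx.2.2.1.symm, hs _ _ hx.2.2.2⟩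
    simpa using walkN_trans h1 h2

lemma reach_adj {u v : Fin n} (h : adjA adj A u v) : Reach adj A u v := ⟨1, walkN_single h⟩

lemma reach_symm (hs : ∀ x y, adj x y → adj y x) {u v : Fin n} (h : Reach adj A u v) :
    Reach adj A v u := by
  obtain ⟨k, hk⟩ := h; exact ⟨k, walkN_symm hs hk⟩

lemma reach_trans {u v w : Fin n} (h1 : Reach adj A u v) (h2 : Reach adj A v w) :
    Reach adj A u w := by
  obtain ⟨k, hk⟩ := h1; obtain ⟨l, hl⟩ := h2; exact ⟨k + l, walkN_trans hk hl⟩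

end Walk

section Path

variable (M N : Fin n → Option (Fin n)) (u : Fin n)

def aseq : ℕ → Option (Fin n)
  | 0 => some u
  | (k+1) => (aseq k).bind (fun x => if k % 2 = 0 then N x else M x)

variable {M N u}
variable {adj : Fin n → Fin n → Prop} {A : Finset (Fin n)} {L : ℕ}

lemma aseq_none_mono {l k : ℕ} (hlk : l ≤ k) (h : aseq M N u l = none) :
    aseq M N u k = none := by
  obtain ⟨d, rfl⟩ := Nat.exists_eq_add_of_le hlk
  induction d with
  | zero => exact h
  | succ d ih =>
    have h2 := ih (Nat.le_add_right _ _)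
    rw [show l + (d+1) = (l+d) + 1 from rfl, aseq, h2]; rfl

lemma aseq_some_mono {l k : ℕ} (hlk : l ≤ k) (h : aseq M N u k ≠ none) :
    aseq M N u l ≠ none := fun hl => h (aseq_none_mono hlk hl)

lemma aseq_step_even {k : ℕ} {x : Fin n} (hk : k % 2 = 0) (hx : aseq M N u k = some x) :
    aseq M N u (k+1) = N x := by
  rw [aseq, hx]; simp [hk]

lemma aseq_step_odd {k : ℕ} {x : Fin n} (hk : k % 2 = 1) (hx : aseq M N u k = some x) :
    aseq M N u (k+1) = M x := by
  rw [aseq, hx]; simp [hk]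

lemma aseq_nodup (hM : IsMat adj A M) (hN : IsMat adj A N) (hMu : M u = none) :
    ∀ i j, j < i → ∀ {y : Fin n}, aseq M N u i = some y → aseq M N u j = some y → False := by
  intro i
  induction i using Nat.strong_induction_on with
  | _ i IH =>
  intro j hji y hi hj
  have hi1 : 1 ≤ i := by omega
  have hprev : aseq M N u (i-1) ≠ none :=
    aseq_some_mono (l := i-1) (k := i) (by omega) (by rw [hi]; simp)
  obtain ⟨y', hy'⟩ := Option.ne_none_iff_exists'.mp hprev
  rcases Nat.mod_two_eq_zero_or_one i with hieven | hiodd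
  · -- i even, i ≥ 2, step from i-1 (odd) used M
    have hi2 : 2 ≤ i := by omega
    have hm1 : (i-1) % 2 = 1 := by omega
    have hstep : M y' = some y := by
      have := aseq_step_odd hm1 hy'
      rw [show i - 1 + 1 = i by omega, hi] at this
      exact this.symm
    have hMy : M y = some y' := (hM hstep).1
    rcases Nat.mod_two_eq_zero_or_one j with hjeven | hjodd
    · rcases Nat.eq_zero_or_pos j with rfl | hjpos
      · have hyu : y = u := by
          have h0 : some u = some y := hj
          exact (Option.some_inj.mp h0).symm
        rw [hyu, hMu] at hMy
        exact absurd hMy.symm (Option.some_ne_none _)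
      · have hj2 : 2 ≤ j := by omega
        have hjm1 : (j-1) % 2 = 1 := by omega
        have hprevj : aseq M N u (j-1) ≠ none :=
          aseq_some_mono (l := j-1) (k := j) (by omega) (by rw [hj]; simp)
        obtain ⟨y'', hy''⟩ := Option.ne_none_iff_exists'.mp hprevj
        have hstepj : M y'' = some y := by
          have := aseq_step_odd hjm1 hy''
          rw [show j - 1 + 1 = j by omega, hj] at this
          exact this.symm
        have heq : y'' = y' := by
          have h1 := (hM hstepj).1
          rw [hMy] at h1
          exact Option.some_inj.mp h1.symm
        rw [heq] at hy''
        exact IH (i-1) (by omega) (j-1) (by omega) hy' hy''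
    · -- j odd
      by_cases hjeq : j = i - 1
      · rw [hjeq, hy'] at hj
        have heq : y' = y := Option.some_inj.mp hj
        rw [heq] at hstep
        exact (hM hstep).2.2.2.1 rfl
      · have hjlt : j + 1 < i - 1 := by omega
        have hw' : aseq M N u (j+1) = some y' := by
          rw [aseq_step_odd hjodd hj, hMy]
        exact IH (i-1) (by omega) (j+1) hjlt hy' hw'
  · -- i odd, step from i-1 (even) used N
    have hm0 : (i-1) % 2 = 0 := by omega
    have hstep : N y' = some y := by
      have := aseq_step_even hm0 hy'
      rw [show i - 1 + 1 = i by omega, hi] at this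
      exact this.symm
    have hNy : N y = some y' := (hN hstep).1
    rcases Nat.mod_two_eq_zero_or_one j with hjeven | hjodd
    · -- j even
      by_cases hjeq : j = i - 1
      · rw [hjeq, hy'] at hj
        have heq : y' = y := Option.some_inj.mp hj
        rw [heq] at hstep
        exact (hN hstep).2.2.2.1 rfl
      · have hjlt : j + 1 < i - 1 := by omega
        have hw' : aseq M N u (j+1) = some y' := by
          rw [aseq_step_even hjeven hj, hNy]
        exact IH (i-1) (by omega) (j+1) hjlt hy' hw'
    · -- j odd
      have hj1 : 1 ≤ j := by omega
      have hjm0 : (j-1) % 2 = 0 := by omega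
      have hprevj : aseq M N u (j-1) ≠ none :=
        aseq_some_mono (l := j-1) (k := j) (by omega) (by rw [hj]; simp)
      obtain ⟨y'', hy''⟩ := Option.ne_none_iff_exists'.mp hprevj
      have hstepj : N y'' = some y := by
        have := aseq_step_even hjm0 hy''
        rw [show j - 1 + 1 = j by omega, hj] at this
        exact this.symm
      have heq : y'' = y' := by
        have h1 := (hN hstepj).1
        rw [hNy] at h1
        exact Option.some_inj.mp h1.symm
      rw [heq] at hy''
      exact IH (i-1) (by omega) (j-1) (by omega) hy' hy''

lemma aseq_exists_L (hM : IsMat adj A M) (hN : IsMat adj A N) (hMu : M u = none)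
    (hNu : N u ≠ none) :
    ∃ L, 1 ≤ L ∧ aseq M N u (L+1) = none ∧ ∀ k ≤ L, aseq M N u k ≠ none := by
  have hstop : ∃ k, aseq M N u (k+1) = none := by
    by_contra hcon
    push_neg at hcon
    have hall : ∀ k, aseq M N u k ≠ none := by
      intro k
      cases k with
      | zero => exact Option.some_ne_none _
      | succ k => exact hcon k
    obtain ⟨i, j, hne, hij⟩ := Finite.exists_ne_map_eq_of_infinite
      (fun k : ℕ => (aseq M N u k).getD u)
    have hsome : ∀ k, aseq M N u k = some ((aseq M N u k).getD u) := by
      intro k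
      obtain ⟨x, hx⟩ := Option.ne_none_iff_exists'.mp (hall k)
      rw [hx]; rfl
    rcases Nat.lt_or_ge j i with h | h
    · apply aseq_nodup hM hN hMu i j h (hsome i) (by rw [hsome j, hij])
    · have : j ≠ i := fun he => hne he.symm
      apply aseq_nodup hM hN hMu j i (by omega) (hsome j) (by rw [hsome i, ← hij])
  refine ⟨Nat.find hstop, ?_, Nat.find_spec hstop, ?_⟩
  · rcases Nat.eq_zero_or_pos (Nat.find hstop) with h0 | h1
    · exfalso
      have := Nat.find_spec hstop
      rw [h0] at this
      have h1 : aseq M N u 1 = N u := aseq_step_even rfl rfl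
      rw [h1] at this
      exact hNu this
    · exact h1
  · intro k hk hnone
    rcases Nat.eq_zero_or_pos k with rfl | hpos
    · exact Option.some_ne_none _ hnone
    · have : aseq M N u ((k-1)+1) = none := by rwa [show k - 1 + 1 = k by omega]
      exact Nat.find_min hstop (by omega) this

def xs (M N : Fin n → Option (Fin n)) (u : Fin n) (k : ℕ) : Fin n :=
  (aseq M N u k).getD u

lemma xs_of {k : ℕ} {z : Fin n} (h : aseq M N u k = some z) : xs M N u k = z := by
  simp [xs, h]

lemma hxs (hsome : ∀ k ≤ L, aseq M N u k ≠ none) {k : ℕ} (hk : k ≤ L) :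
    aseq M N u k = some (xs M N u k) := by
  obtain ⟨z, hz⟩ := Option.ne_none_iff_exists'.mp (hsome k hk)
  rw [hz, xs_of hz]

lemma xs_zero : xs M N u 0 = u := rfl

lemma back_even (hN : IsMat adj A N) (hsome : ∀ k ≤ L, aseq M N u k ≠ none)
    {k : ℕ} (hk2 : k % 2 = 0) (hk : k + 1 ≤ L) :
    N (xs M N u k) = some (xs M N u (k+1)) ∧ N (xs M N u (k+1)) = some (xs M N u k) ∧
      adjA adj A (xs M N u k) (xs M N u (k+1)) := by
  have h1 := hxs hsome (show k ≤ L by omega)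
  have h2 := hxs hsome hk
  have h3 : N (xs M N u k) = some (xs M N u (k+1)) := by
    rw [← aseq_step_even hk2 h1]; exact h2
  exact ⟨h3, (hN h3).1, (hN h3).2⟩

lemma back_odd (hM : IsMat adj A M) (hsome : ∀ k ≤ L, aseq M N u k ≠ none)
    {k : ℕ} (hk2 : k % 2 = 1) (hk : k + 1 ≤ L) :
    M (xs M N u k) = some (xs M N u (k+1)) ∧ M (xs M N u (k+1)) = some (xs M N u k) ∧
      adjA adj A (xs M N u k) (xs M N u (k+1)) := by
  have h1 := hxs hsome (show k ≤ L by omega)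
  have h2 := hxs hsome hk
  have h3 : M (xs M N u k) = some (xs M N u (k+1)) := by
    rw [← aseq_step_odd hk2 h1]; exact h2
  exact ⟨h3, (hM h3).1, (hM h3).2⟩

lemma nodup_xs (hM : IsMat adj A M) (hN : IsMat adj A N) (hMu : M u = none)
    (hsome : ∀ k ≤ L, aseq M N u k ≠ none) {j k : ℕ} (hjk : j < k) (hk : k ≤ L) :
    xs M N u k ≠ xs M N u j := by
  intro he
  exact aseq_nodup hM hN hMu k j hjk (hxs hsome hk)
    (by rw [hxs hsome (show j ≤ L by omega), ← he])

lemma uniq_idx (hM : IsMat adj A M) (hN : IsMat adj A N) (hMu : M u = none)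
    (hsome : ∀ k ≤ L, aseq M N u k ≠ none) {j k : ℕ} {z : Fin n} (hk : k ≤ L) (hj : j ≤ L)
    (h1 : aseq M N u k = some z) (h2 : aseq M N u j = some z) : j = k := by
  rcases Nat.lt_trichotomy j k with h | h | h
  · exact absurd (aseq_nodup hM hN hMu k j h h1 h2) not_false
  · exact h
  · exact absurd (aseq_nodup hM hN hMu j k h h2 h1) not_false

lemma end_odd (hsome : ∀ k ≤ L, aseq M N u k ≠ none) (hstop : aseq M N u (L+1) = none)
    (hL : L % 2 = 1) : M (xs M N u L) = none := by
  have h := aseq_step_odd hL (hxs hsome (le_refl L))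
  rw [hstop] at h
  exact h.symm

lemma end_even (hsome : ∀ k ≤ L, aseq M N u k ≠ none) (hstop : aseq M N u (L+1) = none)
    (hL : L % 2 = 0) : N (xs M N u L) = none := by
  have h := aseq_step_even hL (hxs hsome (le_refl L))
  rw [hstop] at h
  exact h.symm

lemma Mcov (hM : IsMat adj A M) (hsome : ∀ k ≤ L, aseq M N u k ≠ none)
    {k : ℕ} (h1 : 1 ≤ k) (hk : k ≤ L) (h3 : k % 2 = 0 ∨ k < L) :
    M (xs M N u k) ≠ none := by
  rcases Nat.mod_two_eq_zero_or_one k with he | ho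
  · have h2 : (k-1) % 2 = 1 := by omega
    have := (back_odd hM hsome h2 (show (k-1) + 1 ≤ L by omega)).2.1
    rw [show k - 1 + 1 = k by omega] at this
    rw [this]; simp
  · have hkL : k < L := by omega
    have := (back_odd hM hsome ho (show k + 1 ≤ L by omega)).1
    rw [this]; simp

lemma Ncov (hN : IsMat adj A N) (hNu : N u ≠ none)
    (hsome : ∀ k ≤ L, aseq M N u k ≠ none)
    {k : ℕ} (hk : k ≤ L) (h3 : k % 2 = 1 ∨ k < L) :
    N (xs M N u k) ≠ none := by
  rcases Nat.eq_zero_or_pos k with rfl | h1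
  · rw [xs_zero]; exact hNu
  · rcases Nat.mod_two_eq_zero_or_one k with he | ho
    · have hkL : k < L := by omega
      have := (back_even hN hsome he (show k + 1 ≤ L by omega)).1
      rw [this]; simp
    · have h2 : (k-1) % 2 = 0 := by omega
      have := (back_even hN hsome h2 (show (k-1) + 1 ≤ L by omega)).2.1
      rw [show k - 1 + 1 = k by omega] at this
      rw [this]; simp

lemma xs_mem (hM : IsMat adj A M) (hN : IsMat adj A N)
    (hsome : ∀ k ≤ L, aseq M N u k ≠ none) (hu : u ∈ A) {k : ℕ} (hk : k ≤ L) :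
    xs M N u k ∈ A := by
  rcases Nat.eq_zero_or_pos k with rfl | h1
  · rw [xs_zero]; exact hu
  · rcases Nat.mod_two_eq_zero_or_one (k-1) with he | ho
    · have := (back_even hN hsome he (show (k-1) + 1 ≤ L by omega)).2.2.2.1
      rwa [show k - 1 + 1 = k by omega] at this
    · have := (back_odd hM hsome ho (show (k-1) + 1 ≤ L by omega)).2.2.2.1
      rwa [show k - 1 + 1 = k by omega] at this

def adjA_symm' (hs : ∀ x y, adj x y → adj y x) {x y : Fin n}
    (h : adjA adj A x y) : adjA adj A y x :=
  ⟨h.2.1, h.1, h.2.2.1.symm, hs _ _ h.2.2.2⟩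

noncomputable def swapM (M N : Fin n → Option (Fin n)) (u : Fin n) (L : ℕ) :
    Fin n → Option (Fin n) := fun z =>
  if h : ∃ k, k ≤ L ∧ aseq M N u k = some z then
    (if Nat.find h % 2 = 1 then aseq M N u (Nat.find h - 1)
     else if Nat.find h + 1 ≤ L then aseq M N u (Nat.find h + 1) else none)
  else M z

noncomputable def swapN (M N : Fin n → Option (Fin n)) (u : Fin n) (L : ℕ) :
    Fin n → Option (Fin n) := fun z =>
  if h : ∃ k, k ≤ L ∧ aseq M N u k = some z then
    (if Nat.find h = 0 then none
     else if Nat.find h % 2 = 1 then aseq M N u (Nat.find h + 1)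
     else aseq M N u (Nat.find h - 1))
  else N z

lemma swapM_on (hM : IsMat adj A M) (hN : IsMat adj A N) (hMu : M u = none)
    (hsome : ∀ k ≤ L, aseq M N u k ≠ none) {k : ℕ} {z : Fin n}
    (hk : k ≤ L) (hz : aseq M N u k = some z) :
    swapM M N u L z =
      (if k % 2 = 1 then aseq M N u (k-1)
       else if k + 1 ≤ L then aseq M N u (k+1) else none) := by
  have hex : ∃ k', k' ≤ L ∧ aseq M N u k' = some z := ⟨k, hk, hz⟩
  have hfind := Nat.find_spec hex
  have heq : Nat.find hex = k := uniq_idx hM hN hMu hsome hk hfind.1 hz hfind.2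
  simp only [swapM, dif_pos hex, heq]

lemma swapM_off {z : Fin n} (h : ∀ k, k ≤ L → aseq M N u k ≠ some z) :
    swapM M N u L z = M z := by
  have : ¬ ∃ k, k ≤ L ∧ aseq M N u k = some z := by
    rintro ⟨k, hk, hz⟩; exact h k hk hz
  simp only [swapM, dif_neg this]

lemma swapN_on (hM : IsMat adj A M) (hN : IsMat adj A N) (hMu : M u = none)
    (hsome : ∀ k ≤ L, aseq M N u k ≠ none) {k : ℕ} {z : Fin n}
    (hk : k ≤ L) (hz : aseq M N u k = some z) :
    swapN M N u L z =
      (if k = 0 then none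
       else if k % 2 = 1 then aseq M N u (k+1)
       else aseq M N u (k-1)) := by
  have hex : ∃ k', k' ≤ L ∧ aseq M N u k' = some z := ⟨k, hk, hz⟩
  have hfind := Nat.find_spec hex
  have heq : Nat.find hex = k := uniq_idx hM hN hMu hsome hk hfind.1 hz hfind.2
  simp only [swapN, dif_pos hex, heq]

lemma swapN_off {z : Fin n} (h : ∀ k, k ≤ L → aseq M N u k ≠ some z) :
    swapN M N u L z = N z := by
  have : ¬ ∃ k, k ≤ L ∧ aseq M N u k = some z := by
    rintro ⟨k, hk, hz⟩; exact h k hk hz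
  simp only [swapN, dif_neg this]

lemma swapM_isMat (hs : ∀ x y, adj x y → adj y x) (hM : IsMat adj A M) (hN : IsMat adj A N)
    (hMu : M u = none) (hsome : ∀ k ≤ L, aseq M N u k ≠ none)
    (hstop : aseq M N u (L+1) = none) :
    IsMat adj A (swapM M N u L) := by
  intro z w h
  by_cases hz : ∃ k, k ≤ L ∧ aseq M N u k = some z
  · obtain ⟨k, hk, hzk⟩ := hz
    have hzx : xs M N u k = z := xs_of hzk
    rw [swapM_on hM hN hMu hsome hk hzk] at h
    rcases Nat.mod_two_eq_zero_or_one k with hk0 | hk1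
    · rw [if_neg (by omega)] at h
      by_cases hkL : k + 1 ≤ L
      · rw [if_pos hkL] at h
        have hwx : xs M N u (k+1) = w := xs_of h
        obtain ⟨hb1, hb2, hb3⟩ := back_even hN hsome hk0 hkL
        rw [hzx, hwx] at hb1 hb2 hb3
        constructor
        · rw [swapM_on hM hN hMu hsome hkL (by rw [← hwx]; exact hxs hsome hkL)]
          rw [if_pos (by omega : (k+1) % 2 = 1), show k + 1 - 1 = k from rfl]
          exact hzk
        · exact hb3
      · rw [if_neg hkL] at h
        exact absurd h.symm (Option.some_ne_none _)
    · rw [if_pos hk1] at h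
      have hk1' : 1 ≤ k := by omega
      have hw : aseq M N u (k-1) = some w := h
      have hwx : xs M N u (k-1) = w := xs_of hw
      obtain ⟨hb1, hb2, hb3⟩ := back_even hN hsome (by omega : (k-1) % 2 = 0)
        (show (k-1) + 1 ≤ L by omega)
      rw [show k - 1 + 1 = k by omega] at hb1 hb2 hb3
      rw [hzx, hwx] at hb1 hb2 hb3
      constructor
      · rw [swapM_on hM hN hMu hsome (show k - 1 ≤ L by omega) hw]
        rw [if_neg (by omega : ¬ (k-1) % 2 = 1), if_pos (show (k-1) + 1 ≤ L by omega)]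
        rw [show k - 1 + 1 = k by omega]
        exact hzk
      · exact adjA_symm' hs hb3
  · have hz' : ∀ k, k ≤ L → aseq M N u k ≠ some z := by
      intro k hk hcon; exact hz ⟨k, hk, hcon⟩
    rw [swapM_off hz'] at h
    obtain ⟨h1, h2⟩ := hM h
    have hwoff : ∀ k, k ≤ L → aseq M N u k ≠ some w := by
      intro k hk hcon
      have hwx : xs M N u k = w := xs_of hcon
      rcases Nat.eq_zero_or_pos k with rfl | hkpos
      · rw [xs_zero] at hwx
        rw [← hwx, hMu] at h1
        exact absurd h1.symm (Option.some_ne_none _)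
      · rcases Nat.mod_two_eq_zero_or_one k with hk0 | hk1
        · obtain ⟨hb1, hb2, hb3⟩ := back_odd hM hsome (by omega : (k-1) % 2 = 1)
            (show (k-1) + 1 ≤ L by omega)
          rw [show k - 1 + 1 = k by omega] at hb1 hb2 hb3
          rw [hwx] at hb2
          rw [hb2] at h1
          apply hz' (k-1) (by omega)
          rw [hxs hsome (show k - 1 ≤ L by omega), Option.some_inj.mp h1]
        · by_cases hkL : k + 1 ≤ L
          · obtain ⟨hb1, hb2, hb3⟩ := back_odd hM hsome hk1 hkL
            rw [hwx] at hb1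
            rw [hb1] at h1
            apply hz' (k+1) (by omega)
            rw [hxs hsome hkL, Option.some_inj.mp h1]
          · have hkL' : k = L := by omega
            have := end_odd hsome hstop (by omega : L % 2 = 1)
            rw [← hkL', hwx] at this
            rw [this] at h1
            exact absurd h1.symm (Option.some_ne_none _)
    rw [swapM_off hwoff]
    exact ⟨h1, h2⟩


lemma swapM_card_odd (hM : IsMat adj A M) (hN : IsMat adj A N) (hMu : M u = none)
    (hsome : ∀ k ≤ L, aseq M N u k ≠ none) (hstop : aseq M N u (L+1) = none)
    (hL : L % 2 = 1) :
    (msupp (swapM M N u L)).card = (msupp M).card + 2 := by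
  have hL1 : 1 ≤ L := by omega
  have hset : msupp (swapM M N u L) = msupp M ∪ {u, xs M N u L} := by
    ext z
    simp only [mem_msupp, Finset.mem_union, Finset.mem_insert, Finset.mem_singleton]
    constructor
    · intro hz
      by_cases hon : ∃ k, k ≤ L ∧ aseq M N u k = some z
      · obtain ⟨k, hk, hzk⟩ := hon
        have hzx := xs_of hzk
        rcases Nat.eq_zero_or_pos k with rfl | hkpos
        · right; left; rw [← hzx, xs_zero]
        · by_cases hkL : k = L
          · right; right; rw [← hzx, hkL]
          · left
            rw [← hzx]
            exact Mcov hM hsome hkpos hk (Or.inr (by omega))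
      · left
        rw [← swapM_off (fun k hk hc => hon ⟨k, hk, hc⟩)]
        exact hz
    · intro hz
      by_cases hon : ∃ k, k ≤ L ∧ aseq M N u k = some z
      · obtain ⟨k, hk, hzk⟩ := hon
        rw [swapM_on hM hN hMu hsome hk hzk]
        rcases Nat.mod_two_eq_zero_or_one k with hk0 | hk1
        · rw [if_neg (by omega), if_pos (show k + 1 ≤ L by omega)]
          exact hsome (k+1) (by omega)
        · rw [if_pos hk1]
          exact hsome (k-1) (by omega)
      · rw [swapM_off (fun k hk hc => hon ⟨k, hk, hc⟩)]
        rcases hz with hz | hz | hz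
        · exact hz
        · exact absurd ⟨0, Nat.zero_le _, by rw [hz]; rfl⟩ hon
        · exact absurd ⟨L, le_refl L, by rw [hz]; exact hxs hsome (le_refl L)⟩ hon
  have hd : Disjoint (msupp M) ({u, xs M N u L} : Finset (Fin n)) := by
    rw [Finset.disjoint_insert_right, Finset.disjoint_singleton_right]
    constructor
    · simp [mem_msupp, hMu]
    · simp [mem_msupp, end_odd hsome hstop hL]
  have hne : u ≠ xs M N u L := by
    have := nodup_xs hM hN hMu hsome (show 0 < L by omega) (le_refl L)
    rw [xs_zero] at this
    exact this.symm
  rw [hset, Finset.card_union_of_disjoint hd, Finset.card_pair hne]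

lemma swapM_card_even (hM : IsMat adj A M) (hN : IsMat adj A N) (hMu : M u = none)
    (hsome : ∀ k ≤ L, aseq M N u k ≠ none) (hstop : aseq M N u (L+1) = none)
    (hL : L % 2 = 0) (hL1 : 1 ≤ L) :
    (msupp (swapM M N u L)).card = (msupp M).card := by
  have hset : msupp (swapM M N u L) = insert u (msupp M) \ {xs M N u L} := by
    ext z
    simp only [mem_msupp, Finset.mem_sdiff, Finset.mem_insert, Finset.mem_singleton]
    constructor
    · intro hz
      by_cases hon : ∃ k, k ≤ L ∧ aseq M N u k = some z
      · obtain ⟨k, hk, hzk⟩ := hon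
        have hzx := xs_of hzk
        by_cases hkL : k = L
        · exfalso
          apply hz
          rw [swapM_on hM hN hMu hsome hk hzk, hkL]
          rw [if_neg (by omega), if_neg (by omega)]
        · have hzne : z ≠ xs M N u L := by
            rw [← hzx]
            exact (nodup_xs hM hN hMu hsome (show k < L by omega) (le_refl L)).symm
          rcases Nat.eq_zero_or_pos k with rfl | hkpos
          · exact ⟨Or.inl (by rw [← hzx, xs_zero]), hzne⟩
          · refine ⟨Or.inr ?_, hzne⟩
            rw [← hzx]
            exact Mcov hM hsome hkpos hk (Or.inr (by omega))
      · rw [swapM_off (fun k hk hc => hon ⟨k, hk, hc⟩)] at hz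
        refine ⟨Or.inr hz, ?_⟩
        intro hc
        exact hon ⟨L, le_refl L, by rw [hc]; exact hxs hsome (le_refl L)⟩
    · rintro ⟨hz1, hz2⟩
      by_cases hon : ∃ k, k ≤ L ∧ aseq M N u k = some z
      · obtain ⟨k, hk, hzk⟩ := hon
        have hzx := xs_of hzk
        have hkL : k ≠ L := by
          intro hc; rw [hc] at hzx; exact hz2 hzx.symm
        rw [swapM_on hM hN hMu hsome hk hzk]
        rcases Nat.mod_two_eq_zero_or_one k with hk0 | hk1
        · rw [if_neg (by omega), if_pos (show k + 1 ≤ L by omega)]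
          exact hsome (k+1) (by omega)
        · rw [if_pos hk1]
          exact hsome (k-1) (by omega)
      · rw [swapM_off (fun k hk hc => hon ⟨k, hk, hc⟩)]
        rcases hz1 with hz1 | hz1
        · exact absurd ⟨0, Nat.zero_le _, by rw [hz1]; rfl⟩ hon
        · exact hz1
  rw [hset]
  have hu_nm : u ∉ msupp M := by simp [mem_msupp, hMu]
  have hxl : xs M N u L ∈ insert u (msupp M) := by
    apply Finset.mem_insert_of_mem
    rw [mem_msupp]
    exact Mcov hM hsome hL1 (le_refl L) (Or.inl hL)
  rw [Finset.card_sdiff_of_subset (Finset.singleton_subset_iff.mpr hxl),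
    Finset.card_insert_of_notMem hu_nm, Finset.card_singleton]
  omega

lemma swapM_xsL_none (hM : IsMat adj A M) (hN : IsMat adj A N) (hMu : M u = none)
    (hsome : ∀ k ≤ L, aseq M N u k ≠ none) (hL : L % 2 = 0) :
    swapM M N u L (xs M N u L) = none := by
  rw [swapM_on hM hN hMu hsome (le_refl L) (hxs hsome (le_refl L))]
  rw [if_neg (by omega), if_neg (by omega)]

lemma swapM_free (hM : IsMat adj A M)
    (hsome : ∀ k ≤ L, aseq M N u k ≠ none) (hL : L % 2 = 0) {z : Fin n}
    (hz : M z = none) (hzu : z ≠ u) : swapM M N u L z = none := by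
  have hoff : ∀ k, k ≤ L → aseq M N u k ≠ some z := by
    intro k hk hc
    have hzx := xs_of hc
    rcases Nat.eq_zero_or_pos k with rfl | hkpos
    · rw [xs_zero] at hzx; exact hzu hzx.symm
    · apply Mcov hM hsome hkpos hk ?_ (by rw [hzx]; exact hz)
      rcases Nat.mod_two_eq_zero_or_one k with hk0 | hk1
      · exact Or.inl hk0
      · exact Or.inr (by omega)
  rw [swapM_off hoff]
  exact hz

lemma swapN_isMat (hs : ∀ x y, adj x y → adj y x) (hM : IsMat adj A M) (hN : IsMat adj A N)
    (hMu : M u = none) (hsome : ∀ k ≤ L, aseq M N u k ≠ none)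
    (hstop : aseq M N u (L+1) = none) (hL : L % 2 = 0) (hL1 : 1 ≤ L) :
    IsMat adj A (swapN M N u L) := by
  intro z w h
  by_cases hz : ∃ k, k ≤ L ∧ aseq M N u k = some z
  · obtain ⟨k, hk, hzk⟩ := hz
    have hzx : xs M N u k = z := xs_of hzk
    rw [swapN_on hM hN hMu hsome hk hzk] at h
    rcases Nat.eq_zero_or_pos k with rfl | hkpos
    · rw [if_pos rfl] at h
      exact absurd h.symm (Option.some_ne_none _)
    · rw [if_neg (by omega)] at h
      rcases Nat.mod_two_eq_zero_or_one k with hk0 | hk1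
      · -- k even, k ≥ 2, w = xs (k-1)
        rw [if_neg (by omega)] at h
        have hwx : xs M N u (k-1) = w := xs_of h
        obtain ⟨hb1, hb2, hb3⟩ := back_odd hM hsome (by omega : (k-1) % 2 = 1)
          (show (k-1) + 1 ≤ L by omega)
        rw [show k - 1 + 1 = k by omega] at hb1 hb2 hb3
        rw [hzx, hwx] at hb1 hb2 hb3
        constructor
        · rw [swapN_on hM hN hMu hsome (show k - 1 ≤ L by omega) h]
          rw [if_neg (by omega), if_pos (by omega : (k-1) % 2 = 1),
            show k - 1 + 1 = k by omega]
          exact hzk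
        · exact adjA_symm' hs hb3
      · -- k odd, k < L, w = xs (k+1)
        rw [if_pos hk1] at h
        have hkL : k + 1 ≤ L := by omega
        have hwx : xs M N u (k+1) = w := xs_of h
        obtain ⟨hb1, hb2, hb3⟩ := back_odd hM hsome hk1 hkL
        rw [hzx, hwx] at hb1 hb2 hb3
        constructor
        · rw [swapN_on hM hN hMu hsome hkL h]
          rw [if_neg (by omega), if_neg (by omega : ¬ (k+1) % 2 = 1),
            show k + 1 - 1 = k from rfl]
          exact hzk
        · exact hb3
  · have hz' : ∀ k, k ≤ L → aseq M N u k ≠ some z := by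
      intro k hk hcon; exact hz ⟨k, hk, hcon⟩
    rw [swapN_off hz'] at h
    obtain ⟨h1, h2⟩ := hN h
    have hwoff : ∀ k, k ≤ L → aseq M N u k ≠ some w := by
      intro k hk hcon
      have hwx : xs M N u k = w := xs_of hcon
      rcases Nat.eq_zero_or_pos k with rfl | hkpos
      · rw [xs_zero] at hwx
        have hstep : aseq M N u 1 = N u := aseq_step_even rfl rfl
        refine hz' 1 (by omega) ?_
        rw [hstep, hwx]
        exact h1
      · rcases Nat.mod_two_eq_zero_or_one k with hk0 | hk1
        · by_cases hkL : k = L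
          · have := end_even hsome hstop hL
            rw [← hkL, hwx] at this
            rw [this] at h1
            exact absurd h1.symm (Option.some_ne_none _)
          · obtain ⟨hb1, hb2, hb3⟩ := back_even hN hsome hk0 (show k + 1 ≤ L by omega)
            rw [hwx] at hb1
            rw [hb1] at h1
            apply hz' (k+1) (by omega)
            rw [hxs hsome (show k + 1 ≤ L by omega), Option.some_inj.mp h1]
        · obtain ⟨hb1, hb2, hb3⟩ := back_even hN hsome (by omega : (k-1) % 2 = 0)
            (show (k-1) + 1 ≤ L by omega)
          rw [show k - 1 + 1 = k by omega] at hb1 hb2 hb3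
          rw [hwx] at hb2
          rw [hb2] at h1
          apply hz' (k-1) (by omega)
          rw [hxs hsome (show k - 1 ≤ L by omega), Option.some_inj.mp h1]
    rw [swapN_off hwoff]
    exact ⟨h1, h2⟩

lemma swapN_card (hM : IsMat adj A M) (hN : IsMat adj A N) (hMu : M u = none)
    (hNu : N u ≠ none) (hsome : ∀ k ≤ L, aseq M N u k ≠ none)
    (hstop : aseq M N u (L+1) = none) (hL : L % 2 = 0) (hL1 : 1 ≤ L) :
    (msupp (swapN M N u L)).card = (msupp N).card := by
  have hset : msupp (swapN M N u L) = insert (xs M N u L) ((msupp N).erase u) := by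
    ext z
    simp only [mem_msupp, Finset.mem_insert, Finset.mem_erase]
    constructor
    · intro hz
      by_cases hon : ∃ k, k ≤ L ∧ aseq M N u k = some z
      · obtain ⟨k, hk, hzk⟩ := hon
        have hzx := xs_of hzk
        rcases Nat.eq_zero_or_pos k with rfl | hkpos
        · exfalso
          apply hz
          rw [swapN_on hM hN hMu hsome hk hzk, if_pos rfl]
        · have hzu : z ≠ u := by
            rw [← hzx, ← xs_zero (M := M) (N := N) (u := u)]
            exact nodup_xs hM hN hMu hsome hkpos hk
          by_cases hkL : k = L
          · left; rw [← hzx, hkL]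
          · right
            refine ⟨hzu, ?_⟩
            rw [← hzx]
            apply Ncov hN hNu hsome hk
            rcases Nat.mod_two_eq_zero_or_one k with hk0 | hk1
            · exact Or.inr (by omega)
            · exact Or.inl hk1
      · rw [swapN_off (fun k hk hc => hon ⟨k, hk, hc⟩)] at hz
        right
        refine ⟨?_, hz⟩
        intro hc
        exact hon ⟨0, Nat.zero_le _, by rw [hc]; rfl⟩
    · intro hz
      rcases hz with hz | ⟨hzu, hz⟩
      · rw [hz, swapN_on hM hN hMu hsome (le_refl L) (hxs hsome (le_refl L))]
        rw [if_neg (by omega), if_neg (by omega)]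
        exact hsome (L-1) (by omega)
      · by_cases hon : ∃ k, k ≤ L ∧ aseq M N u k = some z
        · obtain ⟨k, hk, hzk⟩ := hon
          have hzx := xs_of hzk
          have hkpos : 1 ≤ k := by
            rcases Nat.eq_zero_or_pos k with rfl | h
            · exfalso; rw [xs_zero] at hzx; exact hzu hzx.symm
            · exact h
          rw [swapN_on hM hN hMu hsome hk hzk, if_neg (by omega)]
          rcases Nat.mod_two_eq_zero_or_one k with hk0 | hk1
          · rw [if_neg (by omega)]
            exact hsome (k-1) (by omega)
          · rw [if_pos hk1]
            have hkL : k + 1 ≤ L := by omega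
            exact hsome (k+1) hkL
        · rw [swapN_off (fun k hk hc => hon ⟨k, hk, hc⟩)]
          exact hz
  rw [hset]
  have h1 : xs M N u L ∉ (msupp N).erase u := by
    intro hc
    have := (Finset.mem_erase.mp hc).2
    rw [mem_msupp] at this
    exact this (end_even hsome hstop hL)
  have h2 : u ∈ msupp N := mem_msupp.mpr hNu
  rw [Finset.card_insert_of_notMem h1, Finset.card_erase_of_mem h2]
  have : 1 ≤ (msupp N).card := Finset.card_pos.mpr ⟨u, h2⟩
  omega

def agrc (M P : Fin n → Option (Fin n)) : ℕ :=
  (Finset.univ.filter (fun z => P z ≠ none ∧ P z = M z)).card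

lemma agr_lt (hM : IsMat adj A M) (hN : IsMat adj A N) (hMu : M u = none)
    (hNu : N u ≠ none) (hsome : ∀ k ≤ L, aseq M N u k ≠ none)
    (hstop : aseq M N u (L+1) = none) (hL : L % 2 = 0) (hL2 : 2 ≤ L) :
    agrc M N < agrc M (swapN M N u L) := by
  have key : ∀ z : Fin n, (N z ≠ none ∧ N z = M z) → ∀ k, k ≤ L → aseq M N u k ≠ some z := by
    intro z hz k hk hcon
    have hzx := xs_of hcon
    rcases Nat.eq_zero_or_pos k with rfl | hkpos
    · rw [xs_zero] at hzx
      have hMz : M z = none := by rw [← hzx]; exact hMu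
      rw [hMz] at hz
      exact hz.1 hz.2
    · rcases Nat.mod_two_eq_zero_or_one k with hk0 | hk1
      · by_cases hkL : k = L
        · apply hz.1
          rw [← hzx, hkL]
          exact end_even hsome hstop hL
        · have hbe := (back_even hN hsome hk0 (show k + 1 ≤ L by omega)).1
          have hbo := (back_odd hM hsome (by omega : (k-1) % 2 = 1)
            (show (k-1) + 1 ≤ L by omega)).2.1
          rw [show k - 1 + 1 = k by omega] at hbo
          rw [hzx] at hbe hbo
          rw [hbe, hbo] at hz
          have := Option.some_inj.mp hz.2
          exact nodup_xs hM hN hMu hsome (show k - 1 < k + 1 by omega)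
            (show k + 1 ≤ L by omega) this
      · have hkL : k + 1 ≤ L := by omega
        have hbe := (back_even hN hsome (by omega : (k-1) % 2 = 0)
          (show (k-1) + 1 ≤ L by omega)).2.1
        rw [show k - 1 + 1 = k by omega] at hbe
        have hbo := (back_odd hM hsome hk1 hkL).1
        rw [hzx] at hbe hbo
        rw [hbe, hbo] at hz
        have := Option.some_inj.mp hz.2
        exact nodup_xs hM hN hMu hsome (show k - 1 < k + 1 by omega) hkL this.symm
  have hsub : Finset.univ.filter (fun z => N z ≠ none ∧ N z = M z) ⊆
      Finset.univ.filter (fun z => swapN M N u L z ≠ none ∧ swapN M N u L z = M z) := by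
    intro z hz
    rw [Finset.mem_filter] at hz ⊢
    obtain ⟨_, hz⟩ := hz
    rw [swapN_off (key z hz)]
    exact ⟨Finset.mem_univ _, hz⟩
  have hx1 : aseq M N u 1 = some (xs M N u 1) := hxs hsome (by omega)
  have hmem : xs M N u 1 ∈ Finset.univ.filter
      (fun z => swapN M N u L z ≠ none ∧ swapN M N u L z = M z) := by
    rw [Finset.mem_filter]
    refine ⟨Finset.mem_univ _, ?_⟩
    rw [swapN_on hM hN hMu hsome (by omega : 1 ≤ L) hx1]
    rw [if_neg (by omega), if_pos rfl]
    have hbo := (back_odd hM hsome rfl (show 1 + 1 ≤ L by omega)).1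
    rw [hbo, hxs hsome (show 2 ≤ L by omega)]
    exact ⟨by simp, rfl⟩
  have hnot : xs M N u 1 ∉ Finset.univ.filter (fun z => N z ≠ none ∧ N z = M z) := by
    rw [Finset.mem_filter]
    rintro ⟨-, hz⟩
    exact key _ hz 1 (by omega) hx1
  apply Finset.card_lt_card
  rw [Finset.ssubset_iff_of_subset hsub]
  exact ⟨xs M N u 1, hmem, hnot⟩

end Path

section Gallai

variable {adj : Fin n → Fin n → Prop} {A : Finset (Fin n)}

theorem gallai (hs : ∀ x y, adj x y → adj y x)
    (hB : ∀ v ∈ A, nustar adj (A.erase v) = nustar adj A) :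
    ∀ k : ℕ, ∀ (M : Fin n → Option (Fin n)) (u v : Fin n),
      IsMat adj A M → (msupp M).card = nustar adj A →
      M u = none → M v = none → u ∈ A → v ∈ A → u ≠ v → WalkN adj A k u v → False := by
  intro k
  induction k using Nat.strong_induction_on with
  | _ k IH =>
  intro M u v hM hMmax hMu hMv hu hv huv hwalk
  rcases k with _ | k'
  · exact huv hwalk
  · obtain ⟨w, hadj, hwalk'⟩ := hwalk
    by_cases hwv : w = v
    · subst hwv
      have := add_edge_le hs hM hMu hMv hadj
      omega
    by_cases hMw : M w = none
    · exact IH k' (by omega) M w v hM hMmax hMw hMv hadj.2.1 hv hwv hwalk'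
    have hwA : w ∈ A := hadj.2.1
    have hNex : ∃ N, IsMat adj A N ∧ (msupp N).card = nustar adj A ∧ N w = none := by
      obtain ⟨N₀, hN₀, hc⟩ := exists_max_mat (adj := adj) (A.erase w)
      have hN₀w : N₀ w = none := by
        by_contra hcon
        obtain ⟨y, hy⟩ := Option.ne_none_iff_exists'.mp hcon
        exact (Finset.mem_erase.mp (hN₀ hy).2.1).1 rfl
      exact ⟨N₀, isMat_mono (Finset.erase_subset _ _) hN₀, by rw [hc, hB w hwA], hN₀w⟩
    set cand := (Finset.univ.filter
      (fun P : Fin n → Option (Fin n) =>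
        IsMat adj A P ∧ (msupp P).card = nustar adj A ∧ P w = none)) with hcand_def
    have hcand : cand.Nonempty := by
      obtain ⟨N₀, h1, h2, h3⟩ := hNex
      exact ⟨N₀, by simp only [hcand_def, Finset.mem_filter]; exact ⟨Finset.mem_univ _, h1, h2, h3⟩⟩
    obtain ⟨N, hNmem, hNmax⟩ := Finset.exists_max_image cand (fun P => agrc M P) hcand
    rw [hcand_def, Finset.mem_filter] at hNmem
    obtain ⟨-, hNmat, hNcard, hNw⟩ := hNmem
    have hNu : N u ≠ none := by
      intro hcon
      have := add_edge_le hs hNmat hcon hNw hadj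
      omega
    have hNv : N v ≠ none := by
      intro hcon
      exact IH k' (by omega) N w v hNmat hNcard hNw hcon hwA hv hwv hwalk'
    obtain ⟨L, hL1, hstop, hsome⟩ := aseq_exists_L hM hNmat hMu hNu
    rcases Nat.mod_two_eq_zero_or_one L with hLe | hLo
    · -- L even
      have hL2 : 2 ≤ L := by omega
      by_cases hzw : xs M N u L = w
      · have hmat := swapM_isMat hs hM hNmat hMu hsome hstop
        have hcard := swapM_card_even hM hNmat hMu hsome hstop hLe hL1
        have hfw : swapM M N u L w = none := by
          rw [← hzw]; exact swapM_xsL_none hM hNmat hMu hsome hLe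
        have hfv : swapM M N u L v = none := swapM_free hM hsome hLe hMv (Ne.symm huv)
        exact IH k' (by omega) (swapM M N u L) w v hmat (by rw [hcard, hMmax]) hfw hfv
          hwA hv hwv hwalk'
      · have hmat := swapN_isMat hs hM hNmat hMu hsome hstop hLe hL1
        have hcard := swapN_card hM hNmat hMu hNu hsome hstop hLe hL1
        have hwoff : ∀ j, j ≤ L → aseq M N u j ≠ some w := by
          intro j hj hcon
          have hwx := xs_of hcon
          by_cases hjL : j = L
          · rw [hjL] at hwx; exact hzw hwx
          · refine Ncov hNmat hNu hsome hj (Or.inr (by omega)) ?_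
            rw [hwx]; exact hNw
        have hmem : swapN M N u L ∈ cand := by
          simp only [hcand_def, Finset.mem_filter]
          refine ⟨Finset.mem_univ _, hmat, by rw [hcard, hNcard], ?_⟩
          rw [swapN_off hwoff]; exact hNw
        have hle := hNmax _ hmem
        have hlt := agr_lt hM hNmat hMu hNu hsome hstop hLe hL2
        omega
    · -- L odd : augmenting path
      have hcardodd := swapM_card_odd hM hNmat hMu hsome hstop hLo
      have hmat := swapM_isMat hs hM hNmat hMu hsome hstop
      have := le_nustar hmat
      omega

theorem gallai_reach (hs : ∀ x y, adj x y → adj y x)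
    (hB : ∀ v ∈ A, nustar adj (A.erase v) = nustar adj A)
    {M : Fin n → Option (Fin n)} {u v : Fin n}
    (hM : IsMat adj A M) (hMmax : (msupp M).card = nustar adj A)
    (hMu : M u = none) (hMv : M v = none) (hu : u ∈ A) (hv : v ∈ A) (huv : u ≠ v) :
    ¬ Reach adj A u v := by
  rintro ⟨k, hk⟩
  exact gallai hs hB k M u v hM hMmax hMu hMv hu hv huv hk

end Gallai

section Main

variable {t : ℕ}

def adjc (c : Fin n → Fin n → Fin t) (i : Fin t) : Fin n → Fin n → Prop :=
  fun x y => c x y = i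

lemma arith_key (P X : ℕ) : 4*(P+1)*X < (P+X+2)*(P+X+1) := by
  zify
  nlinarith [sq_nonneg ((X:ℤ) - (P:ℤ) - 1)]

lemma countB (c : Fin n → Fin n → Fin t) (hc : ∀ x y, c x y = c y x) (ht : 1 ≤ t)
    (A : Finset (Fin n)) (a : Fin t → ℕ) (ha : ∀ i, 1 ≤ a i)
    (hν : ∀ i, nustar (adjc c i) A ≤ 2 * (a i - 1))
    (hB : ∀ i : Fin t, ∀ v ∈ A, nustar (adjc c i) (A.erase v) = nustar (adjc c i) A) :
    A.card ≤ Finset.univ.sup a + ∑ i, (a i - 1) := by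
  by_contra hbig
  push_neg at hbig
  set P := Finset.univ.sup a - 1 with hP
  set X := ∑ i, (a i - 1) with hX
  have hsup1 : 1 ≤ Finset.univ.sup a :=
    le_trans (ha ⟨0, ht⟩) (Finset.le_sup (Finset.mem_univ _))
  have hAcard : P + X + 2 ≤ A.card := by omega
  have hsymc : ∀ i : Fin t, ∀ x y, adjc c i x y → adjc c i y x := by
    intro i x y h
    show c y x = i
    rw [← hc x y]
    exact h
  choose Mi hMi hMicard using fun i => exists_max_mat (adj := adjc c i) A
  set Pairs := (A ×ˢ A).filter (fun e => e.1 ≠ e.2) with hPairs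
  have hPairscard : Pairs.card + A.card = A.card * A.card := by
    have h1 := Finset.card_filter_add_card_filter_not
      (s := A ×ˢ A) (p := fun e => e.1 ≠ e.2)
    have h2 : (A ×ˢ A).filter (fun e => ¬ e.1 ≠ e.2) = A.image (fun x => (x, x)) := by
      ext e
      simp only [Finset.mem_filter, Finset.mem_product, Finset.mem_image, not_not]
      constructor
      · rintro ⟨⟨h1', h2'⟩, h3'⟩
        exact ⟨e.1, h1', Prod.ext rfl h3'⟩
      · rintro ⟨x, hx, rfl⟩
        exact ⟨⟨hx, hx⟩, rfl⟩
    have h3 : (A.image (fun x => (x, x))).card = A.card :=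
      Finset.card_image_of_injective _ (fun x y h => ((Prod.mk.injEq _ _ _ _).mp h).1)
    rw [h2, h3] at h1
    rw [hPairs, ← Finset.card_product]
    exact h1
  set Ri := fun i : Fin t => (A ×ˢ A).filter
    (fun e => e.1 ≠ e.2 ∧ Reach (adjc c i) A e.1 e.2) with hRi
  have hcover : Pairs ⊆ Finset.univ.biUnion Ri := by
    intro e he
    rw [hPairs, Finset.mem_filter, Finset.mem_product] at he
    obtain ⟨⟨h1, h2⟩, h3⟩ := he
    rw [Finset.mem_biUnion]
    refine ⟨c e.1 e.2, Finset.mem_univ _, ?_⟩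
    rw [hRi, Finset.mem_filter, Finset.mem_product]
    exact ⟨⟨h1, h2⟩, h3, reach_adj ⟨h1, h2, h3, rfl⟩⟩
  have hRibound : ∀ i, (Ri i).card ≤ 4 * (a i - 1) * (P + 1) := by
    intro i
    set B := msupp (Mi i) with hBdef
    have hBcard : B.card ≤ 2 * (a i - 1) := by
      rw [hBdef, hMicard i]; exact hν i
    have gal : ∀ x y : Fin n, x ∈ A → y ∈ A → x ≠ y → Mi i x = none → Mi i y = none →
        ¬ Reach (adjc c i) A x y := by
      intro x y hx hy hxy hfx hfy
      exact gallai_reach (hsymc i) (hB i) (hMi i) (hMicard i) hfx hfy hx hy hxy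
    have hfree : ∀ z : Fin n, z ∉ B → Mi i z = none := by
      intro z hz
      by_contra hcon
      exact hz (mem_msupp.mpr hcon)
    have hmemRi : ∀ e ∈ Ri i, e.1 ∈ A ∧ e.2 ∈ A ∧ e.1 ≠ e.2 ∧ Reach (adjc c i) A e.1 e.2 := by
      intro e he
      rw [hRi, Finset.mem_filter, Finset.mem_product] at he
      exact ⟨he.1.1, he.1.2, he.2.1, he.2.2⟩
    have hsplit : Ri i ⊆ ((B ×ˢ B) ∪ (Ri i).filter (fun e => e.1 ∉ B)) ∪
        (Ri i).filter (fun e => e.2 ∉ B) := by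
      intro e he
      by_cases h1 : e.1 ∈ B
      · by_cases h2 : e.2 ∈ B
        · apply Finset.mem_union_left
          apply Finset.mem_union_left
          rw [Finset.mem_product]; exact ⟨h1, h2⟩
        · exact Finset.mem_union_right _ (Finset.mem_filter.mpr ⟨he, h2⟩)
      · apply Finset.mem_union_left
        exact Finset.mem_union_right _ (Finset.mem_filter.mpr ⟨he, h1⟩)
    have hQ2 : ((Ri i).filter (fun e => e.1 ∉ B)).card ≤ B.card := by
      apply Finset.card_le_card_of_injOn (fun e => e.2)
      · intro e he
        rw [Finset.mem_coe, Finset.mem_filter] at he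
        obtain ⟨heRi, h1⟩ := he
        obtain ⟨hA1, hA2, hne, hre⟩ := hmemRi e heRi
        by_contra h2
        exact gal e.1 e.2 hA1 hA2 hne (hfree _ h1) (hfree _ h2) hre
      · intro e he f hf hef
        simp only [Finset.mem_coe, Finset.mem_filter] at he hf
        obtain ⟨heRi, h1e⟩ := he
        obtain ⟨hfRi, h1f⟩ := hf
        obtain ⟨hA1e, hA2e, hnee, hree⟩ := hmemRi e heRi
        obtain ⟨hA1f, hA2f, hnef, href⟩ := hmemRi f hfRi
        have hef' : e.2 = f.2 := hef
        by_cases h12 : e.1 = f.1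
        · exact Prod.ext h12 hef'
        · exfalso
          have hr : Reach (adjc c i) A e.1 f.1 := by
            apply reach_trans hree
            rw [hef']
            exact reach_symm (hsymc i) href
          exact gal e.1 f.1 hA1e hA1f h12 (hfree _ h1e) (hfree _ h1f) hr
    have hQ3 : ((Ri i).filter (fun e => e.2 ∉ B)).card ≤ B.card := by
      apply Finset.card_le_card_of_injOn (fun e => e.1)
      · intro e he
        rw [Finset.mem_coe, Finset.mem_filter] at he
        obtain ⟨heRi, h2⟩ := he
        obtain ⟨hA1, hA2, hne, hre⟩ := hmemRi e heRi
        by_contra h1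
        exact gal e.1 e.2 hA1 hA2 hne (hfree _ h1) (hfree _ h2) hre
      · intro e he f hf hef
        simp only [Finset.mem_coe, Finset.mem_filter] at he hf
        obtain ⟨heRi, h2e⟩ := he
        obtain ⟨hfRi, h2f⟩ := hf
        obtain ⟨hA1e, hA2e, hnee, hree⟩ := hmemRi e heRi
        obtain ⟨hA1f, hA2f, hnef, href⟩ := hmemRi f hfRi
        have hef' : e.1 = f.1 := hef
        by_cases h12 : e.2 = f.2
        · exact Prod.ext hef' h12
        · exfalso
          have hr : Reach (adjc c i) A e.2 f.2 := by
            apply reach_trans (reach_symm (hsymc i) hree)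
            rw [hef']
            exact href
          exact gal e.2 f.2 hA2e hA2f h12 (hfree _ h2e) (hfree _ h2f) hr
    have hRile : (Ri i).card ≤ B.card * B.card + B.card + B.card := by
      calc (Ri i).card ≤ (((B ×ˢ B) ∪ (Ri i).filter (fun e => e.1 ∉ B)) ∪
          (Ri i).filter (fun e => e.2 ∉ B)).card := Finset.card_le_card hsplit
      _ ≤ ((B ×ˢ B) ∪ (Ri i).filter (fun e => e.1 ∉ B)).card +
          ((Ri i).filter (fun e => e.2 ∉ B)).card := Finset.card_union_le _ _
      _ ≤ (B ×ˢ B).card + ((Ri i).filter (fun e => e.1 ∉ B)).card +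
          ((Ri i).filter (fun e => e.2 ∉ B)).card := by
            have := Finset.card_union_le (B ×ˢ B) ((Ri i).filter (fun e => e.1 ∉ B))
            omega
      _ ≤ B.card * B.card + B.card + B.card := by
            rw [Finset.card_product]
            omega
    have hxP : a i - 1 ≤ P := by
      have := Finset.le_sup (f := a) (Finset.mem_univ i)
      omega
    have hsq : B.card * B.card ≤ (2*(a i - 1)) * (2*(a i - 1)) :=
      Nat.mul_le_mul hBcard hBcard
    calc (Ri i).card ≤ B.card * B.card + B.card + B.card := hRile
    _ ≤ (2*(a i - 1)) * (2*(a i - 1)) + (2*(a i - 1)) + (2*(a i - 1)) := by omega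
    _ = 4 * (a i - 1) * ((a i - 1) + 1) := by ring
    _ ≤ 4 * (a i - 1) * (P + 1) := Nat.mul_le_mul_left _ (by omega)
  have hsum : Pairs.card ≤ ∑ i, (Ri i).card :=
    le_trans (Finset.card_le_card hcover) (Finset.card_biUnion_le)
  have htot : ∑ i, (Ri i).card ≤ 4*(P+1)*X := by
    calc ∑ i, (Ri i).card ≤ ∑ i, 4 * (a i - 1) * (P + 1) :=
      Finset.sum_le_sum (fun i _ => hRibound i)
    _ = 4*(P+1)*X := by
        rw [hX, Finset.mul_sum]
        exact Finset.sum_congr rfl (fun i _ => by ring)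
  have hk := arith_key P X
  have hmul : (P+X+2)*(P+X+1) ≤ A.card * (A.card - 1) :=
    Nat.mul_le_mul hAcard (by omega)
  have h9 : A.card * (A.card - 1) + A.card * 1 = A.card * A.card := by
    rw [← Nat.mul_add]
    congr 1
    omega
  omega

theorem main_bound (c : Fin n → Fin n → Fin t) (hc : ∀ x y, c x y = c y x) (ht : 1 ≤ t) :
    ∀ m : ℕ, ∀ A : Finset (Fin n), A.card = m →
    ∀ a : Fin t → ℕ, (∀ i, 1 ≤ a i) →
    (∀ i, nustar (adjc c i) A ≤ 2 * (a i - 1)) →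
    A.card ≤ Finset.univ.sup a + ∑ i, (a i - 1) := by
  intro m
  induction m using Nat.strong_induction_on with
  | _ m IH =>
  intro A hAm a ha hν
  by_cases hcaseA : ∃ v ∈ A, ∃ i, nustar (adjc c i) (A.erase v) < nustar (adjc c i) A
  · obtain ⟨v, hvA, i, hvi⟩ := hcaseA
    obtain ⟨k1, hk1⟩ := nustar_even (adj := adjc c i) A
    obtain ⟨k2, hk2⟩ := nustar_even (adj := adjc c i) (A.erase v)
    have hai2 : 2 ≤ a i := by
      have := hν i
      have h1 := ha i
      omega
    set a' := Function.update a i (a i - 1) with ha'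
    have ha'1 : ∀ j, 1 ≤ a' j := by
      intro j
      rw [ha']
      by_cases hj : j = i
      · subst hj; simp; omega
      · rw [Function.update_of_ne hj]; exact ha j
    have hν' : ∀ j, nustar (adjc c j) (A.erase v) ≤ 2 * (a' j - 1) := by
      intro j
      rw [ha']
      by_cases hj : j = i
      · subst hj
        simp only [Function.update_self]
        have := hν j
        omega
      · rw [Function.update_of_ne hj]
        exact le_trans (nustar_mono (Finset.erase_subset _ _)) (hν j)
    have hm1 : 1 ≤ m := by
      rw [← hAm]; exact Finset.card_pos.mpr ⟨v, hvA⟩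
    have hcard : (A.erase v).card = m - 1 := by
      rw [Finset.card_erase_of_mem hvA, hAm]
    have hIH := IH (m-1) (by omega) (A.erase v) hcard a' ha'1 hν'
    have hsup : Finset.univ.sup a' ≤ Finset.univ.sup a := by
      apply Finset.sup_le
      intro j hj
      have hle : a' j ≤ a j := by
        rw [ha']
        by_cases hj' : j = i
        · subst hj'; simp
        · rw [Function.update_of_ne hj']
      exact le_trans hle (Finset.le_sup hj)
    have hfun : (fun j => (a' j - 1)) = Function.update (fun j => a j - 1) i (a i - 2) := by
      funext j
      rw [ha']
      by_cases hj : j = i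
      · subst hj; simp; omega
      · rw [Function.update_of_ne hj, Function.update_of_ne hj]
    have hsum1 : ∑ j, (a' j - 1) = (a i - 2) + ∑ j ∈ Finset.univ.erase i, (a j - 1) := by
      rw [hfun, Finset.sum_update_of_mem (Finset.mem_univ i), Finset.sdiff_singleton_eq_erase]
    have hsum2 : ∑ j, (a j - 1) = (a i - 1) + ∑ j ∈ Finset.univ.erase i, (a j - 1) := by
      rw [Finset.add_sum_erase Finset.univ (fun j => a j - 1) (Finset.mem_univ i)]
    omega
  · push_neg at hcaseA
    have hB : ∀ i : Fin t, ∀ v ∈ A, nustar (adjc c i) (A.erase v) = nustar (adjc c i) A := by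
      intro i v hv
      have h1 := hcaseA v hv i
      have h2 := nustar_mono (adj := adjc c i) (Finset.erase_subset v A)
      omega
    exact countB c hc ht A a ha hν hB

end Main



end CL

/-- Cockayne–Lorimer (diagonal case): if `n ≥ (t+1)p + 2`, then every `t`-coloring of
the edges of `K_n` contains a monochromatic matching of size `p + 1`. -/
theorem stmt_6 (t p n : ℕ) (hn : (t + 1) * p + 2 ≤ n)
    (c : Fin n → Fin n → Fin t) (hc : ∀ x y, c x y = c y x) :
    ∃ i : Fin t, ∃ M : Finset (Fin n × Fin n), PairMatching M ∧ M.card = p + 1 ∧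
      ∀ e ∈ M, c e.1 e.2 = i := by
  by_contra hgoal
  rcases Nat.eq_zero_or_pos t with rfl | ht
  · have hn2 : 0 < n := by omega
    exact (c ⟨0, hn2⟩ ⟨0, hn2⟩).elim0
  · have hν : ∀ i : Fin t, CL.nustar (CL.adjc c i) (Finset.univ : Finset (Fin n)) ≤ 2 * p := by
      intro i
      by_contra hcon
      push_neg at hcon
      obtain ⟨Pm, hPm, hPc⟩ := CL.exists_max_mat (adj := CL.adjc c i) Finset.univ
      obtain ⟨k, hk⟩ := CL.nustar_even (adj := CL.adjc c i) Finset.univ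
      obtain ⟨M0, hmem0, hpm0, hcard0⟩ := CL.exists_pairs hPm
      have hM0 : p + 1 ≤ M0.card := by
        rw [hPc] at hcard0
        omega
      obtain ⟨M1, hsub, hM1card⟩ := Finset.exists_subset_card_eq hM0
      apply hgoal
      refine ⟨i, M1, ⟨fun e he => hpm0.1 e (hsub he),
        fun e he f hf hef => hpm0.2 e (hsub he) f (hsub hf) hef⟩, hM1card, ?_⟩
      intro e he
      exact (hPm (hmem0 e (hsub he))).2.2.2.2
    have hmain := CL.main_bound c hc ht (Finset.univ.card) Finset.univ rfl
      (fun _ => p + 1) (fun _ => Nat.le_add_left 1 p) (fun i => by simpa using hν i)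
    have hsup : (Finset.univ : Finset (Fin t)).sup (fun _ => p + 1) = p + 1 := by
      apply le_antisymm
      · exact Finset.sup_le (fun _ _ => le_refl _)
      · exact Finset.le_sup (f := fun _ : Fin t => p + 1) (Finset.mem_univ (⟨0, ht⟩ : Fin t))
    have hsum : (∑ _i : Fin t, ((p + 1) - 1)) = t * p := by
      simp [Finset.sum_const, Finset.card_univ, Nat.smul_one_eq_cast]
    have hcardn : (Finset.univ : Finset (Fin n)).card = n := by simp
    rw [hcardn, hsup, hsum] at hmain
    have hexp : (t+1)*p = t*p + p := by ring
    omega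
end

section
/- For every t ≥ 2 and p ≥ 1, the partition-vector coloring [p, p, …, p, 2p+1] of K_{(t+1)p+1} (t-1 parts of size p and one part of size 2p+1) contains no monochromatic matching of size p+1. -/
/-- Sharpness of Cockayne–Lorimer: the partition-vector coloring `[p, …, p, 2p+1]`
of `K_((t+1)p+1)` (`t-1` parts of size `p`, one of size `2p+1`; parts given by `π`,
edge `{x,y}` colored `min (π x) (π y)`) contains no monochromatic matching of
size `p + 1`. -/
theorem stmt_7 (t p N : ℕ) (ht : 2 ≤ t) (hp : 1 ≤ p) (hN : N = (t + 1) * p + 1)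
    (π : Fin N → Fin t)
    (hsize : ∀ i : Fin t, i.val < t - 1 →
      (Finset.univ.filter fun v => π v = i).card = p)
    (hlast : ∀ i : Fin t, i.val = t - 1 →
      (Finset.univ.filter fun v => π v = i).card = 2 * p + 1) :
    ¬ ∃ i : Fin t, ∃ M : Finset (Fin N × Fin N), PairMatching M ∧ M.card = p + 1 ∧
        ∀ e ∈ M, min (π e.1) (π e.2) = i := by
  rintro ⟨i, M, ⟨hne, hdisj⟩, hcard, hcol⟩
  have hit : i.val ≤ t - 1 := by have := i.isLt; omega
  rcases lt_or_eq_of_le hit with hlt | heq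
  · -- color i < t-1: each edge has an endpoint in part i, injectively
    set f : Fin N × Fin N → Fin N := fun e => if π e.1 = i then e.1 else e.2 with hf
    have hmem : ∀ e ∈ M, π (f e) = i := by
      intro e he
      have h := hcol e he
      simp only [hf]
      by_cases h1 : π e.1 = i
      · simp [h1]
      · rw [if_neg h1]
        rcases le_total (π e.1) (π e.2) with hle | hle
        · rw [min_eq_left hle] at h; exact absurd h h1
        · rwa [min_eq_right hle] at h
    have hinj : Set.InjOn f M := by
      intro e he e' he' hfe
      by_contra hee
      obtain ⟨h1, h2, h3, h4⟩ := hdisj e he e' he' hee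
      simp only [hf] at hfe
      split_ifs at hfe <;> tauto
    have hle : M.card ≤ (Finset.univ.filter fun v => π v = i).card := by
      apply Finset.card_le_card_of_injOn f _ hinj
      intro e he
      simp [hmem e he]
    rw [hcard, hsize i hlt] at hle
    omega
  · -- color i = t-1: both endpoints in part i
    have hpart : ∀ e ∈ M, π e.1 = i ∧ π e.2 = i := by
      intro e he
      have h := hcol e he
      have h1 : i ≤ π e.1 := h ▸ min_le_left _ _
      have h2 : i ≤ π e.2 := h ▸ min_le_right _ _
      have b1 : (π e.1).val ≤ t - 1 := by have := (π e.1).isLt; omega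
      have b2 : (π e.2).val ≤ t - 1 := by have := (π e.2).isLt; omega
      constructor <;> apply Fin.le_antisymm <;>
        first
        | assumption
        | (show _ ≤ i; rw [Fin.le_def]; omega)
    set A := M.image Prod.fst with hA
    set B := M.image Prod.snd with hB
    have hcardA : A.card = p + 1 := by
      rw [hA, Finset.card_image_of_injOn, hcard]
      intro e he e' he' h
      by_contra hee
      exact (hdisj e he e' he' hee).1 h
    have hcardB : B.card = p + 1 := by
      rw [hB, Finset.card_image_of_injOn, hcard]
      intro e he e' he' h
      by_contra hee
      exact (hdisj e he e' he' hee).2.2.2 h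
    have hdAB : Disjoint A B := by
      rw [Finset.disjoint_left]
      rintro x hxA hxB
      simp only [hA, hB, Finset.mem_image] at hxA hxB
      obtain ⟨e, he, rfl⟩ := hxA
      obtain ⟨e', he', h2⟩ := hxB
      by_cases hee : e = e'
      · subst hee; exact hne e he h2.symm
      · exact (hdisj e he e' he' hee).2.1 h2.symm
    have hsub : A ∪ B ⊆ Finset.univ.filter fun v => π v = i := by
      intro x hx
      simp only [Finset.mem_union, hA, hB, Finset.mem_image] at hx
      simp only [Finset.mem_filter, Finset.mem_univ, true_and]
      rcases hx with ⟨e, he, rfl⟩ | ⟨e, he, rfl⟩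
      · exact (hpart e he).1
      · exact (hpart e he).2
    have := Finset.card_le_card hsub
    rw [Finset.card_union_of_disjoint hdAB, hcardA, hcardB, hlast i heq] at this
    omega
end

section
/- Let t ≥ 3, 1 ≤ s ≤ t, and let H be a fixed connected non-bipartite graph. In every t-coloring of the edges of K_n, at least s(n - R_t(H))/t vertices can be covered by vertex-disjoint monochromatic copies of H using at most s colors in total. -/
/-- The `t`-coloring `c` of the edges of `K_m` contains a monochromatic copy of `H`. -/
def HasMonoCopy {W : Type*} (H : SimpleGraph W) (t m : ℕ)
    (c : Fin m → Fin m → Fin t) : Prop :=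
  ∃ i : Fin t, ∃ f : W → Fin m, Function.Injective f ∧
    ∀ u v, H.Adj u v → c (f u) (f v) = i

-- top-s subset lemma
lemma top_subset {t : ℕ} (g : Fin t → ℕ) : ∀ s : ℕ, s ≤ t →
    ∃ T : Finset (Fin t), T.card = s ∧ ∀ i ∈ T, ∀ j ∉ T, g j ≤ g i := by
  intro s
  induction s with
  | zero => exact fun _ => ⟨∅, rfl, by simp⟩
  | succ s ih =>
    intro hst
    obtain ⟨T, hc, hT⟩ := ih (Nat.le_of_succ_le hst)
    have hne : (Tᶜ : Finset (Fin t)).Nonempty := by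
      rw [← Finset.card_pos, Finset.card_compl, hc]
      simp only [Fintype.card_fin]; omega
    obtain ⟨j₀, hj₀, hmax⟩ := Finset.exists_max_image (Tᶜ) g hne
    have hj₀T : j₀ ∉ T := Finset.mem_compl.mp hj₀
    refine ⟨insert j₀ T, by rw [Finset.card_insert_of_notMem hj₀T, hc], ?_⟩
    intro i hi j hj
    rcases Finset.mem_insert.mp hi with h | h
    · subst h
      exact hmax j (Finset.mem_compl.mpr (fun hjT => hj (Finset.mem_insert_of_mem hjT)))
    · exact hT i h j (fun hjT => hj (Finset.mem_insert_of_mem hjT))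

lemma top_sum {t s : ℕ} (g : Fin t → ℕ) (hst : s ≤ t) (hs : 1 ≤ s) :
    ∃ T : Finset (Fin t), T.card = s ∧ s * (∑ i, g i) ≤ t * ∑ i ∈ T, g i := by
  obtain ⟨T, hc, hT⟩ := top_subset g s hst
  have hTne : T.Nonempty := Finset.card_pos.mp (by omega)
  obtain ⟨i₀, hi₀, hmin⟩ := Finset.exists_min_image T g hTne
  have h1 : ∑ i ∈ Tᶜ, g i ≤ (t - s) * g i₀ := by
    have : ∀ i ∈ (Tᶜ : Finset (Fin t)), g i ≤ g i₀ :=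
      fun i hi => hT i₀ hi₀ i (Finset.mem_compl.mp hi)
    calc ∑ i ∈ Tᶜ, g i ≤ (Tᶜ).card * g i₀ := by
          simpa using Finset.sum_le_card_nsmul _ _ _ this
      _ = (t - s) * g i₀ := by rw [Finset.card_compl, hc]; simp
  have h2 : s * g i₀ ≤ ∑ i ∈ T, g i := by
    calc s * g i₀ = T.card * g i₀ := by rw [hc]
      _ ≤ ∑ i ∈ T, g i := by simpa using Finset.card_nsmul_le_sum T g _ (fun i hi => hmin i hi)
  refine ⟨T, hc, ?_⟩
  have hsplit : ∑ i, g i = ∑ i ∈ T, g i + ∑ i ∈ Tᶜ, g i := (Finset.sum_add_sum_compl T g).symm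
  calc s * ∑ i, g i = s * ∑ i ∈ T, g i + s * ∑ i ∈ Tᶜ, g i := by rw [hsplit]; ring
    _ ≤ s * ∑ i ∈ T, g i + s * ((t - s) * g i₀) := by
        exact Nat.add_le_add_left (Nat.mul_le_mul_left s h1) _
    _ = s * ∑ i ∈ T, g i + (t - s) * (s * g i₀) := by ring
    _ ≤ s * ∑ i ∈ T, g i + (t - s) * ∑ i ∈ T, g i := by
        exact Nat.add_le_add_left (Nat.mul_le_mul_left _ h2) _
    _ = (s + (t - s)) * ∑ i ∈ T, g i := by ring
    _ = t * ∑ i ∈ T, g i := by congr 1; omega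

-- counting lemmas
lemma count_sum_all {α : Type*} {t : ℕ} (col : α → Fin t) (L : List α) :
    ∑ i : Fin t, L.countP (fun p => col p = i) = L.length := by
  induction L with
  | nil => simp
  | cons a l ih =>
    simp only [List.countP_cons, List.length_cons, Finset.sum_add_distrib, ih,
      decide_eq_true_eq]
    congr 1
    simp [Finset.sum_ite_eq]

lemma count_sum_filter {α : Type*} {t : ℕ} [DecidableEq (Fin t)] (col : α → Fin t)
    (T : Finset (Fin t)) (L : List α) :
    (L.filter (fun p => col p ∈ T)).length = ∑ i ∈ T, L.countP (fun p => col p = i) := by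
  induction L with
  | nil => simp
  | cons a l ih =>
    simp only [List.filter_cons, List.countP_cons, Finset.sum_add_distrib, ← ih,
      decide_eq_true_eq]
    by_cases h : col a ∈ T <;> simp [h, Finset.sum_ite_eq' T (col a) (fun _ => 1)]

lemma extract_copies {W : Type*} [Fintype W] [Nonempty W] (H : SimpleGraph W) (t R n : ℕ)
    (hR1 : 1 ≤ R)
    (hRam : ∀ m, R ≤ m → ∀ c : Fin m → Fin m → Fin t,
      (∀ x y, c x y = c y x) → HasMonoCopy H t m c)
    (c : Fin n → Fin n → Fin t) (hc : ∀ x y, c x y = c y x) :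
    ∀ N (S : Finset (Fin n)), S.card ≤ N →
    ∃ L : List ((W → Fin n) × Fin t),
      (∀ p ∈ L, Function.Injective p.1) ∧
      (∀ p ∈ L, ∀ u, p.1 u ∈ S) ∧
      List.Pairwise (fun p q => ∀ u v, p.1 u ≠ q.1 v) L ∧
      (∀ p ∈ L, ∀ u v, H.Adj u v → c (p.1 u) (p.1 v) = p.2) ∧
      S.card < R + L.length * Fintype.card W := by
  intro N
  induction N with
  | zero =>
    intro S hS
    exact ⟨[], by simp, by simp, List.Pairwise.nil, by simp, by omega⟩
  | succ N ihN =>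
    intro S hS
    by_cases hSR : S.card < R
    · exact ⟨[], by simp, by simp, List.Pairwise.nil, by simp, by simpa using hSR⟩
    push_neg at hSR
    set e := S.orderIsoOfFin (rfl : S.card = S.card) with he
    obtain ⟨i, f, hfinj, hfm⟩ := hRam S.card hSR
      (fun x y => c (e x) (e y)) (fun x y => hc _ _)
    set g : W → Fin n := fun u => (e (f u) : Fin n) with hg
    have hginj : Function.Injective g := by
      intro u v huv
      exact hfinj (e.injective (Subtype.coe_injective huv))
    have hgS : ∀ u, g u ∈ S := fun u => (e (f u)).2
    set S' : Finset (Fin n) := S \ Finset.image g Finset.univ with hS'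
    have himsub : Finset.image g Finset.univ ⊆ S := by
      intro x hx
      obtain ⟨u, _, rfl⟩ := Finset.mem_image.mp hx
      exact hgS u
    have himcard : (Finset.image g Finset.univ).card = Fintype.card W := by
      rw [Finset.card_image_of_injective _ hginj, Finset.card_univ]
    have hS'card : S'.card = S.card - Fintype.card W := by
      rw [hS', Finset.card_sdiff_of_subset himsub, himcard]
    have hWle : Fintype.card W ≤ S.card := by
      rw [← himcard]; exact Finset.card_le_card himsub
    have hW1 : 1 ≤ Fintype.card W := Fintype.card_pos
    obtain ⟨L', h1, h2, h3, h4, h5⟩ := ihN S' (by omega)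
    refine ⟨(g, i) :: L', ?_, ?_, ?_, ?_, ?_⟩
    · rintro p hp
      rcases List.mem_cons.mp hp with rfl | hp
      · exact hginj
      · exact h1 p hp
    · rintro p hp u
      rcases List.mem_cons.mp hp with rfl | hp
      · exact hgS u
      · exact (Finset.mem_sdiff.mp (h2 p hp u)).1
    · refine List.Pairwise.cons ?_ h3
      intro q hq u v hgu
      have := (Finset.mem_sdiff.mp (h2 q hq v)).2
      exact this (Finset.mem_image.mpr ⟨u, Finset.mem_univ u, hgu⟩)
    · rintro p hp u v huv
      rcases List.mem_cons.mp hp with rfl | hp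
      · exact hfm u v huv
      · exact h4 p hp u v huv
    · simp only [List.length_cons]
      have : (L'.length + 1) * Fintype.card W = L'.length * Fintype.card W + Fintype.card W := by ring
      omega

/-- Let `t ≥ 3`, `1 ≤ s ≤ t`, and let `H` be a connected non-bipartite graph, with
`R` the `t`-color Ramsey number of `H`. Then in every `t`-coloring of the edges of
`K_n`, at least `s(n - R)/t` vertices can be covered by vertex-disjoint monochromatic
copies of `H` using at most `s` colors in total. -/
theorem stmt_8 {W : Type*} [Fintype W] (H : SimpleGraph W)
    (hconn : H.Connected) (hnb : ¬ H.Colorable 2)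
    (t s R n : ℕ) (ht : 3 ≤ t) (hs1 : 1 ≤ s) (hst : s ≤ t)
    (hR : IsLeast {m : ℕ | ∀ c : Fin m → Fin m → Fin t,
      (∀ x y, c x y = c y x) → HasMonoCopy H t m c} R)
    (c : Fin n → Fin n → Fin t) (hc : ∀ x y, c x y = c y x) :
    ∃ (m : ℕ) (f : Fin m → W → Fin n) (col : Fin m → Fin t),
      (∀ j, Function.Injective (f j)) ∧
      (∀ j j', j ≠ j' → ∀ u v, f j u ≠ f j' v) ∧
      (∀ j, ∀ u v, H.Adj u v → c (f j u) (f j v) = col j) ∧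
      (Finset.univ.image col).card ≤ s ∧
      s * (n - R) ≤ t * (m * Fintype.card W) := by
  have hWne : Nonempty W := hconn.nonempty
  have hR1 : 1 ≤ R := by
    by_contra h
    push_neg at h
    have h0 : R = 0 := by omega
    obtain ⟨i, f, hfinj, _⟩ := hR.1 (fun _ _ => (⟨0, by omega⟩ : Fin t)) (fun _ _ => rfl)
    have := (f (Classical.arbitrary W)).2
    omega
  have hRam : ∀ m, R ≤ m → ∀ c : Fin m → Fin m → Fin t,
      (∀ x y, c x y = c y x) → HasMonoCopy H t m c := by
    intro m hm c' hc'
    obtain ⟨i, f, hfinj, hfm⟩ := hR.1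
      (fun x y => c' (Fin.castLE hm x) (Fin.castLE hm y)) (fun x y => hc' _ _)
    exact ⟨i, fun u => Fin.castLE hm (f u),
      fun u v huv => hfinj (Fin.castLE_injective hm huv), hfm⟩
  obtain ⟨L, hinj, hmem, hpw, hmono, hcount⟩ :=
    extract_copies H t R n hR1 hRam c hc n Finset.univ (by simp)
  have hcount' : n < R + L.length * Fintype.card W := by simpa using hcount
  obtain ⟨T, hTcard, hTsum⟩ := top_sum (fun i => L.countP (fun p => p.2 = i)) hst hs1
  set L' := L.filter (fun p => p.2 ∈ T) with hL'
  have hsub : ∀ p ∈ L', p ∈ L := fun p hp => List.mem_of_mem_filter hp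
  refine ⟨L'.length, fun j => (L'.get j).1, fun j => (L'.get j).2, ?_, ?_, ?_, ?_, ?_⟩
  · exact fun j => hinj _ (hsub _ (L'.get_mem j))
  · intro j j' hjj' u v
    have hpw' : List.Pairwise (fun p q => ∀ u v, p.1 u ≠ q.1 v) L' :=
      hpw.sublist List.filter_sublist
    rw [List.pairwise_iff_get] at hpw'
    rcases lt_or_gt_of_ne hjj' with h | h
    · exact hpw' j j' h u v
    · exact fun e => hpw' j' j h v u e.symm
  · exact fun j u v huv => hmono _ (hsub _ (L'.get_mem j)) u v huv
  · have himsub : Finset.univ.image (fun j => (L'.get j).2) ⊆ T := by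
      intro x hx
      obtain ⟨j, _, rfl⟩ := Finset.mem_image.mp hx
      have := List.of_mem_filter (L'.get_mem j)
      simpa using this
    calc (Finset.univ.image _).card ≤ T.card := Finset.card_le_card himsub
      _ ≤ s := by omega
  · have hk : ∑ i : Fin t, L.countP (fun p => p.2 = i) = L.length :=
      count_sum_all (fun p => p.2) L
    have hm' : L'.length = ∑ i ∈ T, L.countP (fun p => p.2 = i) :=
      count_sum_filter (fun p => p.2) T L
    have h1 : s * L.length ≤ t * L'.length := by rw [hm', ← hk]; exact hTsum
    have h2 : n - R ≤ L.length * Fintype.card W := by omega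
    calc s * (n - R) ≤ s * (L.length * Fintype.card W) := Nat.mul_le_mul_left s h2
      _ = (s * L.length) * Fintype.card W := by ring
      _ ≤ (t * L'.length) * Fintype.card W := Nat.mul_le_mul_right _ h1
      _ = t * (L'.length * Fintype.card W) := by ring
end

section
/- Let t ≥ 3, 1 ≤ s ≤ t, and let H be a connected non-bipartite graph. For every n divisible by t, there is a t-coloring of the edges of K_n such that every collection of vertex-disjoint monochromatic copies of H using at most s colors covers at most sn/t vertices. -/
private def gOrd (t a b : ℕ) : ℕ :=
  if a = 0 then (if b = t - 1 then t - 2 else t - 1) else a - 1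

private def gN (t a b : ℕ) : ℕ := if a < b then gOrd t a b else gOrd t b a

private def ctr (t i : ℕ) : ℕ := if i = t - 1 then 0 else i + 1

private lemma gN_comm (t a b : ℕ) : gN t a b = gN t b a := by
  unfold gN
  rcases lt_trichotomy a b with h | h | h
  · rw [if_pos h, if_neg (by omega)]
  · subst h; rfl
  · rw [if_neg (by omega), if_pos h]

private lemma gN_lt (t a b : ℕ) (ht : 3 ≤ t) (ha : a < t) (hb : b < t) :
    gN t a b < t := by
  unfold gN gOrd; split_ifs <;> omega

private lemma gN_props (t a b : ℕ) (ht : 3 ≤ t) (ha : a < t) (hb : b < t) (hab : a ≠ b) :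
    gN t a b ≠ a ∧ gN t a b ≠ b ∧ ((a = ctr t (gN t a b)) ↔ ¬ b = ctr t (gN t a b)) := by
  unfold gN gOrd ctr; split_ifs <;> omega

private def cFn (t q x y : ℕ) : ℕ :=
  if x / q = y / q then x / q else gN t (x / q) (y / q)

private lemma cFn_comm (t q x y : ℕ) : cFn t q x y = cFn t q y x := by
  unfold cFn
  rcases eq_or_ne (x / q) (y / q) with h | h
  · rw [if_pos h, if_pos h.symm, h]
  · rw [if_neg h, if_neg (Ne.symm h), gN_comm]

private lemma cFn_lt (t q x y : ℕ) (ht : 3 ≤ t) (hq : 0 < q)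
    (hx : x < t * q) (hy : y < t * q) : cFn t q x y < t := by
  have h1 : x / q < t := (Nat.div_lt_iff_lt_mul hq).2 hx
  have h2 : y / q < t := (Nat.div_lt_iff_lt_mul hq).2 hy
  unfold cFn; split_ifs
  · exact h1
  · exact gN_lt t _ _ ht h1 h2

/-- Let `t ≥ 3`, `1 ≤ s ≤ t`, and let `H` be a connected non-bipartite graph. For every
`n` divisible by `t` there is a `t`-coloring of the edges of `K_n` such that every
collection of vertex-disjoint monochromatic copies of `H` using at most `s` colors
covers at most `sn/t` vertices. -/
theorem stmt_9 {W : Type*} [Fintype W] (H : SimpleGraph W)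
    (hconn : H.Connected) (hnb : ¬ H.Colorable 2)
    (t s n : ℕ) (ht : 3 ≤ t) (hs1 : 1 ≤ s) (hst : s ≤ t) (hdvd : t ∣ n) :
    ∃ c : Fin n → Fin n → Fin t, (∀ x y, c x y = c y x) ∧
      ∀ (m : ℕ) (f : Fin m → W → Fin n) (col : Fin m → Fin t),
        (∀ j, Function.Injective (f j)) →
        (∀ j j', j ≠ j' → ∀ u v, f j u ≠ f j' v) →
        (∀ j, ∀ u v, H.Adj u v → c (f j u) (f j v) = col j) →
        (Finset.univ.image col).card ≤ s →
        t * (m * Fintype.card W) ≤ s * n := by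
  classical
  obtain ⟨q, rfl⟩ := hdvd
  have hW : Nonempty W := hconn.nonempty
  rcases Nat.eq_zero_or_pos q with rfl | hq
  · refine ⟨fun x _ => x.elim0, fun x => x.elim0, ?_⟩
    intro m f col _ _ _ _
    have hm : m = 0 := by
      by_contra h
      exact (f ⟨0, Nat.pos_of_ne_zero h⟩ (Classical.arbitrary W)).elim0
    subst hm; simp
  · refine ⟨fun x y => ⟨cFn t q x.val y.val, cFn_lt t q _ _ ht hq x.isLt y.isLt⟩, ?_, ?_⟩
    · intro x y; exact Fin.ext (cFn_comm t q x.val y.val)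
    intro m f col hinj hdisj hcol hcard
    -- Step 1: every copy lies entirely inside the part indexed by its color.
    have key : ∀ j u, (f j u).val / q = (col j).val := by
      intro j
      set i := (col j).val with hi
      have hedge : ∀ u v, H.Adj u v → cFn t q (f j u).val (f j v).val = i :=
        fun u v h => congrArg Fin.val (hcol j u v h)
      by_cases hA : ∀ u v, H.Adj u v → (f j u).val / q ≠ (f j v).val / q
      · exfalso
        apply hnb
        refine ⟨SimpleGraph.Coloring.mk
          (fun u => if (f j u).val / q = ctr t i then (0 : Fin 2) else 1) ?_⟩
        intro u v huv
        have hne := hA u v huv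
        have hg : gN t ((f j u).val / q) ((f j v).val / q) = i := by
          have h := hedge u v huv
          unfold cFn at h
          rwa [if_neg hne] at h
        have hP1 : (f j u).val / q < t := (Nat.div_lt_iff_lt_mul hq).2 (f j u).isLt
        have hP2 : (f j v).val / q < t := (Nat.div_lt_iff_lt_mul hq).2 (f j v).isLt
        have h3 := (gN_props t _ _ ht hP1 hP2 hne).2.2
        rw [hg] at h3
        split_ifs with h1 h2 h2
        · exact absurd h2 (h3.1 h1)
        · decide
        · decide
        · exact absurd (h3.2 h2) h1
      · push_neg at hA
        obtain ⟨u0, v0, huv0, heq0⟩ := hA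
        have h0 : (f j u0).val / q = i := by
          have h := hedge u0 v0 huv0
          unfold cFn at h
          rwa [if_pos heq0] at h
        have step : ∀ {u v : W}, H.Adj u v → (f j u).val / q = i → (f j v).val / q = i := by
          intro u v huv hu
          by_cases h : (f j u).val / q = (f j v).val / q
          · omega
          · exfalso
            have hg : gN t ((f j u).val / q) ((f j v).val / q) = i := by
              have h' := hedge u v huv
              unfold cFn at h'
              rwa [if_neg h] at h'
            have hP1 : (f j u).val / q < t := (Nat.div_lt_iff_lt_mul hq).2 (f j u).isLt
            have hP2 : (f j v).val / q < t := (Nat.div_lt_iff_lt_mul hq).2 (f j v).isLt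
            exact (gN_props t _ _ ht hP1 hP2 h).1 (by rw [hg, hu])
        have walkprop : ∀ {a b : W} (_ : H.Walk a b),
            (f j a).val / q = i → (f j b).val / q = i := by
          intro a b w
          induction w with
          | nil => exact id
          | cons h p ih => exact fun ha => ih (step h ha)
        intro u
        exact walkprop ((hconn u0 u).some) h0
    -- Step 2: counting
    have fibcard : ∀ v : Fin t,
        (Finset.univ.filter (fun j : Fin m => col j = v)).card * Fintype.card W ≤ q := by
      intro v
      set S := Finset.univ.filter (fun j : Fin m => col j = v) with hS
      have hinj2 : Fintype.card (↥S × W) ≤ Fintype.card (Fin q) := by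
        apply Fintype.card_le_of_injective
          (fun p => (⟨(f p.1.val p.2).val % q, Nat.mod_lt _ hq⟩ : Fin q))
        rintro ⟨⟨j, hj⟩, u⟩ ⟨⟨j', hj'⟩, u'⟩ hpq
        have hmod : (f j u).val % q = (f j' u').val % q := congrArg Fin.val hpq
        have hdiv : (f j u).val / q = (f j' u').val / q := by
          rw [key j u, key j' u']
          simp only [hS, Finset.mem_filter] at hj hj'
          rw [hj.2, hj'.2]
        have hval : f j u = f j' u' := by
          apply Fin.ext
          have e1 := Nat.div_add_mod (f j u).val q
          have e2 := Nat.div_add_mod (f j' u').val q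
          rw [hdiv, hmod] at e1
          omega
        rcases eq_or_ne j j' with rfl | hne
        · simp only [Prod.mk.injEq, Subtype.mk.injEq]
          exact ⟨trivial, hinj j hval⟩
        · exact absurd hval (hdisj j j' hne u u')
      calc S.card * Fintype.card W = Fintype.card (↥S × W) := by
            rw [Fintype.card_prod, Fintype.card_coe]
        _ ≤ Fintype.card (Fin q) := hinj2
        _ = q := Fintype.card_fin q
    have hmsum : m = ∑ v ∈ Finset.univ.image col,
        (Finset.univ.filter (fun j : Fin m => col j = v)).card := by
      have h := Finset.card_eq_sum_card_fiberwise
        (f := col) (s := (Finset.univ : Finset (Fin m))) (t := Finset.univ.image col)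
        (fun x _ => Finset.mem_image_of_mem col (Finset.mem_univ x))
      simpa using h
    have hbound : m * Fintype.card W ≤ s * q := by
      calc m * Fintype.card W
          = ∑ v ∈ Finset.univ.image col,
            (Finset.univ.filter (fun j : Fin m => col j = v)).card * Fintype.card W := by
            rw [← Finset.sum_mul, ← hmsum]
        _ ≤ ∑ _v ∈ Finset.univ.image col, q := Finset.sum_le_sum (fun v _ => fibcard v)
        _ = (Finset.univ.image col).card * q := by rw [Finset.sum_const, smul_eq_mul]
        _ ≤ s * q := Nat.mul_le_mul_right q hcard
    calc t * (m * Fintype.card W) ≤ t * (s * q) := Nat.mul_le_mul_left t hbound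
      _ = s * (t * q) := by ring
end

section
/- For every graph G, the deficiency of G (the number of vertices left uncovered by a maximum matching) equals the maximum over all subsets X of V(G) of c_o(G - X) - |X|, where c_o denotes the number of connected components with an odd number of vertices. -/
open Finset
set_option linter.unusedSectionVars false
set_option linter.unusedVariables false


/-- `M` is a matching in `G`, given by pairs of endpoints. -/
def GraphMatching {V : Type*} (G : SimpleGraph V) (M : Finset (V × V)) : Prop :=
  (∀ e ∈ M, G.Adj e.1 e.2) ∧
  ∀ e ∈ M, ∀ f ∈ M, e ≠ f → e.1 ≠ f.1 ∧ e.1 ≠ f.2 ∧ e.2 ≠ f.1 ∧ e.2 ≠ f.2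

/-- The number of odd connected components of `G - X`. -/
noncomputable def oddCompCount {V : Type*} [DecidableEq V] (G : SimpleGraph V)
    (X : Finset V) : ℕ :=
  Nat.card {C : (G.induce {v : V | v ∉ X}).ConnectedComponent // Odd (Nat.card C.supp)}

namespace BT

variable {V : Type*} [Fintype V] [DecidableEq V] (G : SimpleGraph V)

/-- partner-function matchings within vertex set `S`. -/
def PM (S : Finset V) (m : V → Option V) : Prop :=
  ∀ ⦃v w⦄, m v = some w → G.Adj v w ∧ m w = some v ∧ v ∈ S

noncomputable def msupp (m : V → Option V) : Finset V :=
  Finset.univ.filter (fun v => m v ≠ none)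

variable {G}

lemma mem_msupp {m : V → Option V} {v : V} : v ∈ msupp m ↔ m v ≠ none := by
  simp [msupp]

lemma PM.mono {S T : Finset V} {m} (h : PM G S m) (hST : S ⊆ T) : PM G T m :=
  fun v w hvw => ⟨(h hvw).1, (h hvw).2.1, hST (h hvw).2.2⟩

lemma PM.ne {S : Finset V} {m} (h : PM G S m) {v w : V} (hvw : m v = some w) : v ≠ w :=
  (h hvw).1.ne

lemma PM.symm {S : Finset V} {m} (h : PM G S m) {v w : V} (hvw : m v = some w) :
    m w = some v := (h hvw).2.1

lemma PM.inj {S : Finset V} {m} (h : PM G S m) {v w x : V} (hv : m v = some x)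
    (hw : m w = some x) : v = w := by
  have h1 := h.symm hv
  have h2 := h.symm hw
  rw [h1] at h2
  exact Option.some_inj.mp h2

lemma PM.msupp_subset {S : Finset V} {m} (h : PM G S m) : msupp m ⊆ S := by
  intro v hv
  rw [mem_msupp] at hv
  obtain ⟨w, hw⟩ := Option.ne_none_iff_exists'.mp hv
  exact (h hw).2.2

/-- sets closed under a matching have even cardinality -/
lemma even_card_closed {S : Finset V} {m} (hm : PM G S m) :
    ∀ A : Finset V, (∀ v ∈ A, ∃ w, m v = some w ∧ w ∈ A) → Even A.card := by
  intro A
  induction A using Finset.strongInduction with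
  | _ A ih =>
    intro hA
    rcases A.eq_empty_or_nonempty with rfl | ⟨v, hv⟩
    · simp
    obtain ⟨w, hw, hwA⟩ := hA v hv
    have hvw : v ≠ w := hm.ne hw
    have hss : A \ {v, w} ⊂ A :=
      Finset.sdiff_ssubset (by simp [Finset.insert_subset_iff, hv, hwA]) (by simp)
    have hA' : ∀ x ∈ A \ {v, w}, ∃ y, m x = some y ∧ y ∈ A \ {v, w} := by
      intro x hx
      simp only [Finset.mem_sdiff, Finset.mem_insert, Finset.mem_singleton, not_or] at hx
      obtain ⟨hxA, hxv, hxw⟩ := hx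
      obtain ⟨y, hy, hyA⟩ := hA x hxA
      refine ⟨y, hy, ?_⟩
      simp only [Finset.mem_sdiff, Finset.mem_insert, Finset.mem_singleton, not_or]
      refine ⟨hyA, ?_, ?_⟩
      · rintro rfl
        exact hxw (Option.some_inj.mp ((hm.symm hy).symm.trans hw))
      · rintro rfl
        exact hxv (Option.some_inj.mp ((hm.symm hy).symm.trans (hm.symm hw)))
    have hcard : (A \ {v, w}).card = A.card - 2 := by
      rw [Finset.card_sdiff_of_subset (by simp [Finset.insert_subset_iff, hv, hwA])]
      simp [Finset.card_insert_of_notMem, hvw]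
    have := ih _ hss hA'
    rw [hcard] at this
    have h2 : 2 ≤ A.card := by
      have : ({v, w} : Finset V) ⊆ A := by simp [Finset.insert_subset_iff, hv, hwA]
      calc 2 = ({v, w} : Finset V).card := by simp [hvw]
        _ ≤ A.card := Finset.card_le_card this
    obtain ⟨k, hk⟩ := this
    exact ⟨k + 1, by omega⟩
variable (G)

/-- number of vertices covered by the best matching within `S` -/
noncomputable def cov (S : Finset V) : ℕ :=
  sSup {k | ∃ m, PM G S m ∧ (msupp m).card = k}

variable {G}

lemma covSet_zero_mem (S : Finset V) : 0 ∈ {k | ∃ m, PM G S m ∧ (msupp m).card = k} := by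
  refine ⟨fun _ => none, fun v w h => by simp at h, ?_⟩
  simp [msupp]

lemma covSet_bdd (S : Finset V) :
    BddAbove {k | ∃ m, PM G S m ∧ (msupp m).card = k} := by
  refine ⟨Fintype.card V, fun k hk => ?_⟩
  obtain ⟨m, hm, rfl⟩ := hk
  exact Finset.card_le_univ _

lemma cov_spec (S : Finset V) : ∃ m, PM G S m ∧ (msupp m).card = cov G S :=
  Nat.sSup_mem ⟨0, covSet_zero_mem S⟩ (covSet_bdd S)

lemma le_cov {S : Finset V} {m} (hm : PM G S m) : (msupp m).card ≤ cov G S :=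
  le_csSup (covSet_bdd S) ⟨m, hm, rfl⟩

lemma cov_le_card (S : Finset V) : cov G S ≤ S.card := by
  obtain ⟨m, hm, hc⟩ := cov_spec (G := G) S
  rw [← hc]
  exact Finset.card_le_card hm.msupp_subset

lemma even_msupp {S : Finset V} {m} (hm : PM G S m) : Even (msupp m).card := by
  apply even_card_closed hm
  intro v hv
  rw [mem_msupp] at hv
  obtain ⟨w, hw⟩ := Option.ne_none_iff_exists'.mp hv
  exact ⟨w, hw, mem_msupp.mpr (by rw [hm.symm hw]; simp)⟩

lemma even_cov (S : Finset V) : Even (cov G S) := by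
  obtain ⟨m, hm, hc⟩ := cov_spec (G := G) S
  rw [← hc]
  exact even_msupp hm
variable (G)

/-- the number of odd components of the graph induced on a set -/
noncomputable def ocS (s : Set V) : ℕ :=
  Nat.card {C : (G.induce s).ConnectedComponent // Odd (Nat.card C.supp)}

/-- the support of a connected component of `G.induce ↑T`, as a `Finset V` -/
noncomputable def suppF (T : Finset V) (C : (G.induce (↑T : Set V)).ConnectedComponent) :
    Finset V := (Set.toFinite (Subtype.val '' C.supp)).toFinset

variable {G}

lemma mem_suppF {T : Finset V} {C : (G.induce (↑T : Set V)).ConnectedComponent} {v : V} :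
    v ∈ suppF G T C ↔
      ∃ h : v ∈ (↑T : Set V), (G.induce (↑T : Set V)).connectedComponentMk ⟨v, h⟩ = C := by
  simp only [suppF, Set.Finite.mem_toFinset, Set.mem_image,
    SimpleGraph.ConnectedComponent.mem_supp_iff]
  constructor
  · rintro ⟨⟨x, hx⟩, hC, rfl⟩
    exact ⟨hx, hC⟩
  · rintro ⟨h, hC⟩
    exact ⟨⟨v, h⟩, hC, rfl⟩

lemma card_suppF {T : Finset V} {C : (G.induce (↑T : Set V)).ConnectedComponent} :
    (suppF G T C).card = Nat.card C.supp := by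
  classical
  rw [suppF, Set.Finite.card_toFinset]
  rw [← Nat.card_eq_fintype_card, Nat.card_image_of_injective Subtype.val_injective]

lemma mk_eq_of_adj {T : Finset V} {v w : V} (hv : v ∈ (↑T : Set V)) (hw : w ∈ (↑T : Set V))
    (h : G.Adj v w) :
    (G.induce (↑T : Set V)).connectedComponentMk ⟨v, hv⟩ =
      (G.induce (↑T : Set V)).connectedComponentMk ⟨w, hw⟩ := by
  apply SimpleGraph.ConnectedComponent.sound
  exact SimpleGraph.Adj.reachable (by simpa using h)

/-- counting odd components by picking representatives in a finset `W` -/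
lemma ocS_le {T W : Finset V}
    (hpick : ∀ C : (G.induce (↑T : Set V)).ConnectedComponent, Odd (Nat.card C.supp) →
      ∃ v ∈ W, ∃ h : v ∈ (↑T : Set V),
        (G.induce (↑T : Set V)).connectedComponentMk ⟨v, h⟩ = C) :
    ocS G (↑T : Set V) ≤ W.card := by
  classical
  have : ∀ C : {C : (G.induce (↑T : Set V)).ConnectedComponent // Odd (Nat.card C.supp)},
      ∃ v : W, ∃ h : (v : V) ∈ (↑T : Set V),
        (G.induce (↑T : Set V)).connectedComponentMk ⟨v, h⟩ = C.1 := by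
    rintro ⟨C, hC⟩
    obtain ⟨v, hvW, h, hmk⟩ := hpick C hC
    exact ⟨⟨v, hvW⟩, h, hmk⟩
  choose f hf1 hf2 using this
  have hinj : Function.Injective f := by
    intro C1 C2 hf
    have h1 := hf2 C1
    have h2 := hf2 C2
    have hv : (⟨↑(f C1), hf1 C1⟩ : ↥(↑T : Set V)) = ⟨↑(f C2), hf1 C2⟩ :=
      Subtype.ext (show ((f C1 : V)) = (f C2 : V) from congrArg Subtype.val hf)
    apply Subtype.ext
    rw [← h1, ← h2]
    exact congrArg _ hv
  calc ocS G (↑T : Set V) ≤ Nat.card W := Nat.card_le_card_of_injective f hinj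
    _ = W.card := by simp [Nat.card_eq_fintype_card]

/-- every odd component of `G[T]` has a vertex that is unmatched or matched outside `T`. -/
lemma odd_comp_escape {S T : Finset V} {m} (hm : PM G S m) (hTS : T ⊆ S)
    (C : (G.induce (↑T : Set V)).ConnectedComponent) (hC : Odd (Nat.card C.supp)) :
    ∃ v, ∃ h : v ∈ (↑T : Set V),
      (G.induce (↑T : Set V)).connectedComponentMk ⟨v, h⟩ = C ∧
      (m v = none ∨ ∃ x, m v = some x ∧ x ∉ T) := by
  by_contra hcon
  push_neg at hcon
  have hclosed : ∀ v ∈ suppF G T C, ∃ w, m v = some w ∧ w ∈ suppF G T C := by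
    intro v hv
    obtain ⟨h, hmk⟩ := mem_suppF.mp hv
    obtain ⟨hne, hall⟩ := hcon v h hmk
    obtain ⟨w, hw⟩ := Option.ne_none_iff_exists'.mp hne
    have hwT : w ∈ T := hall w hw
    refine ⟨w, hw, mem_suppF.mpr ⟨hwT, ?_⟩⟩
    rw [← hmk]
    exact (mk_eq_of_adj hwT h (hm hw).1.symm)
  have := even_card_closed hm _ hclosed
  rw [card_suppF] at this
  exact (Nat.not_even_iff_odd.mpr hC) this

/-- The core counting inequality (easy direction). -/
lemma count_main {S X : Finset V} {m} (hm : PM G S m) (hX : X ⊆ S) :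
    ocS G (↑(S \ X) : Set V) + (msupp m).card ≤ S.card + X.card := by
  classical
  set T := S \ X with hT
  have hTS : T ⊆ S := Finset.sdiff_subset
  set W : Finset V := T.filter (fun v => m v = none ∨ ∃ x, m v = some x ∧ x ∉ T) with hW
  have h1 : ocS G (↑T : Set V) ≤ W.card := by
    apply ocS_le
    intro C hC
    obtain ⟨v, h, hmk, hprop⟩ := odd_comp_escape hm hTS C hC
    exact ⟨v, Finset.mem_filter.mpr ⟨by simpa using h, hprop⟩, h, hmk⟩
  set A : Finset V := S \ msupp m with hA
  set B : Finset V := T.filter (fun v => ∃ x, m v = some x ∧ x ∈ X) with hB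
  have hWAB : W ⊆ A ∪ B := by
    intro v hv
    obtain ⟨hvT, hprop⟩ := Finset.mem_filter.mp hv
    rcases hprop with hnone | ⟨x, hx, hxT⟩
    · apply Finset.mem_union_left
      exact Finset.mem_sdiff.mpr ⟨hTS hvT, by simp [mem_msupp, hnone]⟩
    · apply Finset.mem_union_right
      have hxS : x ∈ S := (hm ((hm hx).2.1)).2.2
      have hxX : x ∈ X := by
        by_contra hxX
        exact hxT (Finset.mem_sdiff.mpr ⟨hxS, hxX⟩)
      exact Finset.mem_filter.mpr ⟨hvT, x, hx, hxX⟩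
  have hBX : B.card ≤ X.card := by
    apply Finset.card_le_card_of_injOn (fun v => (m v).getD v)
    · intro v hv
      obtain ⟨hvT, x, hx, hxX⟩ := Finset.mem_filter.mp hv
      simpa [hx] using hxX
    · intro v hv v' hv' heq
      obtain ⟨_, x, hx, _⟩ := Finset.mem_filter.mp hv
      obtain ⟨_, x', hx', _⟩ := Finset.mem_filter.mp hv'
      simp only [hx, hx', Option.getD_some] at heq
      subst heq
      exact hm.inj hx hx'
  have hAcard : A.card + (msupp m).card = S.card := by
    rw [hA, Finset.card_sdiff_add_card_eq_card hm.msupp_subset]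
  have hWcard := Finset.card_le_card hWAB
  have := Finset.card_union_le A B
  omega
/-! ### Alternating walks -/

variable (m m' : V → Option V) (t : V) in
/-- the alternating walk starting at `t`, using `m` on even steps and `m'` on odd steps -/
noncomputable def wseq : ℕ → Option V
  | 0 => some t
  | (n+1) => (wseq n).bind (fun x => if n % 2 = 0 then m x else m' x)

lemma wstep {m m' : V → Option V} {t : V} {n : ℕ} {y : V} :
    wseq m m' t (n+1) = some y ↔
      ∃ x, wseq m m' t n = some x ∧ (if n % 2 = 0 then m x else m' x) = some y := by
  simp [wseq, Option.bind_eq_some_iff]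

variable {S : Finset V} {m m' : V → Option V} {t : V}

/-- the alternating walk never repeats a vertex -/
lemma winj (hm : PM G S m) (hm' : PM G S m') (hm't : m' t = none) :
    ∀ j, ∀ i, i < j → ∀ x, wseq m m' t i = some x → wseq m m' t j = some x → False := by
  intro j
  induction j using Nat.strong_induction_on with
  | _ j ih =>
  intro i hij x hai haj
  obtain ⟨k, rfl⟩ : ∃ k, j = k + 1 := ⟨j - 1, by omega⟩
  have haj2 := haj
  rw [wstep] at haj
  obtain ⟨p, hp, hstep⟩ := haj
  by_cases hi0 : i = 0
  · subst hi0
    have hxt : t = x := by simpa [wseq] using hai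
    subst hxt
    by_cases hk : k % 2 = 0
    · rw [if_pos hk] at hstep
      have h1 : wseq m m' t 1 = some p := by
        rw [wstep]
        exact ⟨t, rfl, by rw [if_pos rfl]; exact hm.symm hstep⟩
      rcases Nat.lt_or_ge k 1 with hk1 | hk1
      · -- k = 0
        have hk0 : k = 0 := by omega
        subst hk0
        have hpt : t = p := by simpa [wseq] using hp
        subst hpt
        exact hm.ne hstep rfl
      · -- k ≥ 1, and k even so k ≥ 2
        have hk2 : 1 < k := by omega
        exact ih k (by omega) 1 hk2 p h1 hp
    · rw [if_neg hk] at hstep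
      have := hm'.symm hstep
      rw [hm't] at this
      exact nomatch this
  · obtain ⟨l, rfl⟩ : ∃ l, i = l + 1 := ⟨i - 1, by omega⟩
    have hai2 := hai
    rw [wstep] at hai
    obtain ⟨q, hq, hstepi⟩ := hai
    by_cases hpar : l % 2 = k % 2
    · have hpq : q = p := by
        by_cases hl : l % 2 = 0
        · rw [if_pos hl] at hstepi
          rw [if_pos (by omega : k % 2 = 0)] at hstep
          exact hm.inj hstepi hstep
        · rw [if_neg hl] at hstepi
          rw [if_neg (by omega : ¬ k % 2 = 0)] at hstep
          exact hm'.inj hstepi hstep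
      exact ih k (by omega) l (by omega) p (hpq ▸ hq) hp
    · -- opposite parities
      have hout : wseq m m' t (l+2) = some p := by
        rw [wstep]
        refine ⟨x, hai2, ?_⟩
        by_cases hk : k % 2 = 0
        · rw [if_pos (by omega : (l+1) % 2 = 0)]
          rw [if_pos hk] at hstep
          exact hm.symm hstep
        · rw [if_neg (by omega : ¬ (l+1) % 2 = 0)]
          rw [if_neg hk] at hstep
          exact hm'.symm hstep
      rcases Nat.lt_trichotomy (l+2) k with h2 | h2 | h2
      · exact ih k (by omega) (l+2) h2 p hout hp
      · exact hpar (by omega)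
      · -- l + 2 > k and l + 1 < k + 1 forces k = l + 1; then p = x
        have hkl : k = l + 1 := by omega
        subst hkl
        have hpx : p = x := by
          rw [hp] at hai2
          exact Option.some_inj.mp hai2
        subst hpx
        by_cases hk : (l+1) % 2 = 0
        · rw [if_pos hk] at hstep
          exact hm.ne hstep rfl
        · rw [if_neg hk] at hstep
          exact hm'.ne hstep rfl

lemma wseq_exists_none (hm : PM G S m) (hm' : PM G S m') (hm't : m' t = none) :
    ∃ n, wseq m m' t n = none := by
  by_contra h
  push_neg at h
  choose f hf using fun n => Option.ne_none_iff_exists'.mp (h n)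
  obtain ⟨i, j, hne, heq⟩ := Finite.exists_ne_map_eq_of_infinite f
  rcases Nat.lt_or_ge i j with hij | hij
  · exact winj hm hm' hm't j i hij (f i) (hf i) (heq ▸ hf j)
  · have hji : j < i := by omega
    exact winj hm hm' hm't i j hji (f j) (hf j) (heq ▸ hf i)
/-- The key exchange lemma: given a maximum matching `m'` missing `t` and a matching `m`
covering `t`, we can find a matching of the same size as `m` missing `t`, and missing every
`m`-missed vertex except possibly one (`z`). -/
lemma exchange (hm : PM G S m) (hm' : PM G S m') (hmt : m t ≠ none) (hm't : m' t = none)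
    (hmax' : ∀ mm, PM G S mm → (msupp mm).card ≤ (msupp m').card) :
    ∃ N z, PM G S N ∧ (msupp N).card = (msupp m).card ∧ N t = none ∧
      (∀ x, m x = none → x ≠ z → N x = none) := by
  classical
  obtain hex := wseq_exists_none hm hm' hm't
  set L := Nat.find hex with hLdef
  have hL : wseq m m' t L = none := Nat.find_spec hex
  have hLmin : ∀ k, k < L → wseq m m' t k ≠ none := fun k hk => Nat.find_min hex hk
  have h0 : wseq m m' t 0 = some t := rfl
  have h1v : wseq m m' t 1 = m t := by
    show (wseq m m' t 0).bind _ = m t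
    rw [h0]
    simp
  have hL2 : 2 ≤ L := by
    have hne0 : L ≠ 0 := by
      intro h
      rw [h, h0] at hL
      exact nomatch hL
    have hne1 : L ≠ 1 := by
      intro h
      rw [h, h1v] at hL
      exact hmt hL
    omega
  obtain ⟨z, hz⟩ : ∃ z, wseq m m' t (L-1) = some z :=
    Option.ne_none_iff_exists'.mp (hLmin (L-1) (by omega))
  have hfail : (if (L-1) % 2 = 0 then m z else m' z) = none := by
    have h' : wseq m m' t ((L-1)+1) = none := by
      rw [(by omega : (L-1)+1 = L)]
      exact hL
    rw [show wseq m m' t ((L-1)+1) =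
      (wseq m m' t (L-1)).bind (fun x => if (L-1) % 2 = 0 then m x else m' x) from rfl, hz] at h'
    simpa using h'
  set R : Finset V := (Finset.range L).biUnion (fun i => (wseq m m' t i).toFinset) with hR
  have hmemR : ∀ x, x ∈ R ↔ ∃ i, i < L ∧ wseq m m' t i = some x := by
    intro x
    simp [hR, Option.mem_toFinset, Option.mem_def, eq_comm]
  have htR : t ∈ R := (hmemR t).mpr ⟨0, by omega, h0⟩
  have hzR : z ∈ R := (hmemR z).mpr ⟨L-1, by omega, hz⟩
  have hzt : z ≠ t := by
    intro h
    subst h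
    exact winj hm hm' hm't (L-1) 0 (by omega) z h0 hz
  -- closure of R under partners
  have hclm : ∀ x y, x ∈ R → m x = some y → y ∈ R := by
    intro x y hxR hxy
    obtain ⟨i, hiL, hi⟩ := (hmemR x).mp hxR
    by_cases hpar : i % 2 = 0
    · have hnext : wseq m m' t (i+1) = some y := by
        rw [wstep]
        exact ⟨x, hi, by rw [if_pos hpar]; exact hxy⟩
      have hne : i + 1 ≠ L := by
        intro h
        rw [h, hL] at hnext
        exact nomatch hnext
      exact (hmemR y).mpr ⟨i+1, by omega, hnext⟩
    · obtain ⟨l, rfl⟩ : ∃ l, i = l + 1 := ⟨i - 1, by omega⟩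
      rw [wstep] at hi
      obtain ⟨q, hq, hstep⟩ := hi
      rw [if_pos (by omega : l % 2 = 0)] at hstep
      have hyq : y = q := hm.inj (hm.symm hxy) hstep
      subst hyq
      exact (hmemR y).mpr ⟨l, by omega, hq⟩
  have hclm' : ∀ x y, x ∈ R → m' x = some y → y ∈ R := by
    intro x y hxR hxy
    obtain ⟨i, hiL, hi⟩ := (hmemR x).mp hxR
    by_cases hpar : i % 2 = 0
    · rcases Nat.eq_zero_or_pos i with hi0 | hi0
      · subst hi0
        have hxt : x = t := (Option.some_inj.mp (h0.symm.trans hi)).symm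
        subst hxt
        rw [hm't] at hxy
        exact nomatch hxy
      · obtain ⟨l, rfl⟩ : ∃ l, i = l + 1 := ⟨i - 1, by omega⟩
        rw [wstep] at hi
        obtain ⟨q, hq, hstep⟩ := hi
        rw [if_neg (by omega : ¬ l % 2 = 0)] at hstep
        have hyq : y = q := hm'.inj (hm'.symm hxy) hstep
        subst hyq
        exact (hmemR y).mpr ⟨l, by omega, hq⟩
    · have hnext : wseq m m' t (i+1) = some y := by
        rw [wstep]
        exact ⟨x, hi, by rw [if_neg hpar]; exact hxy⟩
      have hne : i + 1 ≠ L := by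
        intro h
        rw [h, hL] at hnext
        exact nomatch hnext
      exact (hmemR y).mpr ⟨i+1, by omega, hnext⟩
  -- coverage
  have hcovm : ∀ i x, i < L → wseq m m' t i = some x → (i % 2 = 1 ∨ i + 1 < L) →
      m x ≠ none := by
    intro i x hiL hi hcase
    by_cases hpar : i % 2 = 0
    · have hlt : i + 1 < L := by omega
      intro hmx
      apply hLmin (i+1) hlt
      rw [show wseq m m' t (i+1) =
        (wseq m m' t i).bind (fun x => if i % 2 = 0 then m x else m' x) from rfl, hi]
      simp [hpar, hmx]
    · obtain ⟨l, rfl⟩ : ∃ l, i = l + 1 := ⟨i - 1, by omega⟩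
      rw [wstep] at hi
      obtain ⟨q, hq, hstep⟩ := hi
      rw [if_pos (by omega : l % 2 = 0)] at hstep
      rw [hm.symm hstep]
      simp
  have hcovm' : ∀ i x, i < L → wseq m m' t i = some x →
      ((i % 2 = 0 ∧ i ≠ 0) ∨ (i % 2 = 1 ∧ i + 1 < L)) → m' x ≠ none := by
    intro i x hiL hi hcase
    by_cases hpar : i % 2 = 0
    · have hi0 : i ≠ 0 := by
        rcases hcase with ⟨_, h⟩ | ⟨h, _⟩
        · exact h
        · omega
      obtain ⟨l, rfl⟩ : ∃ l, i = l + 1 := ⟨i - 1, by omega⟩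
      rw [wstep] at hi
      obtain ⟨q, hq, hstep⟩ := hi
      rw [if_neg (by omega : ¬ l % 2 = 0)] at hstep
      rw [hm'.symm hstep]
      simp
    · have hlt : i + 1 < L := by
        rcases hcase with ⟨h, _⟩ | ⟨_, h⟩
        · omega
        · exact h
      intro hmx
      apply hLmin (i+1) hlt
      rw [show wseq m m' t (i+1) =
        (wseq m m' t i).bind (fun x => if i % 2 = 0 then m x else m' x) from rfl, hi]
      simp [hpar, hmx]
  by_cases hA : (L-1) % 2 = 0
  · -- the walk ends with a failed m-step: swap within R
    have hmz : m z = none := by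
      rw [if_pos hA] at hfail
      exact hfail
    set N : V → Option V := fun x => if x ∈ R then m' x else m x with hN
    have hNPM : PM G S N := by
      intro x y hxy
      by_cases hx : x ∈ R
      · simp only [hN, if_pos hx] at hxy
        have hyR := hclm' x y hx hxy
        refine ⟨(hm' hxy).1, ?_, (hm' hxy).2.2⟩
        show (if y ∈ R then m' y else m y) = some x
        rw [if_pos hyR]
        exact hm'.symm hxy
      · simp only [hN, if_neg hx] at hxy
        have hyR : y ∉ R := fun hyR => hx (hclm y x hyR (hm.symm hxy))
        refine ⟨(hm hxy).1, ?_, (hm hxy).2.2⟩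
        show (if y ∈ R then m' y else m y) = some x
        rw [if_neg hyR]
        exact hm.symm hxy
    have hsup : msupp N = (msupp m' ∩ R) ∪ (msupp m \ R) := by
      ext x
      simp only [mem_msupp, Finset.mem_union, Finset.mem_inter, Finset.mem_sdiff, hN]
      by_cases hx : x ∈ R <;> simp [hx, mem_msupp]
    have hc1 : msupp m ∩ R = R.erase z := by
      ext x
      simp only [Finset.mem_inter, Finset.mem_erase, mem_msupp]
      constructor
      · rintro ⟨hxm, hxR⟩
        refine ⟨?_, hxR⟩
        rintro rfl
        exact hxm hmz
      · rintro ⟨hxz, hxR⟩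
        obtain ⟨i, hiL, hi⟩ := (hmemR x).mp hxR
        have hiL1 : i ≠ L - 1 := by
          intro h
          subst h
          exact hxz (Option.some_inj.mp (hi.symm.trans hz))
        exact ⟨hcovm i x hiL hi (Or.inr (by omega)), hxR⟩
    have hc2 : msupp m' ∩ R = R.erase t := by
      ext x
      simp only [Finset.mem_inter, Finset.mem_erase, mem_msupp]
      constructor
      · rintro ⟨hxm, hxR⟩
        refine ⟨?_, hxR⟩
        rintro rfl
        exact hxm hm't
      · rintro ⟨hxt, hxR⟩
        obtain ⟨i, hiL, hi⟩ := (hmemR x).mp hxR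
        have hi0 : i ≠ 0 := by
          intro h
          subst h
          exact hxt (Option.some_inj.mp (hi.symm.trans h0))
        refine ⟨hcovm' i x hiL hi ?_, hxR⟩
        by_cases hpar : i % 2 = 0
        · exact Or.inl ⟨hpar, hi0⟩
        · exact Or.inr ⟨by omega, by omega⟩
    have hdisj : Disjoint (msupp m' ∩ R) (msupp m \ R) := by
      rw [Finset.disjoint_left]
      intro x hx1 hx2
      exact (Finset.mem_sdiff.mp hx2).2 (Finset.mem_inter.mp hx1).2
    have hcard : (msupp N).card = (msupp m).card := by
      rw [hsup, Finset.card_union_of_disjoint hdisj, hc2]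
      have e1 := Finset.card_inter_add_card_sdiff (msupp m) R
      rw [hc1] at e1
      rw [Finset.card_erase_of_mem htR] at *
      rw [Finset.card_erase_of_mem hzR] at e1
      omega
    refine ⟨N, z, hNPM, hcard, ?_, ?_⟩
    · show (if t ∈ R then m' t else m t) = none
      rw [if_pos htR]
      exact hm't
    · intro x hmx hxz
      show (if x ∈ R then m' x else m x) = none
      by_cases hx : x ∈ R
      · exfalso
        have hxe : x ∈ R.erase z := Finset.mem_erase.mpr ⟨hxz, hx⟩
        rw [← hc1] at hxe
        exact (mem_msupp.mp (Finset.mem_inter.mp hxe).1) hmx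
      · rw [if_neg hx]
        exact hmx
  · -- the walk ends with a failed m'-step: `m'` was not maximum, contradiction
    exfalso
    have hm'z : m' z = none := by
      rw [if_neg hA] at hfail
      exact hfail
    set N2 : V → Option V := fun x => if x ∈ R then m x else m' x with hN2
    have hN2PM : PM G S N2 := by
      intro x y hxy
      by_cases hx : x ∈ R
      · simp only [hN2, if_pos hx] at hxy
        have hyR := hclm x y hx hxy
        refine ⟨(hm hxy).1, ?_, (hm hxy).2.2⟩
        show (if y ∈ R then m y else m' y) = some x
        rw [if_pos hyR]
        exact hm.symm hxy
      · simp only [hN2, if_neg hx] at hxy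
        have hyR : y ∉ R := fun hyR => hx (hclm' y x hyR (hm'.symm hxy))
        refine ⟨(hm' hxy).1, ?_, (hm' hxy).2.2⟩
        show (if y ∈ R then m y else m' y) = some x
        rw [if_neg hyR]
        exact hm'.symm hxy
    have hsup2 : msupp N2 = (msupp m ∩ R) ∪ (msupp m' \ R) := by
      ext x
      simp only [mem_msupp, Finset.mem_union, Finset.mem_inter, Finset.mem_sdiff, hN2]
      by_cases hx : x ∈ R <;> simp [hx, mem_msupp]
    have hc1b : msupp m ∩ R = R := by
      rw [Finset.inter_eq_right]
      intro x hxR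
      obtain ⟨i, hiL, hi⟩ := (hmemR x).mp hxR
      rw [mem_msupp]
      by_cases hpar : i % 2 = 0
      · have : i ≠ L - 1 := by omega
        exact hcovm i x hiL hi (Or.inr (by omega))
      · exact hcovm i x hiL hi (Or.inl (by omega))
    have hc2b : msupp m' ∩ R = (R.erase t).erase z := by
      ext x
      simp only [Finset.mem_inter, Finset.mem_erase, mem_msupp]
      constructor
      · rintro ⟨hxm, hxR⟩
        refine ⟨?_, ?_, hxR⟩
        · rintro rfl
          exact hxm hm'z
        · rintro rfl
          exact hxm hm't
      · rintro ⟨hxz, hxt, hxR⟩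
        obtain ⟨i, hiL, hi⟩ := (hmemR x).mp hxR
        have hi0 : i ≠ 0 := by
          intro h
          subst h
          exact hxt (Option.some_inj.mp (hi.symm.trans h0))
        have hiL1 : i ≠ L - 1 := by
          intro h
          subst h
          exact hxz (Option.some_inj.mp (hi.symm.trans hz))
        refine ⟨hcovm' i x hiL hi ?_, hxR⟩
        by_cases hpar : i % 2 = 0
        · exact Or.inl ⟨hpar, hi0⟩
        · exact Or.inr ⟨by omega, by omega⟩
    have hdisj2 : Disjoint (msupp m ∩ R) (msupp m' \ R) := by
      rw [Finset.disjoint_left]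
      intro x hx1 hx2
      exact (Finset.mem_sdiff.mp hx2).2 (Finset.mem_inter.mp hx1).2
    have hzRt : z ∈ R.erase t := Finset.mem_erase.mpr ⟨hzt, hzR⟩
    have hcard2 : (msupp N2).card = (msupp m').card + 2 := by
      rw [hsup2, Finset.card_union_of_disjoint hdisj2, hc1b]
      have e1 := Finset.card_inter_add_card_sdiff (msupp m') R
      rw [hc2b] at e1
      rw [Finset.card_erase_of_mem hzRt, Finset.card_erase_of_mem htR] at e1
      have h1R : 1 ≤ R.card := Finset.card_pos.mpr ⟨t, htR⟩
      have h2R : 2 ≤ R.card := by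
        have : ({z, t} : Finset V) ⊆ R := by
          intro x hx
          simp only [Finset.mem_insert, Finset.mem_singleton] at hx
          rcases hx with rfl | rfl
          · exact hzR
          · exact htR
        calc 2 = ({z, t} : Finset V).card := by rw [Finset.card_insert_of_notMem (by simp [hzt]), Finset.card_singleton]
          _ ≤ R.card := Finset.card_le_card this
      omega
    have := hmax' N2 hN2PM
    omega
/-- Gallai-type lemma: if every vertex of `S` is missed by some maximum matching, then some
maximum matching misses at most one vertex per connected component of `G[S]`. -/
lemma gallai {S : Finset V}
    (hyp : ∀ v ∈ S, ∃ m, PM G S m ∧ (msupp m).card = cov G S ∧ m v = none) :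
    ∃ m, PM G S m ∧ (msupp m).card = cov G S ∧
      ∀ u v (hu : u ∈ (↑S : Set V)) (hv : v ∈ (↑S : Set V)), m u = none → m v = none →
        u ≠ v → (G.induce (↑S : Set V)).connectedComponentMk ⟨u, hu⟩ ≠
                (G.induce (↑S : Set V)).connectedComponentMk ⟨v, hv⟩ := by
  classical
  by_contra hno
  push_neg at hno
  set Δ : Set ℕ := {d | ∃ m u v, ∃ (hu : u ∈ (↑S : Set V)) (hv : v ∈ (↑S : Set V)),
    PM G S m ∧ (msupp m).card = cov G S ∧ m u = none ∧ m v = none ∧ u ≠ v ∧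
    (G.induce (↑S : Set V)).connectedComponentMk ⟨u, hu⟩ =
      (G.induce (↑S : Set V)).connectedComponentMk ⟨v, hv⟩ ∧
    (G.induce (↑S : Set V)).dist ⟨u, hu⟩ ⟨v, hv⟩ = d} with hΔdef
  have hΔne : Δ.Nonempty := by
    obtain ⟨m0, hm0, hc0⟩ := cov_spec (G := G) S
    obtain ⟨u, v, hu, hv, h1, h2, h3, h4⟩ := hno m0 hm0 hc0
    exact ⟨_, m0, u, v, hu, hv, hm0, hc0, h1, h2, h3, h4, rfl⟩
  obtain ⟨m, u, v, hu, hv, hm, hmc, hmu, hmv, huv, hmk, hdist⟩ := Nat.sInf_mem hΔne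
  have hδ1 : 1 ≤ sInf Δ := by
    rw [← hdist]
    have hne : (⟨u, hu⟩ : ↥(↑S : Set V)) ≠ ⟨v, hv⟩ := fun h => huv (congrArg Subtype.val h)
    exact (SimpleGraph.ConnectedComponent.exact hmk).pos_dist_of_ne hne
  obtain ⟨p, hp⟩ := (SimpleGraph.ConnectedComponent.exact hmk).exists_walk_length_eq_dist
  rw [hdist] at hp
  cases p with
  | nil =>
    simp at hp
    omega
  | @cons _ w _ hadj q =>
    -- `w` is the second vertex on a geodesic from `u` to `v`
    have hGadj : G.Adj u ↑w := by simpa using hadj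
    have hwu : (↑w : V) ≠ u := fun h => hGadj.ne' h
    have hd1 : (G.induce (↑S : Set V)).dist ⟨u, hu⟩ w ≤ 1 := by
      have := SimpleGraph.dist_le (SimpleGraph.Walk.cons hadj SimpleGraph.Walk.nil)
      simpa using this
    have hmkuw : (G.induce (↑S : Set V)).connectedComponentMk ⟨u, hu⟩ =
        (G.induce (↑S : Set V)).connectedComponentMk w :=
      SimpleGraph.ConnectedComponent.sound hadj.reachable
    by_cases hδeq : sInf Δ = 1
    · -- distance 1: `u` and `v` are adjacent, augment `m` for a contradiction
      have hq0 : q.length = 0 := by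
        simp only [SimpleGraph.Walk.length_cons] at hp
        omega
      have hwv : w = ⟨v, hv⟩ := SimpleGraph.Walk.eq_of_length_eq_zero hq0
      have hGuv : G.Adj u v := by
        rw [hwv] at hGadj
        exact hGadj
      set m2 : V → Option V := fun x => if x = u then some v else if x = v then some u else m x
        with hm2
      have hm2u : m2 u = some v := by simp [hm2]
      have hm2v : m2 v = some u := by simp [hm2, Ne.symm huv]
      have hm2o : ∀ x, x ≠ u → x ≠ v → m2 x = m x := by
        intro x h1 h2
        simp [hm2, h1, h2]
      have hm2PM : PM G S m2 := by
        intro x y hxy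
        rcases eq_or_ne x u with rfl | h1
        · rw [hm2u] at hxy
          obtain rfl : v = y := Option.some_inj.mp hxy
          exact ⟨hGuv, hm2v, by simpa using hu⟩
        · rcases eq_or_ne x v with rfl | h2
          · rw [hm2v] at hxy
            obtain rfl : u = y := Option.some_inj.mp hxy
            exact ⟨hGuv.symm, hm2u, by simpa using hv⟩
          · rw [hm2o x h1 h2] at hxy
            have hyu : y ≠ u := by
              rintro rfl
              rw [hm.symm hxy] at hmu
              exact nomatch hmu
            have hyv : y ≠ v := by
              rintro rfl
              rw [hm.symm hxy] at hmv
              exact nomatch hmv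
            exact ⟨(hm hxy).1, by rw [hm2o y hyu hyv]; exact hm.symm hxy, (hm hxy).2.2⟩
      have hus : u ∉ msupp m := by simp [mem_msupp, hmu]
      have hvs : v ∉ msupp m := by simp [mem_msupp, hmv]
      have hsupp2 : msupp m2 = insert u (insert v (msupp m)) := by
        ext x
        rcases eq_or_ne x u with rfl | h1
        · simp [mem_msupp, hm2u]
        · rcases eq_or_ne x v with rfl | h2
          · simp [mem_msupp, hm2v]
          · simp [mem_msupp, hm2o x h1 h2, h1, h2]
      have hcard2 : (msupp m2).card = (msupp m).card + 2 := by
        rw [hsupp2, Finset.card_insert_of_notMem (by simp [huv, hus]),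
          Finset.card_insert_of_notMem hvs]
      have := le_cov hm2PM
      rw [hcard2, hmc] at this
      omega
    · -- distance ≥ 2: exchange along the alternating walk from `w`
      have hδ2 : 2 ≤ sInf Δ := by omega
      have hwS : (↑w : V) ∈ S := by
        have := w.2
        simpa using this
      have hwv : w ≠ (⟨v, hv⟩ : ↥(↑S : Set V)) := by
        intro h
        have : (G.induce (↑S : Set V)).dist ⟨u, hu⟩ ⟨v, hv⟩ ≤ 1 := h ▸ hd1
        omega
      have hwvval : (↑w : V) ≠ v := fun h => hwv (Subtype.ext h)
      -- `w` is covered by `m`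
      have hmt : m ↑w ≠ none := by
        intro hmw
        have hmem : (G.induce (↑S : Set V)).dist ⟨u, hu⟩ w ∈ Δ := by
          refine ⟨m, u, ↑w, hu, w.2, hm, hmc, hmu, hmw, fun h => hwu h.symm, ?_, rfl⟩
          exact hmkuw
        have := Nat.sInf_le hmem
        omega
      obtain ⟨m', hm', hm'c, hm't⟩ := hyp ↑w hwS
      have hmax' : ∀ mm, PM G S mm → (msupp mm).card ≤ (msupp m').card := by
        intro mm hmm
        rw [hm'c]
        exact le_cov hmm
      obtain ⟨N, z, hN, hNc, hNt, hNmiss⟩ := exchange hm hm' hmt hm't hmax'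
      have hNcov : (msupp N).card = cov G S := hNc.trans hmc
      by_cases hzu : u = z
      · -- use the pair (w, v) for `N`
        have hvz : v ≠ z := fun h => huv (hzu.symm ▸ h ▸ rfl)
        have hNv : N v = none := hNmiss v hmv hvz
        have hdq : (G.induce (↑S : Set V)).dist w ⟨v, hv⟩ ≤ sInf Δ - 1 := by
          have := SimpleGraph.dist_le q
          simp only [SimpleGraph.Walk.length_cons] at hp
          omega
        have hmem : (G.induce (↑S : Set V)).dist w ⟨v, hv⟩ ∈ Δ := by
          refine ⟨N, ↑w, v, w.2, hv, hN, hNcov, hNt, hNv, hwvval, ?_, rfl⟩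
          exact hmkuw.symm.trans hmk
        have := Nat.sInf_le hmem
        omega
      · -- use the pair (u, w) for `N`
        have hNu : N u = none := hNmiss u hmu hzu
        have hmem : (G.induce (↑S : Set V)).dist ⟨u, hu⟩ w ∈ Δ := by
          refine ⟨N, u, ↑w, hu, w.2, hN, hNcov, hNu, hNt, fun h => hwu h.symm, ?_, rfl⟩
          exact hmkuw
        have := Nat.sInf_le hmem
        omega
/-- The main lemma: hard direction of Tutte–Berge, by strong induction. -/
lemma main_lemma : ∀ n (S : Finset V), S.card = n →
    ∃ X, X ⊆ S ∧ ocS G (↑(S \ X) : Set V) + cov G S = S.card + X.card := by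
  intro n
  induction n using Nat.strong_induction_on with
  | _ n ih =>
  intro S hScard
  by_cases hcase : ∃ v ∈ S, ∀ m, PM G S m → (msupp m).card = cov G S → m v ≠ none
  · -- some vertex is covered by every maximum matching: delete it
    obtain ⟨v, hvS, hv⟩ := hcase
    have hdrop : cov G (S.erase v) + 2 = cov G S := by
      have hle1 : cov G S ≤ cov G (S.erase v) + 2 := by
        obtain ⟨m, hm, hmc⟩ := cov_spec (G := G) S
        obtain ⟨y, hy⟩ := Option.ne_none_iff_exists'.mp (hv m hm hmc)
        have hvy : v ≠ y := hm.ne hy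
        set m2 : V → Option V := fun x => if x = v ∨ x = y then none else m x with hm2
        have hm2PM : PM G (S.erase v) m2 := by
          intro x w hxw
          have hx : ¬(x = v ∨ x = y) := by
            by_contra hc
            rw [hm2] at hxw
            simp only [if_pos hc] at hxw
            exact nomatch hxw
          rw [hm2] at hxw
          simp only [if_neg hx] at hxw
          push_neg at hx
          have hwv : w ≠ v := by
            rintro rfl
            exact hx.2 (Option.some_inj.mp ((hm.symm hxw).symm.trans hy))
          have hwy : w ≠ y := by
            rintro rfl
            exact hx.1 (Option.some_inj.mp ((hm.symm hxw).symm.trans (hm.symm hy)))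
          refine ⟨(hm hxw).1, ?_, Finset.mem_erase.mpr ⟨hx.1, (hm hxw).2.2⟩⟩
          show (if w = v ∨ w = y then none else m w) = some x
          rw [if_neg (by simp [hwv, hwy])]
          exact hm.symm hxw
        have hsupp2 : msupp m2 = ((msupp m).erase v).erase y := by
          ext x
          simp only [mem_msupp, Finset.mem_erase, hm2]
          by_cases hx : x = v ∨ x = y
          · rcases hx with rfl | rfl <;> simp [hvy, Ne.symm hvy]
          · push_neg at hx
            simp [hx.1, hx.2, mem_msupp]
        have hcard2 : (msupp m2).card = cov G S - 2 := by
          rw [hsupp2, Finset.card_erase_of_mem, Finset.card_erase_of_mem, hmc]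
          · omega
          · rw [mem_msupp, hy]
            simp
          · refine Finset.mem_erase.mpr ⟨Ne.symm hvy, ?_⟩
            rw [mem_msupp, hm.symm hy]
            simp
        have h2 : 2 ≤ cov G S := by
          rw [← hmc]
          have : ({v, y} : Finset V) ⊆ msupp m := by
            intro x hx
            simp only [Finset.mem_insert, Finset.mem_singleton] at hx
            rcases hx with rfl | rfl
            · exact mem_msupp.mpr (by rw [hy]; simp)
            · exact mem_msupp.mpr (by rw [hm.symm hy]; simp)
          calc 2 = ({v, y} : Finset V).card := by
                rw [Finset.card_insert_of_notMem (by simp [hvy]), Finset.card_singleton]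
            _ ≤ (msupp m).card := Finset.card_le_card this
        have := le_cov hm2PM
        omega
      have hle2 : cov G (S.erase v) + 2 ≤ cov G S := by
        obtain ⟨m', hm', hm'c⟩ := cov_spec (G := G) (S.erase v)
        have hm'S : PM G S m' := hm'.mono (Finset.erase_subset _ _)
        have hm'v : m' v = none := by
          by_contra hc
          obtain ⟨w, hw⟩ := Option.ne_none_iff_exists'.mp hc
          exact (Finset.mem_erase.mp (hm' hw).2.2).1 rfl
        have hne : (msupp m').card ≠ cov G S := by
          intro hc
          exact hv m' hm'S hc hm'v
        have hle := le_cov hm'S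
        obtain ⟨a, ha⟩ := even_msupp hm'
        obtain ⟨b, hb⟩ := even_cov (G := G) S
        omega
      omega
    have hcard' : (S.erase v).card = n - 1 := by
      rw [Finset.card_erase_of_mem hvS, hScard]
    have hn1 : 1 ≤ n := by
      rw [← hScard]
      exact Finset.card_pos.mpr ⟨v, hvS⟩
    obtain ⟨X', hX'sub, hX'⟩ := ih (n-1) (by omega) (S.erase v) hcard'
    refine ⟨insert v X', ?_, ?_⟩
    · intro x hx
      rcases Finset.mem_insert.mp hx with rfl | hx'
      · exact hvS
      · exact Finset.erase_subset _ _ (hX'sub hx')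
    · have hvX' : v ∉ X' := fun hc => (Finset.mem_erase.mp (hX'sub hc)).1 rfl
      have hsd : S \ insert v X' = (S.erase v) \ X' := by
        ext x
        simp only [Finset.mem_sdiff, Finset.mem_insert, Finset.mem_erase, not_or]
        tauto
      rw [hsd, Finset.card_insert_of_notMem hvX']
      rw [hcard'] at hX'
      omega
  · -- every vertex is missed by some maximum matching: X = ∅ works
    push_neg at hcase
    have hyp : ∀ v ∈ S, ∃ m, PM G S m ∧ (msupp m).card = cov G S ∧ m v = none := by
      intro v hvS
      obtain ⟨m, hm, hmc, hmv⟩ := hcase v hvS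
      exact ⟨m, hm, hmc, hmv⟩
    obtain ⟨m, hm, hmc, hgood⟩ := gallai hyp
    refine ⟨∅, Finset.empty_subset _, ?_⟩
    rw [Finset.sdiff_empty, Finset.card_empty]
    set Missed : Finset V := S \ msupp m with hMissed
    have hMcard : Missed.card + cov G S = S.card := by
      rw [hMissed, ← hmc, Finset.card_sdiff_add_card_eq_card hm.msupp_subset]
    -- every odd component contains a missed vertex
    have h1 : ocS G (↑S : Set V) ≤ Missed.card := by
      apply ocS_le
      intro C hC
      obtain ⟨v, h, hmk, hprop⟩ := odd_comp_escape hm (le_refl S) C hC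
      have hvS : v ∈ S := by simpa using h
      have hmv : m v = none := by
        rcases hprop with hnone | ⟨x, hx, hxS⟩
        · exact hnone
        · exact absurd (hm (hm.symm hx)).2.2 hxS
      exact ⟨v, Finset.mem_sdiff.mpr ⟨hvS, by simp [mem_msupp, hmv]⟩, h, hmk⟩
    -- distinct missed vertices are in distinct components, which are odd
    have h2 : Missed.card ≤ ocS G (↑S : Set V) := by
      have hSet : ∀ v : V, v ∈ Missed → v ∈ (↑S : Set V) := by
        intro v hv
        simpa using (Finset.mem_sdiff.mp hv).1
      have hmiss : ∀ v : V, v ∈ Missed → m v = none := by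
        intro v hv
        have := (Finset.mem_sdiff.mp hv).2
        rw [mem_msupp] at this
        simpa using this
      have hodd : ∀ (v : V) (hv : v ∈ Missed),
          Odd (Nat.card ((G.induce (↑S : Set V)).connectedComponentMk
            ⟨v, hSet v hv⟩).supp) := by
        intro v hv
        set C := (G.induce (↑S : Set V)).connectedComponentMk ⟨v, hSet v hv⟩ with hCdef
        have hvsupp : v ∈ suppF G S C := mem_suppF.mpr ⟨hSet v hv, rfl⟩
        have hclosed : ∀ x ∈ (suppF G S C).erase v, ∃ y, m x = some y ∧
            y ∈ (suppF G S C).erase v := by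
          intro x hx
          obtain ⟨hxv, hxsupp⟩ := Finset.mem_erase.mp hx
          obtain ⟨hxS, hmkx⟩ := mem_suppF.mp hxsupp
          have hmx : m x ≠ none := by
            intro hmx
            exact hgood x v hxS (hSet v hv) hmx (hmiss v hv) hxv (hmkx.trans rfl)
          obtain ⟨y, hy⟩ := Option.ne_none_iff_exists'.mp hmx
          have hyS' : y ∈ S := (hm (hm.symm hy)).2.2
          have hyS : y ∈ (↑S : Set V) := by simpa using hyS'
          refine ⟨y, hy, Finset.mem_erase.mpr ⟨?_, mem_suppF.mpr
            ⟨hyS, (mk_eq_of_adj hyS hxS (hm hy).1.symm).trans hmkx⟩⟩⟩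
          rintro rfl
          have hcontra := hm.symm hy
          rw [hmiss y hv] at hcontra
          exact nomatch hcontra
        have heven := even_card_closed hm _ hclosed
        have hcard := Finset.card_erase_add_one hvsupp
        rw [← card_suppF (G := G) (T := S) (C := C)]
        obtain ⟨k, hk⟩ := heven
        exact ⟨k, by omega⟩
      set f : {x // x ∈ Missed} → {C : (G.induce (↑S : Set V)).ConnectedComponent //
          Odd (Nat.card C.supp)} :=
        fun x => ⟨(G.induce (↑S : Set V)).connectedComponentMk ⟨x.1, hSet x.1 x.2⟩,
          hodd x.1 x.2⟩ with hf
      have hinj : Function.Injective f := by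
        intro x1 x2 hfx
        have hc : (G.induce (↑S : Set V)).connectedComponentMk ⟨x1.1, hSet x1.1 x1.2⟩ =
            (G.induce (↑S : Set V)).connectedComponentMk ⟨x2.1, hSet x2.1 x2.2⟩ :=
          congrArg Subtype.val hfx
        by_contra hne
        have hvalne : x1.1 ≠ x2.1 := fun h => hne (Subtype.ext h)
        exact hgood x1.1 x2.1 (hSet x1.1 x1.2) (hSet x2.1 x2.2)
          (hmiss x1.1 x1.2) (hmiss x2.1 x2.2) hvalne hc
      calc Missed.card = Nat.card {x // x ∈ Missed} := by simp [Nat.card_eq_fintype_card]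
        _ ≤ _ := Nat.card_le_card_of_injective f hinj
    omega

/-! ### Bridging `GraphMatching` and `PM` -/

lemma partner_uniq {M : Finset (V × V)} (hGM : GraphMatching G M)
    {v w w' : V} (h1 : (v, w) ∈ M ∨ (w, v) ∈ M) (h2 : (v, w') ∈ M ∨ (w', v) ∈ M) :
    w = w' := by
  obtain ⟨hadj, hdist⟩ := hGM
  rcases h1 with h1 | h1 <;> rcases h2 with h2 | h2
  · by_cases he : ((v, w) : V × V) = (v, w')
    · exact congrArg Prod.snd he
    · exact absurd rfl (hdist _ h1 _ h2 he).1
  · by_cases he : ((v, w) : V × V) = (w', v)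
    · have h1' := congrArg Prod.fst he
      have h2' := congrArg Prod.snd he
      simp only at h1' h2'
      rw [← h1', ← h2']
    · exact absurd rfl (hdist _ h1 _ h2 he).2.1
  · by_cases he : ((w, v) : V × V) = (v, w')
    · have h1' := congrArg Prod.fst he
      have h2' := congrArg Prod.snd he
      simp only at h1' h2'
      rw [h1', h2']
    · exact absurd rfl (hdist _ h1 _ h2 he).2.2.1
  · by_cases he : ((w, v) : V × V) = (w', v)
    · exact congrArg Prod.fst he
    · exact absurd rfl (hdist _ h1 _ h2 he).2.2.2

lemma toPM {M : Finset (V × V)} (hGM : GraphMatching G M) :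
    ∃ m, PM G Finset.univ m ∧ (msupp m).card = 2 * M.card := by
  classical
  set m : V → Option V := fun v =>
    if h : ∃ w, (v, w) ∈ M ∨ (w, v) ∈ M then some h.choose else none with hmdef
  have hspec : ∀ v w, m v = some w ↔ ((v, w) ∈ M ∨ (w, v) ∈ M) := by
    intro v w
    constructor
    · intro hv
      by_cases h : ∃ w, (v, w) ∈ M ∨ (w, v) ∈ M
      · have hch : m v = some h.choose := by rw [hmdef]; exact dif_pos h
        have hv' : m v = some w := hv
        rw [hch] at hv'
        obtain rfl : h.choose = w := Option.some_inj.mp hv'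
        exact h.choose_spec
      · have hch : m v = none := by rw [hmdef]; exact dif_neg h
        have hv' : m v = some w := hv
        rw [hch] at hv'
        exact nomatch hv'
    · intro hw
      have h : ∃ w, (v, w) ∈ M ∨ (w, v) ∈ M := ⟨w, hw⟩
      rw [hmdef]
      simp only [dif_pos h]
      exact congrArg some (partner_uniq hGM h.choose_spec hw)
  have hPM : PM G Finset.univ m := by
    intro v w hvw
    rw [hspec] at hvw
    refine ⟨?_, ?_, Finset.mem_univ v⟩
    · rcases hvw with h | h
      · exact hGM.1 _ h
      · exact (hGM.1 _ h).symm
    · rw [hspec]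
      tauto
  refine ⟨m, hPM, ?_⟩
  have hsupp : msupp m = M.image Prod.fst ∪ M.image Prod.snd := by
    ext v
    rw [mem_msupp, Option.ne_none_iff_exists']
    simp only [Finset.mem_union, Finset.mem_image]
    constructor
    · rintro ⟨w, hw⟩
      rw [hspec] at hw
      rcases hw with h | h
      · exact Or.inl ⟨(v, w), h, rfl⟩
      · exact Or.inr ⟨(w, v), h, rfl⟩
    · rintro (⟨e, he, rfl⟩ | ⟨e, he, rfl⟩)
      · exact ⟨e.2, (hspec _ _).mpr (Or.inl he)⟩
      · exact ⟨e.1, (hspec _ _).mpr (Or.inr he)⟩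
  have hd : Disjoint (M.image Prod.fst) (M.image Prod.snd) := by
    rw [Finset.disjoint_left]
    rintro v hv1 hv2
    obtain ⟨e, he, hev⟩ := Finset.mem_image.mp hv1
    obtain ⟨f, hf, hfv⟩ := Finset.mem_image.mp hv2
    by_cases hef : e = f
    · subst hef
      exact (hGM.1 _ he).ne (hev.trans hfv.symm)
    · exact (hGM.2 _ he _ hf hef).2.1 (hev.trans hfv.symm)
  have hc1 : (M.image Prod.fst).card = M.card := by
    apply Finset.card_image_of_injOn
    intro e he f hf hef
    by_contra hne
    exact (hGM.2 _ he _ hf hne).1 hef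
  have hc2 : (M.image Prod.snd).card = M.card := by
    apply Finset.card_image_of_injOn
    intro e he f hf hef
    by_contra hne
    exact (hGM.2 _ he _ hf hne).2.2.2 hef
  rw [hsupp, Finset.card_union_of_disjoint hd, hc1, hc2]
  omega

lemma toGM {m : V → Option V} (hm : PM G Finset.univ m) :
    ∃ M : Finset (V × V), GraphMatching G M ∧ 2 * M.card = (msupp m).card := by
  classical
  set r : V → ℕ := fun v => (Fintype.equivFin V v : ℕ) with hr
  have hrinj : ∀ {a b : V}, r a = r b → a = b := by
    intro a b hab
    have := Fin.val_injective hab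
    exact (Fintype.equivFin V).injective this
  set M : Finset (V × V) :=
    Finset.univ.filter (fun p : V × V => m p.1 = some p.2 ∧ r p.1 < r p.2) with hMdef
  have hmem : ∀ p : V × V, p ∈ M ↔ m p.1 = some p.2 ∧ r p.1 < r p.2 := by
    intro p
    simp [hMdef]
  have hGM : GraphMatching G M := by
    constructor
    · intro e he
      exact (hm ((hmem e).mp he).1).1
    · intro e he f hf hef
      obtain ⟨he1, he2⟩ := (hmem e).mp he
      obtain ⟨hf1, hf2⟩ := (hmem f).mp hf
      refine ⟨?_, ?_, ?_, ?_⟩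
      · intro h
        apply hef
        have : e.2 = f.2 := Option.some_inj.mp ((h ▸ he1).symm.trans hf1)
        exact Prod.ext h this
      · intro h
        -- e.1 = f.2
        have h13 : e.2 = f.1 := by
          have := hm.symm hf1
          rw [← h] at this
          exact Option.some_inj.mp (he1.symm.trans this)
        rw [h] at he2
        rw [h13] at he2
        omega
      · intro h
        -- e.2 = f.1
        have h13 : e.1 = f.2 := by
          have := hm.symm he1
          rw [h] at this
          exact (Option.some_inj.mp (this.symm.trans hf1)).symm ▸ rfl
        rw [h, h13] at he2
        omega
      · intro h
        apply hef
        have : e.1 = f.1 := hm.inj he1 (h ▸ hf1)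
        exact Prod.ext this h
  refine ⟨M, hGM, ?_⟩
  have hsupp : msupp m = M.image Prod.fst ∪ M.image Prod.snd := by
    ext v
    rw [mem_msupp, Option.ne_none_iff_exists']
    simp only [Finset.mem_union, Finset.mem_image]
    constructor
    · rintro ⟨w, hw⟩
      have hvw : v ≠ w := hm.ne hw
      rcases Nat.lt_or_ge (r v) (r w) with h | h
      · exact Or.inl ⟨(v, w), (hmem _).mpr ⟨hw, h⟩, rfl⟩
      · have : r w < r v := by
          rcases Nat.lt_or_ge (r w) (r v) with h' | h'
          · exact h'
          · exact absurd (hrinj (le_antisymm h h')) (Ne.symm hvw)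
        exact Or.inr ⟨(w, v), (hmem _).mpr ⟨hm.symm hw, this⟩, rfl⟩
    · rintro (⟨e, he, rfl⟩ | ⟨e, he, rfl⟩)
      · exact ⟨e.2, ((hmem e).mp he).1⟩
      · exact ⟨e.1, hm.symm ((hmem e).mp he).1⟩
  have hd : Disjoint (M.image Prod.fst) (M.image Prod.snd) := by
    rw [Finset.disjoint_left]
    rintro v hv1 hv2
    obtain ⟨e, he, hev⟩ := Finset.mem_image.mp hv1
    obtain ⟨f, hf, hfv⟩ := Finset.mem_image.mp hv2
    obtain ⟨he1, he2⟩ := (hmem e).mp he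
    obtain ⟨hf1, hf2⟩ := (hmem f).mp hf
    rw [hev] at he1 he2
    rw [hfv] at hf2
    have h2 : m v = some f.1 := hm.symm (hfv ▸ hf1)
    have h3 : e.2 = f.1 := Option.some_inj.mp (he1.symm.trans h2)
    rw [h3] at he2
    omega
  have hc1 : (M.image Prod.fst).card = M.card := by
    apply Finset.card_image_of_injOn
    intro e he f hf hef
    obtain ⟨he1, _⟩ := (hmem e).mp he
    obtain ⟨hf1, _⟩ := (hmem f).mp hf
    have : e.2 = f.2 := Option.some_inj.mp ((hef ▸ he1).symm.trans hf1)
    exact Prod.ext hef this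
  have hc2 : (M.image Prod.snd).card = M.card := by
    apply Finset.card_image_of_injOn
    intro e he f hf hef
    obtain ⟨he1, _⟩ := (hmem e).mp he
    obtain ⟨hf1, _⟩ := (hmem f).mp hf
    have : e.1 = f.1 := hm.inj he1 (hef ▸ hf1)
    exact Prod.ext this hef
  rw [hsupp, Finset.card_union_of_disjoint hd, hc1, hc2]
  omega

/-- with the hypothesis of the theorem, `cov G univ = 2 * ν` -/
lemma cov_univ_eq {ν : ℕ}
    (hν : IsGreatest {k : ℕ | ∃ M : Finset (V × V), GraphMatching G M ∧ M.card = k} ν) :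
    cov G (Finset.univ : Finset V) = 2 * ν := by
  obtain ⟨⟨M0, hM0, hM0c⟩, hub⟩ := hν
  have h1 : 2 * ν ≤ cov G Finset.univ := by
    obtain ⟨m, hmPM, hmc⟩ := toPM hM0
    have := le_cov hmPM
    omega
  have h2 : cov G Finset.univ ≤ 2 * ν := by
    obtain ⟨m, hm, hmc⟩ := cov_spec (G := G) (Finset.univ : Finset V)
    obtain ⟨M, hM, hMc⟩ := toGM hm
    have : M.card ≤ ν := hub ⟨M, hM, rfl⟩
    omega
  omega

end BT

/-- Berge–Tutte formula: the deficiency `|V(G)| - 2ν(G)` of a finite graph `G` equals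
the maximum over subsets `X ⊆ V(G)` of `c_o(G - X) - |X|`. -/
theorem stmt_10 {V : Type*} [Fintype V] [DecidableEq V] (G : SimpleGraph V) (ν : ℕ)
    (hν : IsGreatest {k : ℕ | ∃ M : Finset (V × V), GraphMatching G M ∧ M.card = k} ν) :
    IsGreatest {d : ℤ | ∃ X : Finset V, d = (oddCompCount G X : ℤ) - X.card}
      ((Fintype.card V : ℤ) - 2 * ν) := by
  have hcov : BT.cov G (Finset.univ : Finset V) = 2 * ν := BT.cov_univ_eq hν
  have hocc : ∀ X : Finset V,
      oddCompCount G X = BT.ocS G (↑(Finset.univ \ X : Finset V) : Set V) := by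
    intro X
    have hset : (↑(Finset.univ \ X : Finset V) : Set V) = {v : V | v ∉ X} := by
      ext v
      simp
    rw [hset]
    rfl
  constructor
  · obtain ⟨X, hXsub, hX⟩ := BT.main_lemma (G := G) (Finset.univ : Finset V).card
      Finset.univ rfl
    rw [hcov, Finset.card_univ] at hX
    refine ⟨X, ?_⟩
    rw [hocc X]
    have hb := hX
    omega
  · rintro d ⟨X, rfl⟩
    obtain ⟨m, hm, hmc⟩ := BT.cov_spec (G := G) (Finset.univ : Finset V)
    have h := BT.count_main hm (Finset.subset_univ X)
    rw [hmc, hcov, Finset.card_univ] at h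
    rw [hocc X]
    omega
end

section
/- Let K_n be t-colored, and for each color i let G_i be the spanning subgraph consisting of all edges whose color differs from i. Suppose for each i there is a set X_i ⊆ V with c_o(G_i - X_i) ≥ |X_i| + p + 2, and |X_1| ≤ |X_2| ≤ … ≤ |X_t|. Let C_1^1,…,C_{m_1}^1 be the vertex sets of the components of G_1 - X_1. Then there is an index l ∈ {1,…,m_1} such that for every j > 1, the union of all C_i^1 with i ≠ l is contained in X_j. -/
open SimpleGraph

lemma count_lemma {n : ℕ} (G : SimpleGraph (Fin n)) (X T : Finset (Fin n))
    (s : Finset ((G.induce {v : Fin n | v ∉ X}).ConnectedComponent))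
    (h : ∀ C, C ∉ s → Odd (Nat.card C.supp) → ∀ v ∈ C.supp, (v : Fin n) ∈ T) :
    oddCompCount G X ≤ T.card + s.card := by
  classical
  let H := G.induce {v : Fin n | v ∉ X}
  haveI : Fintype H.ConnectedComponent := Fintype.ofFinite _
  set odd : Finset H.ConnectedComponent :=
    Finset.univ.filter (fun C => Odd (Nat.card C.supp)) with hodd
  have hcount : oddCompCount G X = odd.card := by
    rw [oddCompCount, Nat.card_eq_fintype_card, Fintype.card_subtype]
  have houtmem : ∀ C : H.ConnectedComponent, C.out ∈ C.supp := by
    intro C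
    simp [ConnectedComponent.mem_supp_iff, connectedComponentMk, Quot.out_eq]
    exact Quot.out_eq C
  have h2 : (odd \ s).card ≤ T.card := by
    apply Finset.card_le_card_of_injOn (fun C => (C.out : Fin n))
    · intro C hC
      rw [Finset.mem_coe, Finset.mem_sdiff, hodd, Finset.mem_filter] at hC
      exact h C hC.2 hC.1.2 C.out (houtmem C)
    · intro C _ C' _ hvv
      have : (C.out : { v : Fin n // v ∈ {v : Fin n | v ∉ X}}) = C'.out := Subtype.ext hvv
      calc C = H.connectedComponentMk C.out := (Quot.out_eq C).symm
        _ = H.connectedComponentMk C'.out := by rw [this]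
        _ = C' := Quot.out_eq C'
  have h1 : odd.card ≤ (odd \ s).card + s.card := by
    calc odd.card ≤ (odd ∪ s).card := Finset.card_le_card (Finset.subset_union_left)
      _ = (odd \ s).card + s.card := (Finset.card_sdiff_add_card odd s).symm
  omega





lemma fromRel_adj'' {n t : ℕ} (c : Fin n → Fin n → Fin t) (hc : ∀ x y, c x y = c y x)
    (i : Fin t) (x y : Fin n) :
    (SimpleGraph.fromRel fun a b => c a b ≠ i).Adj x y ↔ x ≠ y ∧ c x y ≠ i := by
  rw [fromRel_adj, hc y x]; tauto

lemma mk_eq_of_color {n t : ℕ} (c : Fin n → Fin n → Fin t) (hc : ∀ x y, c x y = c y x)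
    (i : Fin t) (Y : Finset (Fin n)) (a b : {v : Fin n | v ∉ Y})
    (hab : a.val ≠ b.val) (h : c a.val b.val ≠ i) :
    ((SimpleGraph.fromRel fun x y => c x y ≠ i).induce
      {v : Fin n | v ∉ Y}).connectedComponentMk a
      = ((SimpleGraph.fromRel fun x y => c x y ≠ i).induce
      {v : Fin n | v ∉ Y}).connectedComponentMk b := by
  have hadj : ((SimpleGraph.fromRel fun x y => c x y ≠ i).induce
      {v : Fin n | v ∉ Y}).Adj a b := by
    simp only [comap_adj, Function.Embedding.coe_subtype]
    exact (fromRel_adj'' c hc i a.val b.val).mpr ⟨hab, h⟩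
  exact ConnectedComponent.eq.mpr hadj.reachable

lemma color_of_ne_comp {n t : ℕ} (c : Fin n → Fin n → Fin t) (hc : ∀ x y, c x y = c y x)
    (i : Fin t) (Y : Finset (Fin n)) (a b : {v : Fin n | v ∉ Y})
    (h : ((SimpleGraph.fromRel fun x y => c x y ≠ i).induce
      {v : Fin n | v ∉ Y}).connectedComponentMk a
      ≠ ((SimpleGraph.fromRel fun x y => c x y ≠ i).induce
      {v : Fin n | v ∉ Y}).connectedComponentMk b) :
    c a.val b.val = i := by
  have hab : a.val ≠ b.val := fun he => h (by rw [Subtype.ext he])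
  by_contra hne
  exact h (mk_eq_of_color c hc i Y a b hab hne)

lemma pairA {n t p : ℕ}
    (c : Fin n → Fin n → Fin t) (hc : ∀ x y, c x y = c y x)
    (X : Fin t → Finset (Fin n))
    (hX : ∀ i : Fin t, (X i).card + p + 2 ≤
      oddCompCount (SimpleGraph.fromRel fun x y => c x y ≠ i) (X i))
    (i j : Fin t) (hij : i ≠ j) (hle : (X i).card ≤ (X j).card)
    {C C' : ((SimpleGraph.fromRel fun x y => c x y ≠ i).induce
        {v : Fin n | v ∉ X i}).ConnectedComponent}
    (hCC' : C ≠ C') {u v : {v : Fin n | v ∉ X i}}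
    (hu : u ∈ C.supp) (hv : v ∈ C'.supp)
    (huj : u.val ∉ X j) (hvj : v.val ∉ X j) : False := by
  classical
  rw [ConnectedComponent.mem_supp_iff] at hu hv
  have hune : u.val ≠ v.val := by
    intro he
    exact hCC' (by rw [← hu, ← hv, Subtype.ext he])
  have hcuv : c u.val v.val = i := by
    apply color_of_ne_comp c hc i (X i) u v
    rw [hu, hv]; exact hCC'
  set u' : {v : Fin n | v ∉ X j} := ⟨u.val, huj⟩ with hu'
  set v' : {v : Fin n | v ∉ X j} := ⟨v.val, hvj⟩ with hv'
  set Hj := ((SimpleGraph.fromRel fun x y => c x y ≠ j).induce {v : Fin n | v ∉ X j})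
    with hHj
  have hDv : Hj.connectedComponentMk u' = Hj.connectedComponentMk v' :=
    mk_eq_of_color c hc j (X j) u' v' hune (by rw [hcuv]; exact hij)
  have hkey : oddCompCount (SimpleGraph.fromRel fun x y => c x y ≠ j) (X j)
      ≤ (X i).card + ({Hj.connectedComponentMk u'} : Finset Hj.ConnectedComponent).card := by
    apply count_lemma
    intro K hK _ w hw
    rw [ConnectedComponent.mem_supp_iff] at hw
    by_contra hwX
    have hKD : K ≠ Hj.connectedComponentMk u' := by simpa using hK
    have hcuw : c u.val w.val = j := by
      apply color_of_ne_comp c hc j (X j) u' w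
      rw [hw]; exact fun he => hKD he.symm
    have hcvw : c v.val w.val = j := by
      apply color_of_ne_comp c hc j (X j) v' w
      rw [hw]; exact fun he => hKD (hDv.trans he).symm
    have hwXi : w.val ∈ {v : Fin n | v ∉ X i} := hwX
    set w'' : {v : Fin n | v ∉ X i} := ⟨w.val, hwXi⟩ with hw''
    have hunew : u.val ≠ w.val := by
      intro he
      apply hKD
      rw [← hw]
      exact (congrArg Hj.connectedComponentMk (Subtype.ext he : u' = w)).symm
    have hvnew : v.val ≠ w.val := by
      intro he
      apply hKD
      rw [← hw, hDv]
      exact (congrArg Hj.connectedComponentMk (Subtype.ext he : v' = w)).symm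
    have h1 := mk_eq_of_color c hc i (X i) u w''
      hunew (by rw [hcuw]; exact fun he => hij he.symm)
    have h2 := mk_eq_of_color c hc i (X i) v w''
      hvnew (by rw [hcvw]; exact fun he => hij he.symm)
    exact hCC' (by rw [← hu, ← hv, h1, h2])
  rw [Finset.card_singleton] at hkey
  have := hX j
  omega

/-- Kernel lemma. `K_n` is `t`-colored by `c`; `G_i` is the spanning subgraph of edges
of color `≠ i`; each `X i` satisfies `c_o(G_i - X_i) ≥ |X_i| + p + 2`, and
`|X_1| ≤ … ≤ |X_t|`. Then among the components of `G_1 - X_1` there is one, `l`,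
such that for every `j > 1`, every other component is contained in `X j`. -/
theorem stmt_11 (n t p : ℕ) (ht : 0 < t)
    (c : Fin n → Fin n → Fin t) (hc : ∀ x y, c x y = c y x)
    (X : Fin t → Finset (Fin n))
    (hX : ∀ i : Fin t, (X i).card + p + 2 ≤
      oddCompCount (SimpleGraph.fromRel fun x y => c x y ≠ i) (X i))
    (hmono : Monotone fun i => (X i).card) :
    ∃ l : ((SimpleGraph.fromRel fun x y => c x y ≠ (⟨0, ht⟩ : Fin t)).induce
        {v : Fin n | v ∉ X ⟨0, ht⟩}).ConnectedComponent,
      ∀ j : Fin t, (⟨0, ht⟩ : Fin t) < j →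
        ∀ C, C ≠ l → ∀ v, v ∈ C.supp → v.val ∈ X j := by
  classical
  have hmz : ∀ k : Fin t, (X ⟨0, ht⟩).card ≤ (X k).card := fun k =>
    hmono (show (⟨0, ht⟩ : Fin t) ≤ k by simp [Fin.le_def])
  by_cases hex : ∃ j : Fin t, (⟨0, ht⟩ : Fin t) < j ∧
      ∃ C : ((SimpleGraph.fromRel fun x y => c x y ≠ (⟨0, ht⟩ : Fin t)).induce
        {v : Fin n | v ∉ X ⟨0, ht⟩}).ConnectedComponent,
      ∃ u ∈ C.supp, u.val ∉ X j
  case neg =>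
    push_neg at hex
    have h2 : 0 < oddCompCount
        (SimpleGraph.fromRel fun x y => c x y ≠ (⟨0, ht⟩ : Fin t)) (X ⟨0, ht⟩) :=
      lt_of_lt_of_le (by omega) (hX _)
    rw [oddCompCount] at h2
    obtain ⟨⟨l, _⟩⟩ := (Nat.card_pos_iff.mp h2).1
    exact ⟨l, fun j hj C _ v hv => hex j hj C v hv⟩
  case pos =>
    obtain ⟨j₀, hj₀, l, u, hu, huj₀⟩ := hex
    have hzj₀ : (⟨0, ht⟩ : Fin t) ≠ j₀ := ne_of_lt hj₀
    refine ⟨l, ?_⟩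
    intro j hj C hCl v hv
    have hzj : (⟨0, ht⟩ : Fin t) ≠ j := ne_of_lt hj
    by_contra hvj
    by_cases hjj : j = j₀
    · subst hjj
      exact pairA c hc X hX ⟨0, ht⟩ j hzj (hmz j) hCl hv hu hvj huj₀
    -- the two-exceptional-components situation
    set A : Finset (Fin n) :=
      Set.Finite.toFinset (Set.toFinite (Subtype.val '' l.supp)) with hA
    set B : Finset (Fin n) :=
      Set.Finite.toFinset (Set.toFinite (Subtype.val '' C.supp)) with hB
    have hmemA : ∀ x : Fin n, x ∈ A ↔ ∃ a ∈ l.supp, a.val = x := by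
      intro x; rw [hA, Set.Finite.mem_toFinset]; simp [Set.mem_image]
    have hmemB : ∀ x : Fin n, x ∈ B ↔ ∃ a ∈ C.supp, a.val = x := by
      intro x; rw [hB, Set.Finite.mem_toFinset]; simp [Set.mem_image]
    have hA_subj : A ⊆ X j := by
      intro x hx
      obtain ⟨a, ha, rfl⟩ := (hmemA x).mp hx
      by_contra hxj
      exact pairA c hc X hX ⟨0, ht⟩ j hzj (hmz j) (Ne.symm hCl) ha hv hxj hvj
    have hB_subj₀ : B ⊆ X j₀ := by
      intro x hx
      obtain ⟨a, ha, rfl⟩ := (hmemB x).mp hx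
      by_contra hxj₀
      exact pairA c hc X hX ⟨0, ht⟩ j₀ hzj₀ (hmz j₀) hCl ha hu hxj₀ huj₀
    -- counting (ii): odd components of G_{j₀} - X_{j₀} land in X_1 ∪ A, except one
    have r2 : (X j₀).card + p + 2 ≤ (X ⟨0, ht⟩).card + A.card + 1 := by
      set Hj₀ := ((SimpleGraph.fromRel fun x y => c x y ≠ j₀).induce
        {v : Fin n | v ∉ X j₀}) with hHj₀
      set u' : {v : Fin n | v ∉ X j₀} := ⟨u.val, huj₀⟩ with hu'
      have hcl := count_lemma (SimpleGraph.fromRel fun x y => c x y ≠ j₀) (X j₀)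
        (X ⟨0, ht⟩ ∪ A) {Hj₀.connectedComponentMk u'} ?_
      · have h3 := Finset.card_union_le (X ⟨0, ht⟩) A
        have h4 := hX j₀
        rw [Finset.card_singleton] at hcl
        omega
      · intro K hK _ w hw
        rw [ConnectedComponent.mem_supp_iff] at hw
        have hKD : K ≠ Hj₀.connectedComponentMk u' := by simpa using hK
        have hcuw : c u.val w.val = j₀ := by
          apply color_of_ne_comp c hc j₀ (X j₀) u' w
          rw [hw]; exact fun he => hKD he.symm
        by_cases hwz : w.val ∈ X ⟨0, ht⟩
        · exact Finset.mem_union_left _ hwz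
        · have hune : u.val ≠ w.val := by
            intro he
            apply hKD
            rw [← hw]
            exact (congrArg Hj₀.connectedComponentMk (Subtype.ext he : u' = w)).symm
          have hwz' : w.val ∈ {v : Fin n | v ∉ X ⟨0, ht⟩} := hwz
          have h1 := mk_eq_of_color c hc ⟨0, ht⟩ (X ⟨0, ht⟩) u ⟨w.val, hwz'⟩
            hune (by rw [hcuw]; exact fun he => hzj₀ he.symm)
          apply Finset.mem_union_right
          refine (hmemA w.val).mpr ⟨⟨w.val, hwz'⟩, ?_, rfl⟩
          rw [ConnectedComponent.mem_supp_iff, ← h1]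
          exact hu
    -- counting (ii'): symmetric for j and B
    have r2' : (X j).card + p + 2 ≤ (X ⟨0, ht⟩).card + B.card + 1 := by
      set Hj := ((SimpleGraph.fromRel fun x y => c x y ≠ j).induce
        {v : Fin n | v ∉ X j}) with hHj
      set v' : {v : Fin n | v ∉ X j} := ⟨v.val, hvj⟩ with hv'
      have hcl := count_lemma (SimpleGraph.fromRel fun x y => c x y ≠ j) (X j)
        (X ⟨0, ht⟩ ∪ B) {Hj.connectedComponentMk v'} ?_
      · have h3 := Finset.card_union_le (X ⟨0, ht⟩) B
        have h4 := hX j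
        rw [Finset.card_singleton] at hcl
        omega
      · intro K hK _ w hw
        rw [ConnectedComponent.mem_supp_iff] at hw
        have hKD : K ≠ Hj.connectedComponentMk v' := by simpa using hK
        have hcvw : c v.val w.val = j := by
          apply color_of_ne_comp c hc j (X j) v' w
          rw [hw]; exact fun he => hKD he.symm
        by_cases hwz : w.val ∈ X ⟨0, ht⟩
        · exact Finset.mem_union_left _ hwz
        · have hvne : v.val ≠ w.val := by
            intro he
            apply hKD
            rw [← hw]
            exact (congrArg Hj.connectedComponentMk (Subtype.ext he : v' = w)).symm
          have hwz' : w.val ∈ {v : Fin n | v ∉ X ⟨0, ht⟩} := hwz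
          have h1 := mk_eq_of_color c hc ⟨0, ht⟩ (X ⟨0, ht⟩) v ⟨w.val, hwz'⟩
            hvne (by rw [hcvw]; exact fun he => hzj he.symm)
          apply Finset.mem_union_right
          refine (hmemB w.val).mpr ⟨⟨w.val, hwz'⟩, ?_, rfl⟩
          rw [ConnectedComponent.mem_supp_iff, ← h1]
          exact hv
    -- counting (iii): odd components of G_1 - X_1 other than l, C land in X j₀ \ B
    have r3 : (X ⟨0, ht⟩).card + p + B.card ≤ (X j₀).card := by
      have hcl := count_lemma (SimpleGraph.fromRel fun x y => c x y ≠ (⟨0, ht⟩ : Fin t))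
        (X ⟨0, ht⟩) (X j₀ \ B) {l, C} ?_
      · have h3 : ({l, C} : Finset _).card ≤ 2 := by
          apply le_trans (Finset.card_insert_le _ _); simp
        have h4 := hX ⟨0, ht⟩
        have h5 := Finset.card_sdiff_add_card_eq_card hB_subj₀
        omega
      · intro K hK _ w hw
        have hKl : K ≠ l := by simp at hK; exact hK.1
        have hKC : K ≠ C := by simp at hK; exact hK.2
        rw [Finset.mem_sdiff]
        constructor
        · by_contra hwj₀
          exact pairA c hc X hX ⟨0, ht⟩ j₀ hzj₀ (hmz j₀) hKl hw hu hwj₀ huj₀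
        · intro hxB
          obtain ⟨a, ha, hav⟩ := (hmemB w.val).mp hxB
          apply hKC
          rw [ConnectedComponent.mem_supp_iff] at ha hw
          rw [← hw, ← ha]
          exact congrArg _ (Subtype.ext hav.symm)
    -- counting (iii'): symmetric
    have r3' : (X ⟨0, ht⟩).card + p + A.card ≤ (X j).card := by
      have hcl := count_lemma (SimpleGraph.fromRel fun x y => c x y ≠ (⟨0, ht⟩ : Fin t))
        (X ⟨0, ht⟩) (X j \ A) {l, C} ?_
      · have h3 : ({l, C} : Finset _).card ≤ 2 := by
          apply le_trans (Finset.card_insert_le _ _); simp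
        have h4 := hX ⟨0, ht⟩
        have h5 := Finset.card_sdiff_add_card_eq_card hA_subj
        omega
      · intro K hK _ w hw
        have hKl : K ≠ l := by simp at hK; exact hK.1
        have hKC : K ≠ C := by simp at hK; exact hK.2
        rw [Finset.mem_sdiff]
        constructor
        · by_contra hwj
          exact pairA c hc X hX ⟨0, ht⟩ j hzj (hmz j) hKC hw hv hwj hvj
        · intro hxA
          obtain ⟨a, ha, hav⟩ := (hmemA w.val).mp hxA
          apply hKl
          rw [ConnectedComponent.mem_supp_iff] at ha hw
          rw [← hw, ← ha]
          exact congrArg _ (Subtype.ext hav.symm)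
    omega
end
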